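/- arXiv:1304.6786 — 5 statements merged into one kernel-verified Lean document; each statement's English description precedes it below -/
import Mathlib

section
/- Let μ be an entrance-type string measure, λ < 0 and a < l. Then ∫_{(−∞,a]} φ_λ(x)² ( ∫_x^a φ_λ(y)⁻² dy ) dμ(x) ≤ min( M(a), (log φ_λ(a))/(−λ) ). -/
open MeasureTheory

/-- `x` lies strictly below the length `l = sup {y | m(y) = μ((-∞,y]) < ∞}` of the string. -/
def belowL (μ : Measure ℝ) (x : ℝ) : Prop := ∃ y, x < y ∧ μ (Set.Iic y) < ⊤

/-- The concentration function `M(x) = ∫_{(-∞,x]} (x - y) dμ(y)` (as a real number). -/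
noncomputable def Mfun (μ : Measure ℝ) (x : ℝ) : ℝ :=
  (∫⁻ y in Set.Iic x, ENNReal.ofReal (x - y) ∂μ).toReal

/-- Entrance condition: `M(x) < ∞` for every `x < l`. -/
def IsEntrance (μ : Measure ℝ) : Prop :=
  ∀ x, belowL μ x → (∫⁻ y in Set.Iic x, ENNReal.ofReal (x - y) ∂μ) < ⊤

section AuxStmt11
open MeasureTheory Set
open scoped ENNReal

noncomputable def Sfun (μ : Measure ℝ) (φ : ℝ → ℝ) (b₀ : ℝ) (t : ℝ) : ℝ :=
  ∫ y in Set.Iic t, φ y ∂(μ.restrict (Set.Iic b₀))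

variable {μ : Measure ℝ} {φ : ℝ → ℝ} {a b₀ lam c b t : ℝ}


lemma phi_ae_nonneg (hone : ∀ x ∈ Set.Iic b₀, 1 ≤ φ x) :
    ∀ᵐ y ∂(μ.restrict (Set.Iic b₀)), 0 ≤ φ y := by
  rw [ae_restrict_iff' measurableSet_Iic]
  exact .of_forall fun y hy => le_trans zero_le_one (hone y hy)

lemma phi_int (hb : μ (Set.Iic b₀) ≠ ⊤) (hφmeas : Measurable φ)
    (hone : ∀ x ∈ Set.Iic b₀, 1 ≤ φ x)
    (hmono : ∀ x y, y ≤ b₀ → x ≤ y → φ x ≤ φ y) :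
    Integrable φ (μ.restrict (Set.Iic b₀)) := by
  rw [← integrableOn_univ]
  apply Measure.integrableOn_of_bounded (M := φ b₀)
  · simpa [Measure.restrict_apply_univ] using hb
  · exact hφmeas.aestronglyMeasurable
  · rw [Measure.restrict_univ, ae_restrict_iff' measurableSet_Iic]
    exact Filter.Eventually.of_forall fun y hy => by
      rw [Real.norm_eq_abs, abs_of_nonneg (le_trans zero_le_one (hone y hy))]
      exact hmono y b₀ le_rfl hy

lemma Sfun_mono (hb : μ (Set.Iic b₀) ≠ ⊤) (hφmeas : Measurable φ)
    (hone : ∀ x ∈ Set.Iic b₀, 1 ≤ φ x)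
    (hmono : ∀ x y, y ≤ b₀ → x ≤ y → φ x ≤ φ y) :
    Monotone (Sfun μ φ b₀) := by
  intro t t' htt'
  apply setIntegral_mono_set ((phi_int hb hφmeas hone hmono).integrableOn)
  · exact ae_restrict_of_ae (phi_ae_nonneg hone)
  · exact Filter.Eventually.of_forall (Set.Iic_subset_Iic.2 htt')

lemma Sfun_nonneg (hone : ∀ x ∈ Set.Iic b₀, 1 ≤ φ x) : 0 ≤ Sfun μ φ b₀ t :=
  integral_nonneg_of_ae (ae_restrict_of_ae (phi_ae_nonneg hone))

lemma Sfun_eq (hb : μ (Set.Iic b₀) ≠ ⊤) (ht : t ≤ b₀) :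
    Sfun μ φ b₀ t = ∫ y in Set.Iic t, φ y ∂μ := by
  unfold Sfun
  rw [Measure.restrict_restrict measurableSet_Iic, Set.Iic_inter_Iic, min_eq_left ht]

lemma Sfun_lofReal (hb : μ (Set.Iic b₀) ≠ ⊤) (hφmeas : Measurable φ)
    (hone : ∀ x ∈ Set.Iic b₀, 1 ≤ φ x)
    (hmono : ∀ x y, y ≤ b₀ → x ≤ y → φ x ≤ φ y) (ht : t ≤ b₀) :
    ENNReal.ofReal (Sfun μ φ b₀ t) = ∫⁻ y in Set.Iic t, ENNReal.ofReal (φ y) ∂μ := by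
  rw [Sfun_eq hb ht, ofReal_integral_eq_lintegral_ofReal]
  · have : IntegrableOn φ (Set.Iic t) (μ.restrict (Set.Iic b₀)) :=
      (phi_int hb hφmeas hone hmono).integrableOn
    rwa [IntegrableOn, Measure.restrict_restrict measurableSet_Iic, Set.Iic_inter_Iic,
      min_eq_left ht] at this
  · filter_upwards [ae_restrict_mem measurableSet_Iic] with y hy
    exact le_trans zero_le_one (hone y (le_trans hy ht))

lemma finite_restrict (hb : μ (Set.Iic b₀) ≠ ⊤) (hbb : b ≤ b₀) :
    IsFiniteMeasure (μ.restrict (Set.Iic b)) := by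
  constructor
  rw [Measure.restrict_apply_univ]
  exact lt_of_le_of_lt (measure_mono (Set.Iic_subset_Iic.2 hbb)) hb.lt_top

lemma lint_decomp (hb : μ (Set.Iic b₀) ≠ ⊤) (hφmeas : Measurable φ)
    (hcb : c ≤ b) (hbb : b ≤ b₀) :
    ∫⁻ y in Set.Iic b, ENNReal.ofReal (b - y) * ENNReal.ofReal (φ y) ∂μ
      = (∫⁻ y in Set.Iic c, ENNReal.ofReal (c - y) * ENNReal.ofReal (φ y) ∂μ)
        + ∫⁻ t in Set.Ioc c b, (∫⁻ y in Set.Iic t, ENNReal.ofReal (φ y) ∂μ) ∂volume := by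
  set gφ : ℝ → ℝ≥0∞ := fun y => ENNReal.ofReal (φ y) with hgφ
  have hgmeas : Measurable gφ := ENNReal.measurable_ofReal.comp hφmeas
  have key2 : ∀ y ∈ Set.Iic b, ENNReal.ofReal (b - y)
      = ENNReal.ofReal (c - y) + volume (Set.Ici y ∩ Set.Ioc c b) := by
    intro y hy
    rcases le_or_gt y c with hyc | hcy
    · have hsub : Set.Ioc c b ⊆ Set.Ici y := fun t ht => le_trans hyc (le_of_lt ht.1)
      rw [Set.inter_eq_self_of_subset_right hsub,
        Real.volume_Ioc, ← ENNReal.ofReal_add (by linarith) (by linarith)]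
      congr 1; ring
    · have : Set.Ici y ∩ Set.Ioc c b = Set.Icc y b := by
        ext s
        simp only [Set.mem_inter_iff, Set.mem_Ici, Set.mem_Ioc, Set.mem_Icc]
        exact ⟨fun h => ⟨h.1, h.2.2⟩, fun h => ⟨h.1, lt_of_lt_of_le hcy h.1, h.2⟩⟩
      rw [this, Real.volume_Icc, ENNReal.ofReal_of_nonpos (show c - y ≤ 0 by linarith),
        zero_add]
  have key : ∀ y ∈ Set.Iic b, ENNReal.ofReal (b - y) * gφ y
      = ENNReal.ofReal (c - y) * gφ y
        + ∫⁻ t in Set.Ioc c b, (if y ≤ t then 1 else 0) * gφ y ∂volume := by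
    intro y hy
    have hin : ∀ t : ℝ, (if y ≤ t then (1:ℝ≥0∞) else 0) * gφ y
        = (Set.Ici y).indicator (fun _ => gφ y) t := by
      intro t; simp [Set.indicator_apply, Set.mem_Ici, ite_mul]
    calc ENNReal.ofReal (b - y) * gφ y
        = (ENNReal.ofReal (c - y) + volume (Set.Ici y ∩ Set.Ioc c b)) * gφ y := by
          rw [← key2 y hy]
      _ = ENNReal.ofReal (c - y) * gφ y + volume (Set.Ici y ∩ Set.Ioc c b) * gφ y := by
          rw [add_mul]
      _ = ENNReal.ofReal (c - y) * gφ y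
            + ∫⁻ t in Set.Ioc c b, (if y ≤ t then 1 else 0) * gφ y ∂volume := by
          congr 1
          rw [lintegral_congr hin, lintegral_indicator measurableSet_Ici,
            setLIntegral_const, Measure.restrict_apply measurableSet_Ici, mul_comm]
  rw [setLIntegral_congr_fun measurableSet_Iic key]
  rw [lintegral_add_left (f := fun x => ENNReal.ofReal (c - x) * gφ x) ((Measurable.ennreal_ofReal (by fun_prop)).mul hgmeas)]
  congr 1
  · -- first piece reduces to integral over Iic c
    rw [← Set.Iic_union_Ioc_eq_Iic hcb,
      lintegral_union measurableSet_Ioc (Set.Iic_disjoint_Ioc le_rfl)]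
    have : ∫⁻ y in Set.Ioc c b, ENNReal.ofReal (c - y) * gφ y ∂μ = 0 := by
      rw [setLIntegral_congr_fun measurableSet_Ioc
        (fun y hy => ?_), lintegral_zero]
      rw [ENNReal.ofReal_of_nonpos (by linarith [hy.1]), zero_mul]
    rw [this, add_zero]
  · -- Tonelli swap
    haveI : IsFiniteMeasure (μ.restrict (Set.Iic b)) := finite_restrict hb hbb
    have hF : AEMeasurable (Function.uncurry fun (y t : ℝ) =>
        (if y ≤ t then (1:ℝ≥0∞) else 0) * gφ y)
        ((μ.restrict (Set.Iic b)).prod (volume.restrict (Set.Ioc c b))) := by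
      apply Measurable.aemeasurable
      exact ((measurable_const.ite (measurableSet_le measurable_fst measurable_snd)
        measurable_const).mul (hgmeas.comp measurable_fst))
    rw [lintegral_lintegral_swap hF]
    apply setLIntegral_congr_fun measurableSet_Ioc
    refine fun s hs => ?_
    have hin : ∀ y : ℝ, (if y ≤ s then (1:ℝ≥0∞) else 0) * gφ y
        = (Set.Iic s).indicator gφ y := by
      intro y; simp [Set.indicator_apply, Set.mem_Iic, ite_mul]
    beta_reduce
    rw [lintegral_congr hin, lintegral_indicator measurableSet_Iic,
      Measure.restrict_restrict measurableSet_Iic, Set.Iic_inter_Iic,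
      min_eq_left hs.2]

section
variable (hb : μ (Set.Iic b₀) ≠ ⊤) (hφmeas : Measurable φ)
    (hone : ∀ x ∈ Set.Iic b₀, 1 ≤ φ x)
    (hmono : ∀ x y, y ≤ b₀ → x ≤ y → φ x ≤ φ y)
    (hMb : (∫⁻ y in Set.Iic b, ENNReal.ofReal (b - y) ∂μ) < ⊤)

include hφmeas hone hmono hMb in
lemma Lb_lt_top (hbb : b ≤ b₀) :
    (∫⁻ y in Set.Iic b, ENNReal.ofReal (b - y) * ENNReal.ofReal (φ y) ∂μ) < ⊤ := by
  have hle : (∫⁻ y in Set.Iic b, ENNReal.ofReal (b - y) * ENNReal.ofReal (φ y) ∂μ)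
      ≤ ∫⁻ y in Set.Iic b, ENNReal.ofReal (φ b) * ENNReal.ofReal (b - y) ∂μ := by
    refine lintegral_mono_ae ?_
    rw [ae_restrict_iff' measurableSet_Iic]
    refine Filter.Eventually.of_forall fun y hy => ?_
    exact mul_comm (ENNReal.ofReal (φ b)) (ENNReal.ofReal (b - y)) ▸
      mul_le_mul_right (ENNReal.ofReal_le_ofReal (hmono y b hbb hy)) _
  rw [lintegral_const_mul' _ _ ENNReal.ofReal_ne_top] at hle
  exact lt_of_le_of_lt hle (ENNReal.mul_lt_top ENNReal.ofReal_lt_top hMb)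

include hφmeas hone hmono hMb in
lemma I_integrable (hbb : b ≤ b₀) :
    IntegrableOn (fun y => (b - y) * φ y) (Set.Iic b) μ := by
  constructor
  · exact ((measurable_const.sub measurable_id).mul hφmeas).aestronglyMeasurable
  · have hnn : 0 ≤ᵐ[μ.restrict (Set.Iic b)] fun y => (b - y) * φ y := by
      filter_upwards [ae_restrict_mem measurableSet_Iic] with y hy
      exact mul_nonneg (by linarith [mem_Iic.1 hy])
        (le_trans zero_le_one (hone y (le_trans hy hbb)))
    rw [hasFiniteIntegral_iff_ofReal hnn]
    have heq : ∀ᵐ y ∂μ.restrict (Set.Iic b),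
        ENNReal.ofReal ((b - y) * φ y) = ENNReal.ofReal (b - y) * ENNReal.ofReal (φ y) := by
      filter_upwards [ae_restrict_mem measurableSet_Iic] with y hy
      exact ENNReal.ofReal_mul (by linarith [mem_Iic.1 hy])
    rw [lintegral_congr_ae heq]
    exact Lb_lt_top hφmeas hone hmono hMb hbb

include hφmeas hone hmono hMb in
lemma I_ofReal (hbb : b ≤ b₀) :
    ENNReal.ofReal (∫ y in Set.Iic b, (b - y) * φ y ∂μ)
      = ∫⁻ y in Set.Iic b, ENNReal.ofReal (b - y) * ENNReal.ofReal (φ y) ∂μ := by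
  have hnn : 0 ≤ᵐ[μ.restrict (Set.Iic b)] fun y => (b - y) * φ y := by
    filter_upwards [ae_restrict_mem measurableSet_Iic] with y hy
    exact mul_nonneg (by linarith [mem_Iic.1 hy])
      (le_trans zero_le_one (hone y (le_trans hy hbb)))
  rw [ofReal_integral_eq_lintegral_ofReal (I_integrable hφmeas hone hmono hMb hbb) hnn]
  apply lintegral_congr_ae
  filter_upwards [ae_restrict_mem measurableSet_Iic] with y hy
  exact ENNReal.ofReal_mul (by linarith [mem_Iic.1 hy])

end

section
variable (hb : μ (Set.Iic b₀) ≠ ⊤) (hφmeas : Measurable φ)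
    (hone : ∀ x ∈ Set.Iic b₀, 1 ≤ φ x)
    (hmono : ∀ x y, y ≤ b₀ → x ≤ y → φ x ≤ φ y)

set_option maxHeartbeats 1000000 in
include hb hφmeas hone hmono in
lemma key_identity
    (hMb : (∫⁻ y in Set.Iic b, ENNReal.ofReal (b - y) ∂μ) < ⊤)
    (hMc : (∫⁻ y in Set.Iic c, ENNReal.ofReal (c - y) ∂μ) < ⊤)
    (heqb : φ b = 1 - lam * ∫ y in Set.Iic b, (b - y) * φ y ∂μ)
    (heqc : φ c = 1 - lam * ∫ y in Set.Iic c, (c - y) * φ y ∂μ)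
    (hcb : c ≤ b) (hbb : b ≤ b₀) :
    φ b = φ c + (-lam) * ∫ t in Set.Ioc c b, Sfun μ φ b₀ t := by
  set Ib := ∫ y in Set.Iic b, (b - y) * φ y ∂μ with hIb
  set Ic := ∫ y in Set.Iic c, (c - y) * φ y ∂μ with hIc
  set J := ∫ t in Set.Ioc c b, Sfun μ φ b₀ t with hJ
  have hSmono := Sfun_mono hb hφmeas hone hmono
  have hSnonneg : ∀ t : ℝ, 0 ≤ Sfun μ φ b₀ t := fun t => Sfun_nonneg hone
  have hJint : IntegrableOn (Sfun μ φ b₀) (Set.Ioc c b) volume := by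
    apply Measure.integrableOn_of_bounded (M := Sfun μ φ b₀ b)
    · exact (measure_Ioc_lt_top).ne
    · exact (hSmono.measurable).aestronglyMeasurable
    · filter_upwards [ae_restrict_mem measurableSet_Ioc] with t ht
      rw [Real.norm_eq_abs, abs_of_nonneg (hSnonneg t)]
      exact hSmono ht.2
  have hJ0 : 0 ≤ J := setIntegral_nonneg measurableSet_Ioc fun t _ => hSnonneg t
  have hIc0 : 0 ≤ Ic := setIntegral_nonneg measurableSet_Iic fun y hy =>
    mul_nonneg (by linarith [mem_Iic.1 hy])
      (le_trans zero_le_one (hone y (le_trans hy (le_trans hcb hbb))))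
  have hIb0 : 0 ≤ Ib := setIntegral_nonneg measurableSet_Iic fun y hy =>
    mul_nonneg (by linarith [mem_Iic.1 hy])
      (le_trans zero_le_one (hone y (le_trans hy hbb)))
  have hJofReal : ENNReal.ofReal J
      = ∫⁻ t in Set.Ioc c b, (∫⁻ y in Set.Iic t, ENNReal.ofReal (φ y) ∂μ) ∂volume := by
    rw [hJ, ofReal_integral_eq_lintegral_ofReal hJint (by
      filter_upwards [] with t
      exact hSnonneg t)]
    apply lintegral_congr_ae
    filter_upwards [ae_restrict_mem measurableSet_Ioc] with t ht
    exact Sfun_lofReal hb hφmeas hone hmono (le_trans ht.2 hbb)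
  have h1 : ENNReal.ofReal Ib = ENNReal.ofReal (Ic + J) := by
    rw [ENNReal.ofReal_add hIc0 hJ0, hIb, hIc,
      I_ofReal hφmeas hone hmono hMb hbb,
      I_ofReal hφmeas hone hmono hMc (le_trans hcb hbb),
      lint_decomp hb hφmeas hcb hbb, hJofReal]
  have h2 : Ib = Ic + J := (ENNReal.ofReal_eq_ofReal_iff hIb0 (add_nonneg hIc0 hJ0)).1 h1
  rw [heqb, heqc, h2]
  ring

end

open Filter Topology in
section
variable (hb : μ (Set.Iic b₀) ≠ ⊤) (hφmeas : Measurable φ)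
    (hone : ∀ x ∈ Set.Iic b₀, 1 ≤ φ x)
    (hmono : ∀ x y, y ≤ b₀ → x ≤ y → φ x ≤ φ y)

include hb hφmeas hone hmono in
lemma Sfun_rightCont {x : ℝ} (hxb : x < b₀) :
    ContinuousWithinAt (Sfun μ φ b₀) (Set.Ioi x) x := by
  have hSmono := Sfun_mono hb hφmeas hone hmono
  set ν := μ.restrict (Set.Iic b₀) with hν
  haveI hνfin : IsFiniteMeasure ν := by
    constructor; rw [Measure.restrict_apply_univ]; exact hb.lt_top
  set u : ℕ → ℝ := fun n => x + (b₀ - x) / (n + 1) with hu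
  have hux : ∀ n, x < u n := fun n => by
    have h0 : (0:ℝ) < (b₀ - x) / (n + 1) := div_pos (by linarith) (by positivity)
    simp only [hu]; linarith
  have hub : ∀ n, u n ≤ b₀ := fun n => by
    have h1 : (b₀ - x) / ((n:ℝ) + 1) ≤ b₀ - x :=
      div_le_self (by linarith) (by norm_num [Nat.cast_nonneg])
    simp only [hu]; linarith
  have huanti : Antitone u := by
    intro m n hmn
    simp only [hu, add_le_add_iff_left]
    exact div_le_div_of_nonneg_left (by linarith) (by positivity)
      (by exact_mod_cast Nat.succ_le_succ hmn)
  have hmeaszero : Filter.Tendsto (fun n => ν (Set.Ioc x (u n))) Filter.atTop (𝓝 0) := by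
    have hiInter : ⋂ n, Set.Ioc x (u n) = ∅ := by
      apply Set.eq_empty_iff_forall_notMem.2
      intro y hy
      simp only [Set.mem_iInter, Set.mem_Ioc] at hy
      have hxy : x < y := (hy 0).1
      obtain ⟨n, hn⟩ := exists_nat_gt ((b₀ - x) / (y - x))
      have h2 := (hy n).2
      have h3 : (b₀ - x) / ((n:ℝ) + 1) < y - x := by
        rw [div_lt_iff₀ (by positivity)]
        have h4 : (b₀ - x) / (y - x) < (n:ℝ) + 1 := lt_trans hn (by linarith)
        rw [div_lt_iff₀ (by linarith)] at h4
        linarith [h4]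
      simp only [hu] at h2; linarith
    have := MeasureTheory.tendsto_measure_iInter_atTop (μ := ν) (s := fun n => Set.Ioc x (u n))
      (fun n => (measurableSet_Ioc).nullMeasurableSet)
      (fun m n hmn => Set.Ioc_subset_Ioc_right (huanti hmn))
      ⟨0, (measure_lt_top ν _).ne⟩
    rwa [hiInter, measure_empty] at this
  have hseq : Filter.Tendsto (fun n => Sfun μ φ b₀ (u n)) Filter.atTop (𝓝 (Sfun μ φ b₀ x)) := by
    have hbound : ∀ n, |Sfun μ φ b₀ (u n) - Sfun μ φ b₀ x|
        ≤ φ b₀ * (ν (Set.Ioc x (u n))).toReal := by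
      intro n
      have hsplit : Sfun μ φ b₀ (u n) - Sfun μ φ b₀ x = ∫ y in Set.Ioc x (u n), φ y ∂ν := by
        have hunion : Set.Iic x ∪ Set.Ioc x (u n) = Set.Iic (u n) :=
          Set.Iic_union_Ioc_eq_Iic (hux n).le
        have hint := phi_int hb hφmeas hone hmono
        unfold Sfun
        rw [← hunion, setIntegral_union (Set.Iic_disjoint_Ioc le_rfl) measurableSet_Ioc
          hint.integrableOn hint.integrableOn]
        ring
      rw [hsplit, ← Real.norm_eq_abs]
      apply norm_setIntegral_le_of_norm_le_const (measure_lt_top ν _)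
      · intro y hy
        rw [Real.norm_eq_abs,
          abs_of_nonneg (le_trans zero_le_one (hone y (le_trans hy.2 (hub n))))]
        exact hmono y b₀ le_rfl (le_trans hy.2 (hub n))
    have htoReal : Filter.Tendsto (fun n => φ b₀ * (ν (Set.Ioc x (u n))).toReal)
        Filter.atTop (𝓝 0) := by
      have h0 : Filter.Tendsto (fun n => (ν (Set.Ioc x (u n))).toReal) Filter.atTop (𝓝 0) := by
        have := (ENNReal.tendsto_toReal (by simp : (0:ℝ≥0∞) ≠ ⊤)).comp hmeaszero
        simpa [Function.comp_def] using this
      simpa using h0.const_mul (φ b₀)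
    have hz := squeeze_zero_norm (fun n => by rw [Real.norm_eq_abs]; exact hbound n) htoReal
    have h2 : Filter.Tendsto (fun n => (Sfun μ φ b₀ (u n) - Sfun μ φ b₀ x) + Sfun μ φ b₀ x)
        Filter.atTop (𝓝 (0 + Sfun μ φ b₀ x)) := hz.add tendsto_const_nhds
    simpa using h2
  rw [ContinuousWithinAt]
  apply tendsto_order.2
  constructor
  · intro v hv
    filter_upwards [self_mem_nhdsWithin] with t ht
    exact lt_of_lt_of_le hv (hSmono (le_of_lt ht))
  · intro v hv
    obtain ⟨n, hn⟩ := (hseq.eventually_lt_const hv).exists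
    filter_upwards [Ioc_mem_nhdsGT_of_mem ⟨le_rfl, hux n⟩] with t ht
    exact lt_of_le_of_lt (hSmono ht.2) hn

end

open Filter Topology intervalIntegral in
section
variable (hb : μ (Set.Iic b₀) ≠ ⊤) (hφmeas : Measurable φ)
    (hone : ∀ x ∈ Set.Iic b₀, 1 ≤ φ x)
    (hmono : ∀ x y, y ≤ b₀ → x ≤ y → φ x ≤ φ y)
    (hab : a < b₀)
    (hM : ∀ x, x ≤ a → (∫⁻ y in Set.Iic x, ENNReal.ofReal (x - y) ∂μ) < ⊤)
    (heq : ∀ x, x ≤ a → φ x = 1 - lam * ∫ y in Set.Iic x, (x - y) * φ y ∂μ)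

include hb hφmeas hone hmono hab hM heq in
lemma log_phi_integral (hca : c ≤ a) :
    ∫ t in Set.Ioc c a, ((-lam) * (Sfun μ φ b₀ t / φ t)) ∂volume
      = Real.log (φ a) - Real.log (φ c) := by
  set S := Sfun μ φ b₀ with hS
  have hSmono := Sfun_mono hb hφmeas hone hmono
  have hSnn : ∀ t, 0 ≤ S t := fun t => Sfun_nonneg hone
  have hφpos : ∀ u, u ≤ b₀ → 0 < φ u := fun u hu => lt_of_lt_of_le one_pos (hone u hu)
  -- the integral identity
  have hid : ∀ u ∈ Set.Icc c a, φ u = φ c + (-lam) * ∫ t in Set.Ioc c u, S t ∂volume := by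
    intro u hu
    exact key_identity hb hφmeas hone hmono (hM u hu.2) (hM c hca) (heq u hu.2) (heq c hca)
      hu.1 (le_trans hu.2 hab.le)
  -- continuity of φ on Icc c a
  have hSint : IntegrableOn S (Set.Icc c a) volume := by
    apply Measure.integrableOn_of_bounded (M := S a)
    · exact measure_Icc_lt_top.ne
    · exact hSmono.measurable.aestronglyMeasurable
    · filter_upwards [ae_restrict_mem measurableSet_Icc] with t ht
      rw [Real.norm_eq_abs, abs_of_nonneg (hSnn t)]
      exact hSmono ht.2
  have hφcont : ContinuousOn φ (Set.Icc c a) := by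
    apply ContinuousOn.congr (f := fun u => φ c + (-lam) * ∫ t in Set.Ioc c u, S t ∂volume)
    · exact continuousOn_const.add
        (continuousOn_const.mul (intervalIntegral.continuousOn_primitive hSint))
    · intro u hu; exact hid u hu
  have hlogcont : ContinuousOn (fun u => Real.log (φ u)) (Set.Icc c a) :=
    ContinuousOn.log hφcont (fun u hu => (hφpos u (le_trans hu.2 hab.le)).ne')
  -- right derivative
  have hderiv : ∀ x ∈ Set.Ioo c a, HasDerivWithinAt (fun u => Real.log (φ u))
      ((-lam) * (S x / φ x)) (Set.Ioi x) x := by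
    intro x hx
    have hxb : x < b₀ := lt_trans hx.2 hab
    have hSi : IntervalIntegrable S volume c x := hSmono.intervalIntegrable
    have h1 : HasDerivWithinAt (fun u => ∫ t in c..u, S t ∂volume) (S x) (Set.Ici x) x :=
      intervalIntegral.integral_hasDerivWithinAt_right hSi
        (hSmono.measurable.stronglyMeasurable.stronglyMeasurableAtFilter)
        (Sfun_rightCont hb hφmeas hone hmono hxb)
    have hP : HasDerivWithinAt (fun u => φ c + (-lam) * ∫ t in c..u, S t ∂volume)
        ((-lam) * S x) (Set.Ici x) x := ((h1.const_mul (-lam)).const_add (φ c))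
    have hP' := hP.mono Set.Ioi_subset_Ici_self
    have hφd : HasDerivWithinAt φ ((-lam) * S x) (Set.Ioi x) x := by
      apply hP'.congr_of_eventuallyEq
      · filter_upwards [Ioo_mem_nhdsGT_of_mem (Set.mem_Ico.2 ⟨le_rfl, hx.2⟩)] with u hu
        rw [hid u ⟨le_trans hx.1.le hu.1.le, hu.2.le⟩,
          intervalIntegral.integral_of_le (le_trans hx.1.le hu.1.le)]
      · rw [hid x ⟨hx.1.le, hx.2.le⟩, intervalIntegral.integral_of_le hx.1.le]
    have h3 := hφd.log (hφpos x hxb.le).ne'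
    convert h3 using 1
    field_simp [mul_div_assoc]
  -- integrability of the derivative
  have hint : IntervalIntegrable (fun t => (-lam) * (S t / φ t)) volume c a := by
    rw [intervalIntegrable_iff_integrableOn_Icc_of_le hca]
    apply Measure.integrableOn_of_bounded (M := |lam| * S a)
    · exact measure_Icc_lt_top.ne
    · exact (measurable_const.mul
        (hSmono.measurable.div hφmeas)).aestronglyMeasurable
    · filter_upwards [ae_restrict_mem measurableSet_Icc] with t ht
      have h1 : 1 ≤ φ t := hone t (le_trans ht.2 hab.le)
      have h2 : 0 ≤ S t / φ t := div_nonneg (hSnn t) (by linarith)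
      have h3 : S t / φ t ≤ S a := by
        apply le_trans (div_le_self (hSnn t) h1)
        exact hSmono ht.2
      rw [Real.norm_eq_abs, abs_mul, abs_of_nonneg h2, abs_neg]
      exact mul_le_mul le_rfl h3 h2 (abs_nonneg lam)
  rw [← intervalIntegral.integral_of_le hca]
  exact intervalIntegral.integral_eq_sub_of_hasDeriv_right_of_le hca hlogcont hderiv hint

end

section
variable (hb : μ (Set.Iic b₀) ≠ ⊤) (hφmeas : Measurable φ)
    (hone : ∀ x ∈ Set.Iic b₀, 1 ≤ φ x)
    (hmono : ∀ x y, y ≤ b₀ → x ≤ y → φ x ≤ φ y)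
    (hab : a < b₀) (hlam : lam < 0)
    (hM : ∀ x, x ≤ a → (∫⁻ y in Set.Iic x, ENNReal.ofReal (x - y) ∂μ) < ⊤)
    (heq : ∀ x, x ≤ a → φ x = 1 - lam * ∫ y in Set.Iic x, (x - y) * φ y ∂μ)

include hb hφmeas hone hmono hab hlam hM heq in
lemma lint_log_piece (hca : c ≤ a) :
    ∫⁻ t in Set.Ioc c a, ENNReal.ofReal (Sfun μ φ b₀ t / φ t) ∂volume
      ≤ ENNReal.ofReal (Real.log (φ a) / (-lam)) := by
  set S := Sfun μ φ b₀ with hS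
  have hSmono := Sfun_mono hb hφmeas hone hmono
  have hSnn : ∀ t, 0 ≤ S t := fun t => Sfun_nonneg hone
  have hfint : IntegrableOn (fun t => S t / φ t) (Set.Ioc c a) volume := by
    apply Measure.integrableOn_of_bounded (M := S a)
    · exact measure_Ioc_lt_top.ne
    · exact (hSmono.measurable.div hφmeas).aestronglyMeasurable
    · filter_upwards [ae_restrict_mem measurableSet_Ioc] with t ht
      have h1 : 1 ≤ φ t := hone t (le_trans ht.2 hab.le)
      rw [Real.norm_eq_abs, abs_of_nonneg (div_nonneg (hSnn t) (by linarith))]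
      exact le_trans (div_le_self (hSnn t) h1) (hSmono ht.2)
  rw [← ofReal_integral_eq_lintegral_ofReal hfint (by
    filter_upwards [ae_restrict_mem measurableSet_Ioc] with t ht
    exact div_nonneg (hSnn t) (le_trans zero_le_one (hone t (le_trans ht.2 hab.le))))]
  apply ENNReal.ofReal_le_ofReal
  have hkey := log_phi_integral hb hφmeas hone hmono hab hM heq hca
  rw [MeasureTheory.integral_const_mul] at hkey
  have hlam' : (0:ℝ) < -lam := by linarith
  have h2 : ∫ t in Set.Ioc c a, S t / φ t ∂volume
      = (Real.log (φ a) - Real.log (φ c)) / (-lam) := by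
    rw [eq_div_iff hlam'.ne', mul_comm]
    exact hkey
  rw [h2]
  have hlogc : 0 ≤ Real.log (φ c) := Real.log_nonneg (hone c (le_trans hca hab.le))
  gcongr
  linarith

include hb hφmeas hone hmono hab hlam hM heq in
lemma lint_log_bound :
    ∫⁻ t in Set.Iic a, ENNReal.ofReal (Sfun μ φ b₀ t / φ t) ∂volume
      ≤ ENNReal.ofReal (Real.log (φ a) / (-lam)) := by
  set S := Sfun μ φ b₀ with hS
  have hSmono := Sfun_mono hb hφmeas hone hmono
  set g : ℝ → ℝ≥0∞ := fun t => ENNReal.ofReal (S t / φ t) with hg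
  have hgmeas : Measurable g := (hSmono.measurable.div hφmeas).ennreal_ofReal
  have hpoint : ∀ t, (Set.Iic a).indicator g t
      = ⨆ n : ℕ, (Set.Ioc (a - n) a).indicator g t := by
    intro t
    apply le_antisymm
    · by_cases hta : t ∈ Set.Iic a
      · obtain ⟨n, hn⟩ := exists_nat_gt (a - t)
        have htn : t ∈ Set.Ioc (a - n) a := ⟨by linarith, hta⟩
        rw [Set.indicator_of_mem hta]
        refine le_trans ?_ (le_iSup _ n)
        rw [Set.indicator_of_mem htn]
      · rw [Set.indicator_of_notMem hta]
        exact zero_le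
    · exact iSup_le fun n => Set.indicator_le_indicator_of_subset
        (fun s hs => hs.2) (fun t => zero_le) t
  calc ∫⁻ t in Set.Iic a, g t ∂volume
      = ∫⁻ t, (Set.Iic a).indicator g t ∂volume := by
        rw [lintegral_indicator measurableSet_Iic]
    _ = ∫⁻ t, ⨆ n : ℕ, (Set.Ioc (a - n) a).indicator g t ∂volume := by
        apply lintegral_congr hpoint
    _ = ⨆ n : ℕ, ∫⁻ t, (Set.Ioc (a - n) a).indicator g t ∂volume := by
        apply lintegral_iSup
        · exact fun n => hgmeas.indicator measurableSet_Ioc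
        · intro m n hmn
          apply Set.indicator_le_indicator_of_subset
          · apply Set.Ioc_subset_Ioc_left
            have : (m:ℝ) ≤ n := Nat.cast_le.2 hmn
            linarith
          · exact fun t => zero_le
    _ ≤ ENNReal.ofReal (Real.log (φ a) / (-lam)) := by
        apply iSup_le fun n => ?_
        rw [lintegral_indicator measurableSet_Ioc]
        exact lint_log_piece hb hφmeas hone hmono hab hlam hM heq
          (by linarith [Nat.cast_nonneg (α := ℝ) n])

end

section
variable (hb : μ (Set.Iic b₀) ≠ ⊤) (hφmeas : Measurable φ)
    (hone : ∀ x ∈ Set.Iic b₀, 1 ≤ φ x)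
    (hmono : ∀ x y, y ≤ b₀ → x ≤ y → φ x ≤ φ y)
    (hab : a < b₀)

include hb hφmeas hone hmono hab in
lemma main_swap_bound :
    (∫⁻ x in Set.Iic a,
        ENNReal.ofReal (φ x ^ 2 * ∫ y in Set.Ioc x a, (φ y ^ 2)⁻¹) ∂μ)
      ≤ ∫⁻ t in Set.Iic a, ENNReal.ofReal (Sfun μ φ b₀ t / φ t) ∂volume := by
  haveI : IsFiniteMeasure (μ.restrict (Set.Iic a)) := finite_restrict hb hab.le
  set F : ℝ → ℝ → ℝ≥0∞ := fun x t => (Set.Ioc x a).indicator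
    (fun s => ENNReal.ofReal (φ x ^ 2) * ENNReal.ofReal ((φ s ^ 2)⁻¹)) t with hF
  have hstep1 : (∫⁻ x in Set.Iic a,
      ENNReal.ofReal (φ x ^ 2 * ∫ y in Set.Ioc x a, (φ y ^ 2)⁻¹) ∂μ)
      = ∫⁻ x in Set.Iic a, (∫⁻ t, F x t ∂volume) ∂μ := by
    apply setLIntegral_congr_fun measurableSet_Iic
    refine fun x hx => ?_
    have hI : IntegrableOn (fun y => (φ y ^ 2)⁻¹) (Set.Ioc x a) volume := by
      apply Measure.integrableOn_of_bounded (M := 1)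
      · exact measure_Ioc_lt_top.ne
      · exact ((hφmeas.pow_const 2).inv).aestronglyMeasurable
      · filter_upwards [ae_restrict_mem measurableSet_Ioc] with y hy
        have h1 : 1 ≤ φ y := hone y (le_trans hy.2 hab.le)
        have h2 : (1:ℝ) ≤ φ y ^ 2 := by nlinarith
        rw [Real.norm_eq_abs, abs_of_nonneg (inv_nonneg.2 (by positivity))]
        exact inv_le_one_of_one_le₀ h2
    rw [hF]
    simp only
    rw [lintegral_indicator measurableSet_Ioc,
      lintegral_const_mul' _ _ ENNReal.ofReal_ne_top,
      ← ofReal_integral_eq_lintegral_ofReal hI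
        (Filter.Eventually.of_forall fun y => inv_nonneg.2 (sq_nonneg _)),
      ← ENNReal.ofReal_mul (sq_nonneg _)]
  rw [hstep1]
  have hswap : ∫⁻ x in Set.Iic a, (∫⁻ t, F x t ∂volume) ∂μ
      = ∫⁻ t, (∫⁻ x in Set.Iic a, F x t ∂μ) ∂volume := by
    apply lintegral_lintegral_swap
    apply Measurable.aemeasurable
    have huncurry : Function.uncurry F = fun p : ℝ × ℝ =>
        Set.indicator {q : ℝ × ℝ | q.1 < q.2 ∧ q.2 ≤ a}
          (fun q => ENNReal.ofReal (φ q.1 ^ 2) * ENNReal.ofReal ((φ q.2 ^ 2)⁻¹)) p := by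
      funext p
      simp [Function.uncurry, hF, Set.indicator_apply, Set.mem_Ioc]
    rw [huncurry]
    apply Measurable.indicator
    · exact ((hφmeas.comp measurable_fst).pow_const 2).ennreal_ofReal.mul
        (((hφmeas.comp measurable_snd).pow_const 2).inv.ennreal_ofReal)
    · exact (measurableSet_lt measurable_fst measurable_snd).inter
        (measurableSet_le measurable_snd measurable_const)
  rw [hswap]
  have hpt : ∀ t : ℝ, (∫⁻ x in Set.Iic a, F x t ∂μ)
      ≤ (Set.Iic a).indicator (fun t => ENNReal.ofReal (Sfun μ φ b₀ t / φ t)) t := by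
    intro t
    by_cases ht : t ≤ a
    · have hres : (μ.restrict (Set.Iic a)).restrict (Set.Iio t) = μ.restrict (Set.Iio t) := by
        have hsub : Set.Iio t ⊆ Set.Iic a := fun y hy => le_trans (le_of_lt hy) ht
        rw [Measure.restrict_restrict measurableSet_Iio, Set.inter_eq_left.2 hsub]
      have hFt : ∀ x, F x t = (Set.Iio t).indicator
          (fun x => ENNReal.ofReal (φ x ^ 2) * ENNReal.ofReal ((φ t ^ 2)⁻¹)) x := by
        intro x
        simp only [hF, Set.indicator_apply, Set.mem_Ioc, Set.mem_Iio]
        by_cases hxt : x < t <;> simp [hxt, ht]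
      rw [Set.indicator_of_mem (show t ∈ Set.Iic a from ht), lintegral_congr hFt,
        lintegral_indicator measurableSet_Iio, hres]
      have hb1 : ∫⁻ x in Set.Iio t, ENNReal.ofReal (φ x ^ 2)
            * ENNReal.ofReal ((φ t ^ 2)⁻¹) ∂μ
          ≤ ∫⁻ x in Set.Iio t, (ENNReal.ofReal (φ t) * ENNReal.ofReal ((φ t ^ 2)⁻¹))
            * ENNReal.ofReal (φ x) ∂μ := by
        refine lintegral_mono_ae ?_
        filter_upwards [ae_restrict_mem measurableSet_Iio] with x hx
        have hxt : x ≤ t := le_of_lt hx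
        have htb : t ≤ b₀ := le_trans ht hab.le
        have h0 : 0 ≤ φ x := le_trans zero_le_one (hone x (le_trans hxt htb))
        have h1 : φ x ^ 2 ≤ φ t * φ x := by
          rw [sq]
          exact mul_le_mul_of_nonneg_right (hmono x t htb hxt) h0
        calc ENNReal.ofReal (φ x ^ 2) * ENNReal.ofReal ((φ t ^ 2)⁻¹)
            ≤ ENNReal.ofReal (φ t * φ x) * ENNReal.ofReal ((φ t ^ 2)⁻¹) :=
              mul_le_mul_left (ENNReal.ofReal_le_ofReal h1) _
          _ = (ENNReal.ofReal (φ t) * ENNReal.ofReal ((φ t ^ 2)⁻¹))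
              * ENNReal.ofReal (φ x) := by
              rw [ENNReal.ofReal_mul (le_trans zero_le_one (hone t htb))]
              ring
      refine le_trans hb1 ?_
      rw [lintegral_const_mul' _ _ (ENNReal.mul_ne_top ENNReal.ofReal_ne_top
        ENNReal.ofReal_ne_top)]
      have hb2 : ∫⁻ x in Set.Iio t, ENNReal.ofReal (φ x) ∂μ
          ≤ ∫⁻ x in Set.Iic t, ENNReal.ofReal (φ x) ∂μ :=
        lintegral_mono_set (fun y (hy : y ∈ Set.Iio t) => (Set.mem_Iic.2 (le_of_lt hy)))
      refine le_trans (mul_le_mul_right hb2 _) ?_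
      have htb : t ≤ b₀ := le_trans ht hab.le
      rw [← Sfun_lofReal hb hφmeas hone hmono htb]
      have hφt1 : 1 ≤ φ t := hone t htb
      have hφtpos : (0:ℝ) < φ t := lt_of_lt_of_le one_pos hφt1
      apply le_of_eq
      rw [← ENNReal.ofReal_mul (le_of_lt hφtpos), ← ENNReal.ofReal_mul
        (mul_nonneg (le_of_lt hφtpos) (inv_nonneg.2 (sq_nonneg _)))]
      congr 1
      field_simp
    · have hzero : ∀ x, F x t = 0 := by
        intro x
        simp only [hF]
        apply Set.indicator_of_notMem
        exact fun hmem => ht hmem.2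
      rw [lintegral_congr hzero, lintegral_zero]
      exact zero_le
  calc ∫⁻ t, (∫⁻ x in Set.Iic a, F x t ∂μ) ∂volume
      ≤ ∫⁻ t, (Set.Iic a).indicator
          (fun t => ENNReal.ofReal (Sfun μ φ b₀ t / φ t)) t ∂volume :=
        lintegral_mono hpt
    _ = ∫⁻ t in Set.Iic a, ENNReal.ofReal (Sfun μ φ b₀ t / φ t) ∂volume := by
        rw [lintegral_indicator measurableSet_Iic]

end

end AuxStmt11


theorem stmt_11 (μ : Measure ℝ) (hμ : IsEntrance μ)
    (lam : ℝ) (hlam : lam < 0)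
    (a : ℝ) (ha : belowL μ a)
    (φ : ℝ → ℝ) (hφmeas : Measurable φ)
    (hφ : ∀ x, belowL μ x → φ x = 1 - lam * ∫ y in Set.Iic x, (x - y) * φ y ∂μ)
    (hφ1 : ∀ x, belowL μ x → 1 ≤ φ x)
    (hφmono : ∀ x y : ℝ, belowL μ y → x ≤ y → φ x ≤ φ y) :
    (∫⁻ x in Set.Iic a,
        ENNReal.ofReal (φ x ^ 2 * ∫ y in Set.Ioc x a, (φ y ^ 2)⁻¹) ∂μ) ≤
      ENNReal.ofReal (min (Mfun μ a) (Real.log (φ a) / (-lam))) := by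
  obtain ⟨a', haa', ha'⟩ := ha
  set b₀ := (a + a') / 2 with hb₀
  have hab : a < b₀ := by rw [hb₀]; linarith
  have hb₀a' : b₀ < a' := by rw [hb₀]; linarith
  have hb : μ (Set.Iic b₀) ≠ ⊤ :=
    (lt_of_le_of_lt (measure_mono (Set.Iic_subset_Iic.2 hb₀a'.le)) ha').ne
  have hbel : ∀ x, x ≤ b₀ → belowL μ x := fun x hx => ⟨a', lt_of_le_of_lt hx hb₀a', ha'⟩
  have hone : ∀ x ∈ Set.Iic b₀, 1 ≤ φ x := fun x hx => hφ1 x (hbel x hx)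
  have hmono2 : ∀ x y, y ≤ b₀ → x ≤ y → φ x ≤ φ y := fun x y hy hxy =>
    hφmono x y (hbel y hy) hxy
  have hM : ∀ x, x ≤ a → (∫⁻ y in Set.Iic x, ENNReal.ofReal (x - y) ∂μ) < ⊤ :=
    fun x hx => hμ x (hbel x (le_trans hx hab.le))
  have heq : ∀ x, x ≤ a → φ x = 1 - lam * ∫ y in Set.Iic x, (x - y) * φ y ∂μ :=
    fun x hx => hφ x (hbel x (le_trans hx hab.le))
  have hbound2 : (∫⁻ x in Set.Iic a,
      ENNReal.ofReal (φ x ^ 2 * ∫ y in Set.Ioc x a, (φ y ^ 2)⁻¹) ∂μ)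
      ≤ ENNReal.ofReal (Real.log (φ a) / (-lam)) :=
    le_trans (main_swap_bound hb hφmeas hone hmono2 hab)
      (lint_log_bound hb hφmeas hone hmono2 hab hlam hM heq)
  have hMlt : (∫⁻ y in Set.Iic a, ENNReal.ofReal (a - y) ∂μ) < ⊤ := hM a le_rfl
  have hbound1 : (∫⁻ x in Set.Iic a,
      ENNReal.ofReal (φ x ^ 2 * ∫ y in Set.Ioc x a, (φ y ^ 2)⁻¹) ∂μ)
      ≤ ENNReal.ofReal (Mfun μ a) := by
    have hptwise : (∫⁻ x in Set.Iic a,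
        ENNReal.ofReal (φ x ^ 2 * ∫ y in Set.Ioc x a, (φ y ^ 2)⁻¹) ∂μ)
        ≤ ∫⁻ x in Set.Iic a, ENNReal.ofReal (a - x) ∂μ := by
      refine lintegral_mono_ae ?_
      filter_upwards [ae_restrict_mem measurableSet_Iic] with x hx
      apply ENNReal.ofReal_le_ofReal
      have hφx1 : 1 ≤ φ x := hone x (le_trans hx hab.le)
      have hφxpos : (0:ℝ) < φ x := lt_of_lt_of_le one_pos hφx1
      have hI : IntegrableOn (fun y => (φ y ^ 2)⁻¹) (Set.Ioc x a) volume := by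
        apply Measure.integrableOn_of_bounded (M := 1)
        · exact measure_Ioc_lt_top.ne
        · exact ((hφmeas.pow_const 2).inv).aestronglyMeasurable
        · filter_upwards [ae_restrict_mem measurableSet_Ioc] with y hy
          have h1 : 1 ≤ φ y := hone y (le_trans hy.2 hab.le)
          have h2 : (1:ℝ) ≤ φ y ^ 2 := by nlinarith
          rw [Real.norm_eq_abs, abs_of_nonneg (inv_nonneg.2 (by positivity))]
          exact inv_le_one_of_one_le₀ h2
      have hconstint : IntegrableOn (fun _ => (φ x ^ 2)⁻¹) (Set.Ioc x a) volume :=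
        integrableOn_const measure_Ioc_lt_top.ne
      have hmon : ∀ y ∈ Set.Ioc x a, (φ y ^ 2)⁻¹ ≤ (φ x ^ 2)⁻¹ := by
        intro y hy
        have hxy : φ x ≤ φ y := hmono2 x y (le_trans hy.2 hab.le) hy.1.le
        have : φ x ^ 2 ≤ φ y ^ 2 := by nlinarith
        exact inv_anti₀ (by positivity) this
      have hconst : ∫ y in Set.Ioc x a, (φ x ^ 2)⁻¹ ∂volume = (a - x) * (φ x ^ 2)⁻¹ := by
        rw [setIntegral_const, Measure.real, Real.volume_Ioc, ENNReal.toReal_ofReal (by linarith [Set.mem_Iic.1 hx]),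
          smul_eq_mul]
      have hIle : ∫ y in Set.Ioc x a, (φ y ^ 2)⁻¹ ≤ (a - x) * (φ x ^ 2)⁻¹ :=
        le_trans (setIntegral_mono_on hI hconstint measurableSet_Ioc hmon) hconst.le
      calc φ x ^ 2 * ∫ y in Set.Ioc x a, (φ y ^ 2)⁻¹
          ≤ φ x ^ 2 * ((a - x) * (φ x ^ 2)⁻¹) :=
            mul_le_mul_of_nonneg_left hIle (sq_nonneg _)
        _ = a - x := by field_simp
    refine le_trans hptwise (le_of_eq ?_)
    unfold Mfun
    rw [ENNReal.ofReal_toReal hMlt.ne]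
  rcases le_total (Mfun μ a) (Real.log (φ a) / (-lam)) with h | h
  · rw [min_eq_left h]; exact hbound1
  · rw [min_eq_right h]; exact hbound2
end

section
/- Let μ be an entrance-type string measure, λ < 0, and define φ_λ′(x) := (−λ) ∫_{(−∞,x]} φ_λ(y) dμ(y). Let a < l with φ_λ′(a) > 0, and let ψ : [0,∞) → [0,∞) be nondecreasing. Then ∫_a^l ψ( (log φ_λ(x))/(−λ) ) φ_λ(x)⁻² dx ≤ ((−λ)/φ_λ′(a)) · ∫_0^∞ ψ(t) e^{λt} dt. -/
open MeasureTheory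

open Set Filter Topology
open scoped ENNReal NNReal

section aux
variable {μ : Measure ℝ}

lemma belowL_mono {x y : ℝ} (h : belowL μ x) (hyx : y ≤ x) : belowL μ y := by
  obtain ⟨z, hz, hz'⟩ := h; exact ⟨z, lt_of_le_of_lt hyx hz, hz'⟩

lemma belowL_exists_gt {x : ℝ} (h : belowL μ x) : ∃ x', x < x' ∧ belowL μ x' := by
  obtain ⟨z, hz, hz'⟩ := h
  exact ⟨(x + z) / 2, by linarith, ⟨z, by linarith, hz'⟩⟩

lemma measurableSet_belowL (μ : Measure ℝ) : MeasurableSet {x | belowL μ x} := by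
  apply Set.OrdConnected.measurableSet
  exact ⟨fun x hx y hy z hz => belowL_mono hy hz.2⟩

/-- `∫⁻ exp(lam t)` over `Ioi s`. -/
lemma lintegral_exp_Ioi {lam : ℝ} (hlam : lam < 0) (s : ℝ) :
    ∫⁻ t in Set.Ioi s, ENNReal.ofReal (Real.exp (lam * t)) =
      ENNReal.ofReal (Real.exp (lam * s) / (-lam)) := by
  have hderiv : ∀ t ∈ Set.Ici s,
      HasDerivAt (fun t => Real.exp (lam * t) / lam) (Real.exp (lam * t)) t := by
    intro t _
    have h1 : HasDerivAt (fun t : ℝ => lam * t) lam t := by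
      simpa using (hasDerivAt_id t).const_mul lam
    have h2 : HasDerivAt (fun t => Real.exp (lam * t)) (Real.exp (lam * t) * lam) t :=
      h1.exp
    have := h2.div_const lam
    simpa [mul_div_assoc, mul_div_cancel_right₀ _ hlam.ne] using this
  have htend : Tendsto (fun t => Real.exp (lam * t) / lam) atTop (𝓝 0) := by
    have h1 : Tendsto (fun t : ℝ => lam * t) atTop atBot :=
      Tendsto.const_mul_atTop_of_neg hlam tendsto_id
    have : Tendsto (fun t => Real.exp (lam * t)) atTop (𝓝 0) :=
      Real.tendsto_exp_atBot.comp h1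
    simpa using this.div_const lam
  have hint : IntegrableOn (fun t => Real.exp (lam * t)) (Set.Ioi s) :=
    integrableOn_Ioi_deriv_of_nonneg ((hderiv s Set.self_mem_Ici).continuousAt.continuousWithinAt)
      (fun x hx => hderiv x (Set.mem_Ioi.mp hx).le) (fun x _ => (Real.exp_pos _).le) htend
  have hval : ∫ t in Set.Ioi s, Real.exp (lam * t) = Real.exp (lam * s) / (-lam) := by
    rw [integral_Ioi_of_hasDerivAt_of_tendsto ((hderiv s Set.self_mem_Ici).continuousAt.continuousWithinAt)
      (fun x hx => hderiv x (Set.mem_Ioi.mp hx).le) hint htend]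
    field_simp
    ring
  rw [← ofReal_integral_eq_lintegral_ofReal hint
    (ae_of_all _ fun t => (Real.exp_pos _).le), hval]

/-- `∫⁻ ((K + c(x-x'))^2)⁻¹` over `Ioi x'`. -/
lemma lintegral_inv_sq_Ioi {K c : ℝ} (hK : 0 < K) (hc : 0 < c) (x' : ℝ) :
    ∫⁻ x in Set.Ioi x', ENNReal.ofReal (((K + c * (x - x')) ^ 2)⁻¹) =
      ENNReal.ofReal (1 / (c * K)) := by
  set g : ℝ → ℝ := fun x => K + c * (x - x') with hg
  have hgpos : ∀ x ∈ Set.Ici x', 0 < g x := by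
    intro x hx
    have : 0 ≤ c * (x - x') := mul_nonneg hc.le (by simpa using hx)
    simp only [hg]; linarith
  have hderiv : ∀ x ∈ Set.Ici x',
      HasDerivAt (fun x => -(c * g x)⁻¹) ((g x ^ 2)⁻¹) x := by
    intro x hx
    have h1 : HasDerivAt (fun x : ℝ => c * g x) (c * c) x := by
      have : HasDerivAt g c x := by
        simpa [hg] using ((hasDerivAt_id x).sub_const x').const_mul c |>.const_add K
      simpa using this.const_mul c
    have hne : c * g x ≠ 0 := (mul_pos hc (hgpos x hx)).ne'
    have h2 := (h1.inv hne).neg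
    have hgx : g x ≠ 0 := (hgpos x hx).ne'
    have h3 : HasDerivAt (fun x => -(c * g x)⁻¹) (-(-(c * c) / (c * g x) ^ 2)) x := h2
    convert h3 using 1
    rw [neg_div, neg_neg, mul_pow]
    field_simp
  have htend : Tendsto (fun x => -(c * g x)⁻¹) atTop (𝓝 0) := by
    have h1 : Tendsto g atTop atTop := by
      apply tendsto_atTop_add_const_left
      have : Tendsto (fun x : ℝ => c * (x - x')) atTop atTop :=
        Tendsto.const_mul_atTop hc (tendsto_atTop_add_const_right _ _ tendsto_id)
      exact this
    have h2 : Tendsto (fun x => c * g x) atTop atTop := Tendsto.const_mul_atTop hc h1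
    have := h2.inv_tendsto_atTop
    simpa using this.neg
  have hint : IntegrableOn (fun x => (g x ^ 2)⁻¹) (Set.Ioi x') :=
    integrableOn_Ioi_deriv_of_nonneg ((hderiv x' Set.self_mem_Ici).continuousAt.continuousWithinAt)
      (fun x hx => hderiv x (Set.mem_Ioi.mp hx).le) (fun x _ => by positivity) htend
  have hval : ∫ x in Set.Ioi x', (g x ^ 2)⁻¹ = 1 / (c * K) := by
    rw [integral_Ioi_of_hasDerivAt_of_tendsto ((hderiv x' Set.self_mem_Ici).continuousAt.continuousWithinAt)
      (fun x hx => hderiv x (Set.mem_Ioi.mp hx).le) hint htend]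
    have : g x' = K := by simp [hg]
    rw [this]
    field_simp
    ring
  rw [← ofReal_integral_eq_lintegral_ofReal hint (ae_of_all _ fun t => by positivity), hval]

end aux


section string
variable {μ : Measure ℝ} {lam : ℝ} {φ : ℝ → ℝ}

lemma fin1 (hμ : IsEntrance μ) (hφmeas : Measurable φ)
    (hφ : ∀ x, belowL μ x → φ x = 1 - lam * ∫ y in Set.Iic x, (x - y) * φ y ∂μ)
    (hφ1 : ∀ x, belowL μ x → 1 ≤ φ x)
    (hφmono : ∀ x y : ℝ, belowL μ y → x ≤ y → φ x ≤ φ y) :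
    ∀ x, belowL μ x → (∫⁻ y in Set.Iic x, ENNReal.ofReal ((x - y) * φ y) ∂μ) < ⊤ := by
  intro x hx
  by_contra h
  push_neg at h
  have htop : (∫⁻ y in Set.Iic x, ENNReal.ofReal ((x - y) * φ y) ∂μ) = ⊤ := top_le_iff.mp h
  obtain ⟨x'', hxx'', hbx''⟩ := belowL_exists_gt hx
  have h2 : (∫⁻ y in Set.Iic x'', ENNReal.ofReal ((x'' - y) * φ y) ∂μ) = ⊤ := by
    rw [eq_top_iff, ← htop]
    calc ∫⁻ y in Set.Iic x, ENNReal.ofReal ((x - y) * φ y) ∂μ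
        ≤ ∫⁻ y in Set.Iic x, ENNReal.ofReal ((x'' - y) * φ y) ∂μ := by
          apply setLIntegral_mono (by fun_prop)
          intro y hy
          apply ENNReal.ofReal_le_ofReal
          have h1 : (1:ℝ) ≤ φ y := hφ1 y (belowL_mono hx hy)
          have : x - y ≤ x'' - y := by linarith
          nlinarith
      _ ≤ _ := lintegral_mono_set (Set.Iic_subset_Iic.mpr hxx''.le)
  have hnoint : ¬ Integrable (fun y => (x'' - y) * φ y) (μ.restrict (Set.Iic x'')) := by
    intro hint
    have := (lintegral_ofReal_le_lintegral_enorm (fun y => (x'' - y) * φ y)).trans_lt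
      hint.2
    rw [h2] at this
    exact absurd this (lt_irrefl _)
  have hφx'' : φ x'' = 1 := by
    rw [hφ x'' hbx'', integral_undef hnoint, mul_zero, sub_zero]
  have hφ1' : ∀ y ∈ Set.Iic x, φ y = 1 := by
    intro y hy
    have hby : belowL μ y := belowL_mono hx hy
    have := hφmono y x'' hbx'' (le_trans hy hxx''.le)
    have := hφ1 y hby
    linarith [hφx'' ▸ hφmono y x'' hbx'' (le_trans hy hxx''.le)]
  have : (∫⁻ y in Set.Iic x, ENNReal.ofReal ((x - y) * φ y) ∂μ)
      = ∫⁻ y in Set.Iic x, ENNReal.ofReal (x - y) ∂μ := by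
    apply setLIntegral_congr_fun measurableSet_Iic
    exact fun y hy => by simp only [hφ1' y hy, mul_one]
  rw [this] at htop
  exact absurd htop (hμ x hx).ne

lemma int1 (hμ : IsEntrance μ) (hφmeas : Measurable φ)
    (hφ : ∀ x, belowL μ x → φ x = 1 - lam * ∫ y in Set.Iic x, (x - y) * φ y ∂μ)
    (hφ1 : ∀ x, belowL μ x → 1 ≤ φ x)
    (hφmono : ∀ x y : ℝ, belowL μ y → x ≤ y → φ x ≤ φ y) :
    ∀ x, belowL μ x → IntegrableOn (fun y => (x - y) * φ y) (Set.Iic x) μ := by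
  intro x hx
  refine ⟨(by fun_prop : Measurable fun y => (x - y) * φ y).aestronglyMeasurable, ?_⟩
  rw [hasFiniteIntegral_iff_ofReal]
  · exact fin1 hμ hφmeas hφ hφ1 hφmono x hx
  · filter_upwards [ae_restrict_mem measurableSet_Iic] with y hy
    have h1 : (1:ℝ) ≤ φ y := hφ1 y (belowL_mono hx hy)
    have : (0:ℝ) ≤ x - y := by simpa using hy
    show (0:ℝ) ≤ (x - y) * φ y
    nlinarith

lemma fin2 (hμ : IsEntrance μ) (hφmeas : Measurable φ)
    (hφ : ∀ x, belowL μ x → φ x = 1 - lam * ∫ y in Set.Iic x, (x - y) * φ y ∂μ)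
    (hφ1 : ∀ x, belowL μ x → 1 ≤ φ x)
    (hφmono : ∀ x y : ℝ, belowL μ y → x ≤ y → φ x ≤ φ y) :
    ∀ x, belowL μ x → (∫⁻ y in Set.Iic x, ENNReal.ofReal (φ y) ∂μ) < ⊤ := by
  intro x hx
  obtain ⟨x', hxx', hbx'⟩ := belowL_exists_gt hx
  have key : (∫⁻ y in Set.Iic x, ENNReal.ofReal (φ y) ∂μ)
      ≤ ENNReal.ofReal ((x' - x)⁻¹) * ∫⁻ y in Set.Iic x', ENNReal.ofReal ((x' - y) * φ y) ∂μ := by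
    calc (∫⁻ y in Set.Iic x, ENNReal.ofReal (φ y) ∂μ)
        ≤ ∫⁻ y in Set.Iic x, ENNReal.ofReal ((x' - x)⁻¹ * ((x' - y) * φ y)) ∂μ := by
          apply setLIntegral_mono (by fun_prop)
          intro y hy
          apply ENNReal.ofReal_le_ofReal
          have h1 : (1:ℝ) ≤ φ y := hφ1 y (belowL_mono hx hy)
          have h2 : x' - x ≤ x' - y := by simp at hy; linarith
          rw [le_inv_mul_iff₀ (by linarith : (0:ℝ) < x' - x)]
          nlinarith
      _ = ENNReal.ofReal ((x' - x)⁻¹) * ∫⁻ y in Set.Iic x, ENNReal.ofReal ((x' - y) * φ y) ∂μ := by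
          rw [← lintegral_const_mul' _ _ ENNReal.ofReal_ne_top]
          congr 1
          ext y
          rw [ENNReal.ofReal_mul (inv_nonneg.mpr (by linarith))]
      _ ≤ _ := by
          gcongr
  exact key.trans_lt (ENNReal.mul_lt_top ENNReal.ofReal_lt_top
    (fin1 hμ hφmeas hφ hφ1 hφmono x' hbx'))

lemma int2 (hμ : IsEntrance μ) (hφmeas : Measurable φ)
    (hφ : ∀ x, belowL μ x → φ x = 1 - lam * ∫ y in Set.Iic x, (x - y) * φ y ∂μ)
    (hφ1 : ∀ x, belowL μ x → 1 ≤ φ x)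
    (hφmono : ∀ x y : ℝ, belowL μ y → x ≤ y → φ x ≤ φ y) :
    ∀ x, belowL μ x → IntegrableOn φ (Set.Iic x) μ := by
  intro x hx
  refine ⟨hφmeas.aestronglyMeasurable, ?_⟩
  rw [hasFiniteIntegral_iff_ofReal]
  · exact fin2 hμ hφmeas hφ hφ1 hφmono x hx
  · filter_upwards [ae_restrict_mem measurableSet_Iic] with y hy
    exact le_trans zero_le_one (hφ1 y (belowL_mono hx hy))

/-- growth estimate: `φ x ≥ φ x' + φ' a (x - x')`. -/
lemma growth (hμ : IsEntrance μ) (hlam : lam < 0) (hφmeas : Measurable φ)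
    (hφ : ∀ x, belowL μ x → φ x = 1 - lam * ∫ y in Set.Iic x, (x - y) * φ y ∂μ)
    (hφ1 : ∀ x, belowL μ x → 1 ≤ φ x)
    (hφmono : ∀ x y : ℝ, belowL μ y → x ≤ y → φ x ≤ φ y)
    {a x' x : ℝ} (ha : belowL μ a) (hax' : a ≤ x') (hx'x : x' ≤ x) (hx : belowL μ x) :
    φ x' + ((-lam) * ∫ y in Set.Iic a, φ y ∂μ) * (x - x') ≤ φ x := by
  have hbx' : belowL μ x' := belowL_mono hx hx'x
  have e1 := hφ x hx
  have e2 := hφ x' hbx'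
  set A := ∫ y in Set.Iic x, (x - y) * φ y ∂μ with hA
  set B := ∫ y in Set.Iic x', (x' - y) * φ y ∂μ with hB
  set C := ∫ y in Set.Iic x', φ y ∂μ with hC
  set D := ∫ y in Set.Iic a, φ y ∂μ with hD
  have hφnonneg : (0 : ℝ → ℝ) ≤ᵐ[μ.restrict (Set.Iic x)] fun y => (x - y) * φ y := by
    filter_upwards [ae_restrict_mem measurableSet_Iic] with y hy
    have h1 : (1:ℝ) ≤ φ y := hφ1 y (belowL_mono hx hy)
    have : (0:ℝ) ≤ x - y := by simpa using hy
    show (0:ℝ) ≤ (x - y) * φ y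
    nlinarith
  have i1 : (∫ y in Set.Iic x', (x - y) * φ y ∂μ) ≤ A :=
    setIntegral_mono_set (int1 hμ hφmeas hφ hφ1 hφmono x hx) hφnonneg
      (HasSubset.Subset.eventuallyLE (Set.Iic_subset_Iic.mpr hx'x))
  have i2 : (∫ y in Set.Iic x', (x - y) * φ y ∂μ) = B + (x - x') * C := by
    have : ∀ y : ℝ, (x - y) * φ y = (x' - y) * φ y + (x - x') * φ y := fun y => by ring
    rw [show (fun y => (x - y) * φ y) = fun y => (x' - y) * φ y + (x - x') * φ y from funext this]
    rw [integral_add (int1 hμ hφmeas hφ hφ1 hφmono x' hbx')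
      ((int2 hμ hφmeas hφ hφ1 hφmono x' hbx').const_mul _), integral_const_mul]
  have i4 : D ≤ C :=
    setIntegral_mono_set (int2 hμ hφmeas hφ hφ1 hφmono x' hbx')
      (by filter_upwards [ae_restrict_mem measurableSet_Iic] with y hy
          exact le_trans zero_le_one (hφ1 y (belowL_mono hbx' hy)))
      (HasSubset.Subset.eventuallyLE (Set.Iic_subset_Iic.mpr hax'))
  have hD0 : 0 ≤ D := by
    rw [hD]
    apply integral_nonneg_of_ae
    filter_upwards [ae_restrict_mem measurableSet_Iic] with y hy
    exact le_trans zero_le_one (hφ1 y (belowL_mono ha hy))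
  have hkey : B + (x - x') * D ≤ A := by nlinarith
  rw [e1, e2]
  nlinarith

end string


lemma core {μ : Measure ℝ} {φ : ℝ → ℝ} (hφmeas : Measurable φ)
    {a c : ℝ} (hc : 0 < c)
    (hgrow : ∀ x' x : ℝ, a ≤ x' → x' ≤ x → belowL μ x → φ x' + c * (x - x') ≤ φ x)
    {K : ℝ} (hK : 1 ≤ K) :
    (∫⁻ x in {x : ℝ | a < x ∧ belowL μ x ∧ K ≤ φ x}, ENNReal.ofReal ((φ x ^ 2)⁻¹)) ≤
      ENNReal.ofReal (1 / (c * K)) := by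
  have hK0 : (0:ℝ) < K := lt_of_lt_of_le one_pos hK
  set S' := {x : ℝ | a < x ∧ belowL μ x ∧ K ≤ φ x} with hS'def
  have hS' : MeasurableSet S' := by
    have : S' = Set.Ioi a ∩ ({x | belowL μ x} ∩ φ ⁻¹' Set.Ici K) := by
      ext x; simp [hS'def, and_assoc]
    rw [this]
    exact measurableSet_Ioi.inter ((measurableSet_belowL μ).inter (hφmeas measurableSet_Ici))
  rcases Set.eq_empty_or_nonempty S' with hemp | hne
  · rw [hemp]; simp
  apply ENNReal.le_of_forall_pos_le_add
  intro ε hε _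
  set b := sInf S' with hb
  have hbdd : BddBelow S' := ⟨a, fun z hz => hz.1.le⟩
  obtain ⟨x', hx'S, hx'lt⟩ := Real.lt_sInf_add_pos hne (by exact_mod_cast hε : (0:ℝ) < (ε:ℝ))
  obtain ⟨hax', hbx', hKx'⟩ := hx'S
  have split : S' = (S' ∩ Set.Iio x') ∪ (S' ∩ Set.Ici x') := by
    rw [← Set.inter_union_distrib_left, Set.Iio_union_Ici, Set.inter_univ]
  have hsplit : (∫⁻ x in S', ENNReal.ofReal ((φ x ^ 2)⁻¹)) ≤
      (∫⁻ x in S' ∩ Set.Iio x', ENNReal.ofReal ((φ x ^ 2)⁻¹)) +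
      (∫⁻ x in S' ∩ Set.Ici x', ENNReal.ofReal ((φ x ^ 2)⁻¹)) := by
    nth_rewrite 1 [split]
    exact lintegral_union_le _ _ _
  have hp1 : (∫⁻ x in S' ∩ Set.Iio x', ENNReal.ofReal ((φ x ^ 2)⁻¹)) ≤ (ε : ℝ≥0∞) := by
    calc (∫⁻ x in S' ∩ Set.Iio x', ENNReal.ofReal ((φ x ^ 2)⁻¹))
        ≤ ∫⁻ _ in S' ∩ Set.Iio x', 1 := by
          apply setLIntegral_mono measurable_const
          intro x hx
          apply ENNReal.ofReal_le_one.mpr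
          have hKx : K ≤ φ x := hx.1.2.2
          have : (1:ℝ) ≤ φ x ^ 2 := by nlinarith
          rw [inv_le_one_iff₀]; right; exact this
      _ = volume (S' ∩ Set.Iio x') := setLIntegral_one _
      _ ≤ volume (Set.Ico b x') := by
          apply measure_mono
          rintro z ⟨hzS, hz⟩
          exact ⟨csInf_le hbdd hzS, hz⟩
      _ = ENNReal.ofReal (x' - b) := Real.volume_Ico
      _ ≤ (ε : ℝ≥0∞) := by
          rw [← ENNReal.ofReal_coe_nnreal]
          exact ENNReal.ofReal_le_ofReal (by linarith)
  have hp2 : (∫⁻ x in S' ∩ Set.Ici x', ENNReal.ofReal ((φ x ^ 2)⁻¹)) ≤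
      ENNReal.ofReal (1 / (c * K)) := by
    calc (∫⁻ x in S' ∩ Set.Ici x', ENNReal.ofReal ((φ x ^ 2)⁻¹))
        ≤ ∫⁻ x in S' ∩ Set.Ici x', ENNReal.ofReal (((K + c * (x - x')) ^ 2)⁻¹) := by
          apply setLIntegral_mono (by fun_prop)
          rintro x ⟨⟨hax, hbx, hKx⟩, hx'x⟩
          have hx'x : x' ≤ x := hx'x
          have h1 : K + c * (x - x') ≤ φ x := by
            have := hgrow x' x hax'.le hx'x hbx
            linarith
          have h2 : (0:ℝ) < K + c * (x - x') := by nlinarith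
          apply ENNReal.ofReal_le_ofReal
          have hsq : (K + c * (x - x')) ^ 2 ≤ φ x ^ 2 := by nlinarith
          exact inv_anti₀ (by positivity) hsq
      _ ≤ ∫⁻ x in Set.Ici x', ENNReal.ofReal (((K + c * (x - x')) ^ 2)⁻¹) :=
          lintegral_mono_set Set.inter_subset_right
      _ = ∫⁻ x in Set.Ioi x', ENNReal.ofReal (((K + c * (x - x')) ^ 2)⁻¹) := by
          rw [Measure.restrict_congr_set Ioi_ae_eq_Ici]
      _ = ENNReal.ofReal (1 / (c * K)) := lintegral_inv_sq_Ioi hK0 hc x'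
  calc (∫⁻ x in S', ENNReal.ofReal ((φ x ^ 2)⁻¹)) ≤ _ := hsplit
    _ ≤ (ε : ℝ≥0∞) + ENNReal.ofReal (1 / (c * K)) := add_le_add hp1 hp2
    _ = ENNReal.ofReal (1 / (c * K)) + ε := add_comm _ _


theorem stmt_12 (μ : Measure ℝ) (hμ : IsEntrance μ)
    (lam : ℝ) (hlam : lam < 0)
    (φ : ℝ → ℝ) (hφmeas : Measurable φ)
    (hφ : ∀ x, belowL μ x → φ x = 1 - lam * ∫ y in Set.Iic x, (x - y) * φ y ∂μ)
    (hφ1 : ∀ x, belowL μ x → 1 ≤ φ x)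
    (hφmono : ∀ x y : ℝ, belowL μ y → x ≤ y → φ x ≤ φ y)
    -- the (right) derivative `φ_λ'(x) = (-λ) ∫_{(-∞,x]} φ_λ(y) dμ(y)`
    (φ' : ℝ → ℝ) (hφ' : ∀ x, φ' x = (-lam) * ∫ y in Set.Iic x, φ y ∂μ)
    (a : ℝ) (ha : belowL μ a) (hφ'a : 0 < φ' a)
    (ψ : ℝ → ℝ) (hψmeas : Measurable ψ)
    (hψ0 : ∀ t : ℝ, 0 ≤ t → 0 ≤ ψ t) (hψmono : MonotoneOn ψ (Set.Ici 0)) :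
    (∫⁻ x in {x : ℝ | a < x ∧ belowL μ x},
        ENNReal.ofReal (ψ (Real.log (φ x) / (-lam)) * (φ x ^ 2)⁻¹)) ≤
      ENNReal.ofReal ((-lam) / φ' a) *
        ∫⁻ t in Set.Ioi (0:ℝ), ENNReal.ofReal (ψ t * Real.exp (lam * t)) := by
  have hl : (0:ℝ) < -lam := by linarith
  have hln : lam ≠ 0 := hlam.ne
  set c := φ' a with hcdef
  have hc : 0 < c := hφ'a
  have hcn : c ≠ 0 := hc.ne'
  have hgrow : ∀ x' x : ℝ, a ≤ x' → x' ≤ x → belowL μ x → φ x' + c * (x - x') ≤ φ x := by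
    intro x' x h1 h2 h3
    have := growth hμ hlam hφmeas hφ hφ1 hφmono ha h1 h2 h3
    rw [hcdef, hφ' a]
    exact this
  have hcore : ∀ K : ℝ, 1 ≤ K →
      (∫⁻ x in {x : ℝ | a < x ∧ belowL μ x ∧ K ≤ φ x}, ENNReal.ofReal ((φ x ^ 2)⁻¹)) ≤
        ENNReal.ofReal (1 / (c * K)) := fun K hK => core hφmeas hc hgrow hK
  have hφpos : ∀ x, belowL μ x → 0 < φ x := fun x hx => lt_of_lt_of_le one_pos (hφ1 x hx)
  set T : ℝ → ℝ := fun x => Real.log (φ x) / (-lam) with hTdef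
  have hTmeas : Measurable T := (hφmeas.log).div_const _
  set S : Set ℝ := {x : ℝ | a < x ∧ belowL μ x} with hSdef
  have hS : MeasurableSet S := by
    have : S = Set.Ioi a ∩ {x | belowL μ x} := by ext x; simp [hSdef, Set.mem_Ioi, and_comm]
    rw [this]; exact measurableSet_Ioi.inter (measurableSet_belowL μ)
  have hT0 : ∀ x ∈ S, 0 ≤ T x := fun x hx =>
    div_nonneg (Real.log_nonneg (hφ1 x hx.2)) hl.le
  have hTiff : ∀ s : ℝ, 0 ≤ s → ∀ x, belowL μ x →
      (s ≤ T x ↔ Real.exp ((-lam) * s) ≤ φ x) := by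
    intro s hs x hx
    rw [hTdef]
    simp only
    rw [le_div_iff₀ hl]
    constructor
    · intro h
      calc Real.exp ((-lam) * s) = Real.exp (s * (-lam)) := by rw [mul_comm]
        _ ≤ Real.exp (Real.log (φ x)) := Real.exp_le_exp.mpr h
        _ = φ x := Real.exp_log (hφpos x hx)
    · intro h
      have h2 := Real.log_le_log (Real.exp_pos _) h
      rw [Real.log_exp] at h2
      linarith [mul_comm s (-lam) ▸ h2]
  -- monotone right-continuous majorant of ψ
  set ψt : ℝ → ℝ := fun t => ψ (max t 0) with hψtdef
  have hψt_mono : Monotone ψt := fun s t hst =>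
    hψmono (le_max_right s 0) (le_max_right t 0) (max_le_max hst le_rfl)
  set ψp := hψt_mono.stieltjesFunction with hψpdef
  have hψp_eq : ∀ t, ψp t = Function.rightLim ψt t := fun t => hψt_mono.stieltjesFunction_eq t
  have h_le : ∀ t, ψt t ≤ ψp t := fun t => (hψp_eq t) ▸ Monotone.le_rightLim hψt_mono le_rfl
  have hψt0 : ∀ t, 0 ≤ ψt t := fun t => hψ0 _ (le_max_right t 0)
  have h_nonneg : ∀ t, 0 ≤ ψp t := fun t => le_trans (hψt0 t) (h_le t)
  set ν := ψp.measure with hνdef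
  have hdecomp : ∀ t : ℝ, 0 ≤ t →
      ENNReal.ofReal (ψp t) = ENNReal.ofReal (ψp 0) + ν (Set.Ioc 0 t) := by
    intro t ht
    rw [hνdef, ψp.measure_Ioc, ← ENNReal.ofReal_add (h_nonneg 0) (sub_nonneg.mpr (ψp.mono ht))]
    congr 1
    ring
  have hae : ψt =ᵐ[volume] fun t => ψp t := by
    have hcount : Set.Countable {t | ¬ContinuousAt ψt t} :=
      hψt_mono.countable_not_continuousAt
    rw [Filter.EventuallyEq, ae_iff]
    apply measure_mono_null _ (hcount.measure_zero volume)
    intro t ht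
    simp only [Set.mem_setOf_eq] at *
    intro hcont
    apply ht
    rw [hψp_eq]
    exact (hψt_mono.continuousWithinAt_Ioi_iff_rightLim_eq.1 hcont.continuousWithinAt).symm
  -- the weight function
  set h : ℝ → ℝ≥0∞ := fun x => ENNReal.ofReal ((φ x ^ 2)⁻¹) with hhdef
  have hhmeas : Measurable h := ((hφmeas.pow_const 2).inv).ennreal_ofReal
  have hψpmeas : Measurable (fun t : ℝ => ψp t) := ψp.mono.measurable
  -- STEP 1
  have step1 : (∫⁻ x in S, ENNReal.ofReal (ψ (Real.log (φ x) / (-lam)) * (φ x ^ 2)⁻¹)) ≤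
      ∫⁻ x in S, ENNReal.ofReal (ψp (T x)) * h x := by
    apply setLIntegral_mono ((hψpmeas.comp hTmeas).ennreal_ofReal.mul hhmeas)
    intro x hx
    have h0 : 0 ≤ T x := hT0 x hx
    have : ψ (Real.log (φ x) / (-lam)) = ψt (T x) := by
      rw [hψtdef]; simp only [hTdef]; rw [max_eq_left h0]
    rw [this, ENNReal.ofReal_mul (hψt0 _)]
    exact mul_le_mul_left (ENNReal.ofReal_le_ofReal (h_le _)) _
  -- STEP 2
  have step2 : (∫⁻ x in S, ENNReal.ofReal (ψp (T x)) * h x) =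
      ∫⁻ x in S, (ENNReal.ofReal (ψp 0) + ν (Set.Ioc 0 (T x))) * h x :=
    setLIntegral_congr_fun hS (fun x hx => by simp only [hdecomp _ (hT0 x hx)])
  -- STEP 3
  have step3 : (∫⁻ x in S, (ENNReal.ofReal (ψp 0) + ν (Set.Ioc 0 (T x))) * h x) =
      ENNReal.ofReal (ψp 0) * (∫⁻ x in S, h x) +
        ∫⁻ x in S, ν (Set.Ioc 0 (T x)) * h x := by
    simp_rw [add_mul]
    rw [lintegral_add_left (hhmeas.const_mul _), lintegral_const_mul _ hhmeas]
  -- STEP 4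
  have step4 : (∫⁻ x in S, h x) ≤ ENNReal.ofReal (1 / c) := by
    have hSeq : S = {x : ℝ | a < x ∧ belowL μ x ∧ (1:ℝ) ≤ φ x} := by
      ext x
      constructor
      · rintro ⟨h1, h2⟩; exact ⟨h1, h2, hφ1 x h2⟩
      · rintro ⟨h1, h2, _⟩; exact ⟨h1, h2⟩
    calc (∫⁻ x in S, h x)
        = ∫⁻ x in {x : ℝ | a < x ∧ belowL μ x ∧ (1:ℝ) ≤ φ x}, ENNReal.ofReal ((φ x ^ 2)⁻¹) := by
          rw [← hSeq]
      _ ≤ ENNReal.ofReal (1 / (c * 1)) := hcore 1 le_rfl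
      _ = ENNReal.ofReal (1 / c) := by norm_num
  -- STEP 5 : Tonelli swap for the second term
  set F : ℝ → ℝ → ℝ≥0∞ := fun x s => if 0 < s ∧ s ≤ T x then h x else 0 with hFdef
  have hFmeas : Measurable (Function.uncurry F) := by
    have hset : MeasurableSet {p : ℝ × ℝ | 0 < p.2 ∧ p.2 ≤ T p.1} := by
      apply MeasurableSet.inter
      · exact measurable_snd measurableSet_Ioi
      · exact measurableSet_le measurable_snd (hTmeas.comp measurable_fst)
    exact Measurable.ite hset (hhmeas.comp measurable_fst) measurable_const
  have hrepr : ∀ x, (∫⁻ s, F x s ∂ν) = ν (Set.Ioc 0 (T x)) * h x := by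
    intro x
    calc (∫⁻ s, F x s ∂ν)
        = ∫⁻ s, (Set.Ioc (0:ℝ) (T x)).indicator (fun _ => h x) s ∂ν := by
          apply lintegral_congr
          intro s
          simp [hFdef, Set.indicator_apply, Set.mem_Ioc]
      _ = ∫⁻ _ in Set.Ioc (0:ℝ) (T x), h x ∂ν := lintegral_indicator measurableSet_Ioc _
      _ = h x * ν (Set.Ioc 0 (T x)) := setLIntegral_const _ _
      _ = ν (Set.Ioc 0 (T x)) * h x := mul_comm _ _
  have hswap : (∫⁻ x in S, ν (Set.Ioc 0 (T x)) * h x) = ∫⁻ s, (∫⁻ x in S, F x s) ∂ν := by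
    calc (∫⁻ x in S, ν (Set.Ioc 0 (T x)) * h x)
        = ∫⁻ x in S, (∫⁻ s, F x s ∂ν) := by
          apply lintegral_congr; intro x; rw [hrepr]
      _ = ∫⁻ s, (∫⁻ x in S, F x s) ∂ν := lintegral_lintegral_swap hFmeas.aemeasurable
  have hinner : ∀ s : ℝ, (∫⁻ x in S, F x s) ≤
      (Set.Ioi (0:ℝ)).indicator (fun s => ENNReal.ofReal (Real.exp (lam * s) / c)) s := by
    intro s
    by_cases hs : 0 < s
    · rw [Set.indicator_of_mem (Set.mem_Ioi.mpr hs)]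
      set K := Real.exp ((-lam) * s) with hKdef
      have hK1 : 1 ≤ K := Real.one_le_exp (by positivity)
      calc (∫⁻ x in S, F x s)
          = ∫⁻ x in S, ({x : ℝ | s ≤ T x}).indicator h x := by
            apply lintegral_congr
            intro x
            simp [hFdef, Set.indicator_apply, hs]
        _ = ∫⁻ x in {x : ℝ | s ≤ T x} ∩ S, h x := by
            have hms : MeasurableSet {x : ℝ | s ≤ T x} := measurableSet_le measurable_const hTmeas
            rw [lintegral_indicator hms, Measure.restrict_restrict hms]
        _ = ∫⁻ x in {x : ℝ | a < x ∧ belowL μ x ∧ K ≤ φ x}, ENNReal.ofReal ((φ x ^ 2)⁻¹) := by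
            have hsq : {x : ℝ | s ≤ T x} ∩ S = {x : ℝ | a < x ∧ belowL μ x ∧ K ≤ φ x} := by
              ext x
              simp only [Set.mem_inter_iff, Set.mem_setOf_eq, hSdef]
              constructor
              · rintro ⟨h1, h2, h3⟩; exact ⟨h2, h3, (hTiff s hs.le x h3).1 h1⟩
              · rintro ⟨h1, h2, h3⟩; exact ⟨(hTiff s hs.le x h2).2 h3, h1, h2⟩
            rw [hsq]
        _ ≤ ENNReal.ofReal (1 / (c * K)) := hcore K hK1
        _ = ENNReal.ofReal (Real.exp (lam * s) / c) := by
            congr 1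
            rw [hKdef, show lam * s = -((-lam) * s) by ring, Real.exp_neg]
            field_simp
            try ring
    · rw [Set.indicator_of_notMem (by simp [Set.mem_Ioi]; exact le_of_not_gt hs)]
      have : ∀ x, F x s = 0 := fun x => by simp [hFdef, hs]
      simp [this]
  have step5 : (∫⁻ x in S, ν (Set.Ioc 0 (T x)) * h x) ≤
      ∫⁻ s in Set.Ioi (0:ℝ), ENNReal.ofReal (Real.exp (lam * s) / c) ∂ν := by
    rw [hswap, ← lintegral_indicator measurableSet_Ioi]
    exact lintegral_mono hinner
  -- RHS computation
  have r1 : (∫⁻ t in Set.Ioi (0:ℝ), ENNReal.ofReal (ψ t * Real.exp (lam * t))) =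
      ∫⁻ t in Set.Ioi (0:ℝ), ENNReal.ofReal (ψp t) * ENNReal.ofReal (Real.exp (lam * t)) := by
    apply lintegral_congr_ae
    filter_upwards [ae_restrict_of_ae hae, ae_restrict_mem measurableSet_Ioi] with t ht1 ht2
    have hψeq : ψ t = ψp t := by
      rw [← ht1, hψtdef]; simp [max_eq_left (le_of_lt (Set.mem_Ioi.mp ht2))]
    rw [ENNReal.ofReal_mul (hψ0 t (le_of_lt (Set.mem_Ioi.mp ht2))), hψeq]
  have hEmeas : Measurable (fun t : ℝ => ENNReal.ofReal (Real.exp (lam * t))) :=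
    ((measurable_const.mul measurable_id).exp).ennreal_ofReal
  have r2 : (∫⁻ t in Set.Ioi (0:ℝ), ENNReal.ofReal (ψp t) * ENNReal.ofReal (Real.exp (lam * t))) =
      ENNReal.ofReal (ψp 0) * (∫⁻ t in Set.Ioi (0:ℝ), ENNReal.ofReal (Real.exp (lam * t))) +
        ∫⁻ t in Set.Ioi (0:ℝ), ν (Set.Ioc 0 t) * ENNReal.ofReal (Real.exp (lam * t)) := by
    rw [← lintegral_const_mul _ hEmeas, ← lintegral_add_left (hEmeas.const_mul _)]
    apply setLIntegral_congr_fun measurableSet_Ioi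
    refine fun t ht => ?_
    simp only [hdecomp t (Set.mem_Ioi.mp ht).le, add_mul]
  have r3 : (∫⁻ t in Set.Ioi (0:ℝ), ENNReal.ofReal (Real.exp (lam * t))) =
      ENNReal.ofReal (1 / (-lam)) := by
    rw [lintegral_exp_Ioi hlam 0]
    norm_num
  -- second term of RHS via swap
  set G : ℝ → ℝ → ℝ≥0∞ := fun t s => if 0 < s ∧ s ≤ t then ENNReal.ofReal (Real.exp (lam * t))
    else 0 with hGdef
  have hGmeas : Measurable (Function.uncurry G) := by
    have hset : MeasurableSet {p : ℝ × ℝ | 0 < p.2 ∧ p.2 ≤ p.1} := by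
      apply MeasurableSet.inter
      · exact measurable_snd measurableSet_Ioi
      · exact measurableSet_le measurable_snd measurable_fst
    exact Measurable.ite hset (hEmeas.comp measurable_fst) measurable_const
  have hreprG : ∀ t, (∫⁻ s, G t s ∂ν) = ν (Set.Ioc 0 t) * ENNReal.ofReal (Real.exp (lam * t)) := by
    intro t
    calc (∫⁻ s, G t s ∂ν)
        = ∫⁻ s, (Set.Ioc (0:ℝ) t).indicator (fun _ => ENNReal.ofReal (Real.exp (lam * t))) s ∂ν := by
          apply lintegral_congr
          intro s
          simp [hGdef, Set.indicator_apply, Set.mem_Ioc]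
      _ = ∫⁻ _ in Set.Ioc (0:ℝ) t, ENNReal.ofReal (Real.exp (lam * t)) ∂ν :=
          lintegral_indicator measurableSet_Ioc _
      _ = ENNReal.ofReal (Real.exp (lam * t)) * ν (Set.Ioc 0 t) := setLIntegral_const _ _
      _ = ν (Set.Ioc 0 t) * ENNReal.ofReal (Real.exp (lam * t)) := mul_comm _ _
  have hinnerG : ∀ s : ℝ, (∫⁻ t in Set.Ioi (0:ℝ), G t s) =
      (Set.Ioi (0:ℝ)).indicator (fun s => ENNReal.ofReal (Real.exp (lam * s) / (-lam))) s := by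
    intro s
    by_cases hs : 0 < s
    · rw [Set.indicator_of_mem (Set.mem_Ioi.mpr hs)]
      calc (∫⁻ t in Set.Ioi (0:ℝ), G t s)
          = ∫⁻ t in Set.Ioi (0:ℝ), (Set.Ici s).indicator
              (fun t => ENNReal.ofReal (Real.exp (lam * t))) t := by
            apply lintegral_congr
            intro t
            simp [hGdef, Set.indicator_apply, Set.mem_Ici, hs]
        _ = ∫⁻ t in Set.Ici s ∩ Set.Ioi 0, ENNReal.ofReal (Real.exp (lam * t)) := by
            rw [lintegral_indicator measurableSet_Ici, Measure.restrict_restrict measurableSet_Ici]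
        _ = ∫⁻ t in Set.Ioi s, ENNReal.ofReal (Real.exp (lam * t)) := by
            rw [show Set.Ici s ∩ Set.Ioi (0:ℝ) = Set.Ici s from
              Set.inter_eq_left.mpr (fun t ht => lt_of_lt_of_le hs ht),
              Measure.restrict_congr_set Ioi_ae_eq_Ici]
        _ = ENNReal.ofReal (Real.exp (lam * s) / (-lam)) := lintegral_exp_Ioi hlam s
    · rw [Set.indicator_of_notMem (by simp [Set.mem_Ioi]; exact le_of_not_gt hs)]
      have : ∀ t, G t s = 0 := fun t => by simp [hGdef, hs]
      simp [this]
  have r4 : (∫⁻ t in Set.Ioi (0:ℝ), ν (Set.Ioc 0 t) * ENNReal.ofReal (Real.exp (lam * t))) =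
      ∫⁻ s in Set.Ioi (0:ℝ), ENNReal.ofReal (Real.exp (lam * s) / (-lam)) ∂ν := by
    calc (∫⁻ t in Set.Ioi (0:ℝ), ν (Set.Ioc 0 t) * ENNReal.ofReal (Real.exp (lam * t)))
        = ∫⁻ t in Set.Ioi (0:ℝ), (∫⁻ s, G t s ∂ν) := by
          apply lintegral_congr; intro t; rw [hreprG]
      _ = ∫⁻ s, (∫⁻ t in Set.Ioi (0:ℝ), G t s) ∂ν := lintegral_lintegral_swap hGmeas.aemeasurable
      _ = ∫⁻ s, (Set.Ioi (0:ℝ)).indicator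
            (fun s => ENNReal.ofReal (Real.exp (lam * s) / (-lam))) s ∂ν := by
          apply lintegral_congr; intro s; rw [hinnerG]
      _ = ∫⁻ s in Set.Ioi (0:ℝ), ENNReal.ofReal (Real.exp (lam * s) / (-lam)) ∂ν :=
          lintegral_indicator measurableSet_Ioi _
  -- combine RHS
  have hRHS : ENNReal.ofReal ((-lam) / c) *
      (∫⁻ t in Set.Ioi (0:ℝ), ENNReal.ofReal (ψ t * Real.exp (lam * t))) =
      ENNReal.ofReal (ψp 0) * ENNReal.ofReal (1 / c) +
        ∫⁻ s in Set.Ioi (0:ℝ), ENNReal.ofReal (Real.exp (lam * s) / c) ∂ν := by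
    rw [r1, r2, r3, r4, mul_add]
    congr 1
    · rw [← mul_assoc, mul_comm (ENNReal.ofReal ((-lam)/c)) (ENNReal.ofReal (ψp 0)), mul_assoc,
        ← ENNReal.ofReal_mul (by positivity : (0:ℝ) ≤ (-lam)/c)]
      congr 2
      field_simp
      try rw [mul_comm lam c]
      try exact div_self (mul_ne_zero hcn hln)
    · rw [← lintegral_const_mul' _ _ ENNReal.ofReal_ne_top]
      apply lintegral_congr
      intro s
      rw [← ENNReal.ofReal_mul (by positivity : (0:ℝ) ≤ (-lam)/c)]
      congr 1
      field_simp
      try ring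
  -- final assembly
  calc (∫⁻ x in S, ENNReal.ofReal (ψ (Real.log (φ x) / (-lam)) * (φ x ^ 2)⁻¹))
      ≤ ∫⁻ x in S, ENNReal.ofReal (ψp (T x)) * h x := step1
    _ = _ := step2
    _ = _ := step3
    _ ≤ ENNReal.ofReal (ψp 0) * ENNReal.ofReal (1 / c) +
          ∫⁻ s in Set.Ioi (0:ℝ), ENNReal.ofReal (Real.exp (lam * s) / c) ∂ν := by
        exact add_le_add (mul_le_mul_right step4 _) step5
    _ = ENNReal.ofReal ((-lam) / c) *
          ∫⁻ t in Set.Ioi (0:ℝ), ENNReal.ofReal (ψ t * Real.exp (lam * t)) := hRHS.symm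
end

section
/- Let φ satisfy (S.1), extended linearly to [1,∞), and let σ be a Borel measure on [0,∞) that is finite on compact sets. Define φ̃(ξ) := ∫_0^∞ e^{−tξ} φ(t) dt and p(t) := ∫_{[0,∞)} e^{−tξ} dσ(ξ). Then ∫_{[1,∞)} φ̃(ξ) dσ(ξ) < ∞ if and only if ∫_0^1 p(t) φ(t) dt < ∞. -/
open MeasureTheory

/-- The Laplace transform `p(t) = ∫_{[0,∞)} e^{-tξ} dσ(ξ)`, valued in `[0,∞]`. -/
noncomputable def lap (σ : Measure ℝ) (t : ℝ) : ENNReal :=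
  ∫⁻ ξ in Set.Ici (0:ℝ), ENNReal.ofReal (Real.exp (-t * ξ)) ∂σ

/-- `φ̃(ξ) = ∫_0^∞ e^{-tξ} φ(t) dt`, valued in `[0,∞]`. -/
noncomputable def phiTilde (φ : ℝ → ℝ) (ξ : ℝ) : ENNReal :=
  ∫⁻ t in Set.Ioi (0:ℝ), ENNReal.ofReal (Real.exp (-t * ξ) * φ t)

set_option maxHeartbeats 2000000 in
theorem stmt_16 (φ : ℝ → ℝ)
    -- (S.1), with the linear extension to `[1,∞)`
    (h0 : φ 0 = 0)
    (hmono : StrictMonoOn φ (Set.Ici 0))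
    (hconv : ConvexOn ℝ (Set.Ici 0) φ)
    (hlin : ∀ x : ℝ, 1 ≤ x → φ x = φ 1 + (φ 2 - φ 1) * (x - 1))
    (σ : Measure ℝ) (hσ0 : σ (Set.Iio 0) = 0)  -- a measure on [0,∞)
    [IsFiniteMeasureOnCompacts σ] :
    (∫⁻ ξ in Set.Ici (1:ℝ), phiTilde φ ξ ∂σ) < ⊤ ↔
      (∫⁻ t in Set.Ioc (0:ℝ) 1, lap σ t * ENNReal.ofReal (φ t)) < ⊤ := by
  classical
  have hσsf : SigmaFinite σ := inferInstance
  -- the monotone extension ψ of φ|_{[0,∞)}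
  set ψ : ℝ → ℝ := fun t => φ (max t 0) with hψdef
  have hmonoOn : MonotoneOn φ (Set.Ici 0) := hmono.monotoneOn
  have hψmono : Monotone ψ := fun a b hab =>
    hmonoOn (Set.mem_Ici.2 (le_max_right a 0)) (Set.mem_Ici.2 (le_max_right b 0))
      (max_le_max hab le_rfl)
  have hψmeas : Measurable ψ := hψmono.measurable
  have hψ_eq : ∀ t : ℝ, 0 < t → ψ t = φ t := fun t ht => by
    simp [hψdef, max_eq_left ht.le]
  have hψ0 : ∀ t, 0 ≤ ψ t := fun t => by
    have h := hmonoOn (Set.self_mem_Ici) (Set.mem_Ici.2 (le_max_right t 0)) (le_max_right t 0)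
    rw [h0] at h; exact h
  have hφ1pos : 0 < φ 1 := by
    have := hmono (Set.self_mem_Ici) (Set.mem_Ici.2 zero_le_one) zero_lt_one
    rwa [h0] at this
  have hφhalfpos : 0 < φ (1/2 : ℝ) := by
    have := hmono (Set.self_mem_Ici) (Set.mem_Ici.2 (by norm_num : (0:ℝ) ≤ 1/2)) (by norm_num)
    rwa [h0] at this
  have hbpos : 0 < φ 2 - φ 1 := by
    have := hmono (Set.mem_Ici.2 zero_le_one) (Set.mem_Ici.2 (by norm_num : (0:ℝ) ≤ 2))
      (by norm_num)
    linarith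
  set a : ℝ := φ 1 with ha
  set b : ℝ := φ 2 - φ 1 with hb
  -- the joint kernel
  set F : ℝ → ℝ → ENNReal := fun ξ t => ENNReal.ofReal (Real.exp (-t * ξ) * ψ t) with hFdef
  have hF : Measurable (Function.uncurry F) := by
    apply ENNReal.measurable_ofReal.comp
    exact ((measurable_snd.neg.mul measurable_fst).exp.mul (hψmeas.comp measurable_snd))
  have hFt : ∀ ξ : ℝ, Measurable fun t => F ξ t := fun ξ =>
    ENNReal.measurable_ofReal.comp ((measurable_id.neg.mul measurable_const).exp.mul hψmeas)
  have hψOR : Measurable fun t : ℝ => ENNReal.ofReal (ψ t) := hψmeas.ennreal_ofReal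
  have hexpOR : Measurable fun ξ : ℝ => ENNReal.ofReal (Real.exp (-ξ)) :=
    (measurable_id.neg.exp).ennreal_ofReal
  -- the two pieces of φ̃
  set inner1 : ℝ → ENNReal := fun ξ => ∫⁻ t in Set.Ioc (0:ℝ) 1, F ξ t with hinner1def
  set inner2 : ℝ → ENNReal := fun ξ => ∫⁻ t in Set.Ioi (1:ℝ), F ξ t with hinner2def
  have hinner1meas : Measurable inner1 := hF.lintegral_prod_right
  have hinner2meas : Measurable inner2 := hF.lintegral_prod_right
  have hphiT : ∀ ξ : ℝ, phiTilde φ ξ = inner1 ξ + inner2 ξ := by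
    intro ξ
    have h1 : phiTilde φ ξ = ∫⁻ t in Set.Ioi (0:ℝ), F ξ t := by
      refine setLIntegral_congr_fun measurableSet_Ioi (fun t ht => ?_)
      simp only [hFdef, hψ_eq t ht]
    rw [h1, ← Set.Ioc_union_Ioi_eq_Ioi (zero_le_one (α := ℝ)),
      lintegral_union measurableSet_Ioi Set.Ioc_disjoint_Ioi_same]
  set I : ENNReal := ∫⁻ ξ in Set.Ici (1:ℝ), inner1 ξ ∂σ with hIdef
  set J : ENNReal := ∫⁻ ξ in Set.Ici (1:ℝ), inner2 ξ ∂σ with hJdef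
  have hLHS : (∫⁻ ξ in Set.Ici (1:ℝ), phiTilde φ ξ ∂σ) = I + J := by
    rw [← lintegral_add_left hinner1meas]
    exact lintegral_congr fun ξ => hphiT ξ
  -- constants
  set c : ENNReal := ∫⁻ t in Set.Ioc (0:ℝ) 1, ENNReal.ofReal (ψ t) with hcdef
  set C : ENNReal := ∫⁻ t in Set.Ioi (1:ℝ), ENNReal.ofReal (Real.exp (1 - t) * ψ t) with hCdef
  set D : ENNReal := ∫⁻ ξ in Set.Ici (1:ℝ), ENNReal.ofReal (Real.exp (-ξ)) ∂σ with hDdef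
  have hc_pos : 0 < c := by
    have hsub : Set.Ioc (1/2 : ℝ) 1 ⊆ Set.Ioc 0 1 :=
      Set.Ioc_subset_Ioc (by norm_num) le_rfl
    have h1 : (∫⁻ t in Set.Ioc (1/2:ℝ) 1, ENNReal.ofReal (φ (1/2))) ≤
        ∫⁻ t in Set.Ioc (1/2:ℝ) 1, ENNReal.ofReal (ψ t) := by
      refine setLIntegral_mono' measurableSet_Ioc fun t ht => ?_
      refine ENNReal.ofReal_le_ofReal ?_
      have : ψ (1/2 : ℝ) ≤ ψ t := hψmono ht.1.le
      have h2 : ψ (1/2 : ℝ) = φ (1/2) := by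
        simp [hψdef, max_eq_left (by norm_num : (0:ℝ) ≤ 1/2)]
      linarith
    have h2 : (∫⁻ t in Set.Ioc (1/2:ℝ) 1, ENNReal.ofReal (φ (1/2)))
        = ENNReal.ofReal (φ (1/2)) * ENNReal.ofReal (1/2) := by
      rw [setLIntegral_const, Real.volume_Ioc]
      norm_num
    have h3 : (0:ENNReal) < ENNReal.ofReal (φ (1/2)) * ENNReal.ofReal (1/2) :=
      ENNReal.mul_pos (ENNReal.ofReal_pos.2 hφhalfpos).ne'
        (ENNReal.ofReal_pos.2 (by norm_num)).ne'
    calc (0:ENNReal) < ENNReal.ofReal (φ (1/2)) * ENNReal.ofReal (1/2) := h3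
      _ = ∫⁻ t in Set.Ioc (1/2:ℝ) 1, ENNReal.ofReal (φ (1/2)) := h2.symm
      _ ≤ ∫⁻ t in Set.Ioc (1/2:ℝ) 1, ENNReal.ofReal (ψ t) := h1
      _ ≤ c := lintegral_mono_set hsub
  have hc_lt_top : c < ⊤ := by
    have h1 : c ≤ ∫⁻ t in Set.Ioc (0:ℝ) 1, ENNReal.ofReal (φ 1) := by
      refine setLIntegral_mono' measurableSet_Ioc fun t ht => ?_
      refine ENNReal.ofReal_le_ofReal ?_
      have h2 : ψ t ≤ ψ 1 := hψmono ht.2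
      have h3 : ψ (1:ℝ) = φ 1 := by simp [hψdef]
      linarith
    refine lt_of_le_of_lt h1 ?_
    rw [setLIntegral_const, Real.volume_Ioc]
    exact ENNReal.mul_lt_top ENNReal.ofReal_lt_top ENNReal.ofReal_lt_top
  have hC_lt_top : C < ⊤ := by
    -- dominate by an integrable exponential
    have hint : IntegrableOn (fun t : ℝ => (a + 2*b) * Real.exp (1/2) * Real.exp (-(1/2) * t))
        (Set.Ioi 1) volume :=
      (exp_neg_integrableOn_Ioi 1 (by norm_num)).const_mul _
    have hle : C ≤ ∫⁻ t in Set.Ioi (1:ℝ),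
        ENNReal.ofReal ((a + 2*b) * Real.exp (1/2) * Real.exp (-(1/2) * t)) := by
      refine setLIntegral_mono' measurableSet_Ioi fun t ht => ?_
      refine ENNReal.ofReal_le_ofReal ?_
      have ht1 : (1:ℝ) < t := ht
      have hψt : ψ t = a + b * (t - 1) := by
        rw [hψ_eq t (lt_trans zero_lt_one ht1), hlin t ht1.le]
      rw [hψt]
      set s : ℝ := t - 1 with hs
      have hs0 : 0 ≤ s := by simp [hs]; linarith
      have he1 : 1 ≤ Real.exp (s/2) := Real.one_le_exp (by linarith)
      have he2 : s/2 ≤ Real.exp (s/2) := by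
        have := Real.add_one_le_exp (s/2); linarith
      have hkey : a + b * s ≤ (a + 2*b) * Real.exp (s/2) := by nlinarith
      have hexp1 : Real.exp (1 - t) = Real.exp (-s) := by rw [hs]; ring_nf
      have hexp2 : (a + 2*b) * Real.exp (1/2) * Real.exp (-(1/2) * t)
          = (a + 2*b) * Real.exp (s/2) * Real.exp (-s) := by
        rw [mul_assoc, mul_assoc, ← Real.exp_add, ← Real.exp_add]
        congr 2
        rw [hs]; ring
      rw [hexp1, hexp2]
      have hen : 0 < Real.exp (-s) := Real.exp_pos _
      calc Real.exp (-s) * (a + b * s) = (a + b * s) * Real.exp (-s) := by ring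
        _ ≤ (a + 2*b) * Real.exp (s/2) * Real.exp (-s) := by
            apply mul_le_mul_of_nonneg_right hkey hen.le
    exact lt_of_le_of_lt hle hint.lintegral_lt_top
  -- J ≤ C * D  (up to ordering of factors)
  have hmeas_expt : Measurable fun t : ℝ => ENNReal.ofReal (Real.exp (1 - t) * ψ t) :=
    (((measurable_const.sub measurable_id).exp).mul hψmeas).ennreal_ofReal
  have hJ_le : J ≤ D * C := by
    have hstep : ∀ ξ ∈ Set.Ici (1:ℝ), inner2 ξ ≤ ENNReal.ofReal (Real.exp (-ξ)) * C := by
      intro ξ hξ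
      have hξ1 : (1:ℝ) ≤ ξ := hξ
      have hpt : ∀ t ∈ Set.Ioi (1:ℝ),
          F ξ t ≤ ENNReal.ofReal (Real.exp (-ξ)) * ENNReal.ofReal (Real.exp (1 - t) * ψ t) := by
        intro t ht
        have ht1 : (1:ℝ) < t := ht
        rw [← ENNReal.ofReal_mul (Real.exp_pos _).le]
        refine ENNReal.ofReal_le_ofReal ?_
        have hee : Real.exp (-t * ξ) ≤ Real.exp (-ξ) * Real.exp (1 - t) := by
          rw [← Real.exp_add]
          apply Real.exp_le_exp.2
          nlinarith
        calc Real.exp (-t * ξ) * ψ t ≤ (Real.exp (-ξ) * Real.exp (1 - t)) * ψ t :=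
              mul_le_mul_of_nonneg_right hee (hψ0 t)
          _ = Real.exp (-ξ) * (Real.exp (1 - t) * ψ t) := by ring
      have h1 : inner2 ξ ≤ ∫⁻ t in Set.Ioi (1:ℝ),
          ENNReal.ofReal (Real.exp (-ξ)) * ENNReal.ofReal (Real.exp (1 - t) * ψ t) :=
        setLIntegral_mono (measurable_const.mul hmeas_expt) hpt
      rwa [lintegral_const_mul _ hmeas_expt] at h1
    calc J ≤ ∫⁻ ξ in Set.Ici (1:ℝ), ENNReal.ofReal (Real.exp (-ξ)) * C ∂σ :=
          setLIntegral_mono ((ENNReal.measurable_ofReal.comp measurable_id.neg.exp).mul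
            measurable_const) hstep
      _ = D * C := lintegral_mul_const _ hexpOR
  have hI_ge : D * c ≤ I := by
    have hstep : ∀ ξ ∈ Set.Ici (1:ℝ), ENNReal.ofReal (Real.exp (-ξ)) * c ≤ inner1 ξ := by
      intro ξ hξ
      have hξ1 : (1:ℝ) ≤ ξ := hξ
      have h1 : (∫⁻ t in Set.Ioc (0:ℝ) 1,
          ENNReal.ofReal (Real.exp (-ξ)) * ENNReal.ofReal (ψ t)) ≤ inner1 ξ := by
        refine setLIntegral_mono (hFt ξ) fun t ht => ?_
        rw [← ENNReal.ofReal_mul (Real.exp_pos _).le]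
        refine ENNReal.ofReal_le_ofReal ?_
        have hee : Real.exp (-ξ) ≤ Real.exp (-t * ξ) := by
          apply Real.exp_le_exp.2
          nlinarith [ht.1.le, ht.2, hξ1]
        exact mul_le_mul_of_nonneg_right hee (hψ0 t)
      rwa [lintegral_const_mul _ hψOR] at h1
    have : (∫⁻ ξ in Set.Ici (1:ℝ), ENNReal.ofReal (Real.exp (-ξ)) * c ∂σ) ≤ I :=
      setLIntegral_mono hinner1meas hstep
    rwa [lintegral_mul_const _ hexpOR] at this
  -- first equivalence
  have key1 : (∫⁻ ξ in Set.Ici (1:ℝ), phiTilde φ ξ ∂σ) < ⊤ ↔ I < ⊤ := by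
    rw [hLHS]
    constructor
    · intro h; exact lt_of_le_of_lt le_self_add h
    · intro hI
      have hD : D < ⊤ := by
        by_contra hD
        rw [not_lt, top_le_iff] at hD
        have : D * c = ⊤ := by
          rw [hD, ENNReal.top_mul hc_pos.ne']
        rw [this] at hI_ge
        exact absurd (top_le_iff.1 hI_ge) hI.ne
      have hJ : J < ⊤ := lt_of_le_of_lt hJ_le (ENNReal.mul_lt_top hD hC_lt_top)
      exact ENNReal.add_lt_top.2 ⟨hI, hJ⟩
  -- second: the RHS
  set A : ℝ → ENNReal := fun t => ∫⁻ ξ in Set.Ico (0:ℝ) 1, ENNReal.ofReal (Real.exp (-t * ξ)) ∂σ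
    with hAdef
  set B : ℝ → ENNReal := fun t => ∫⁻ ξ in Set.Ici (1:ℝ), ENNReal.ofReal (Real.exp (-t * ξ)) ∂σ
    with hBdef
  have hG : Measurable (Function.uncurry fun t ξ : ℝ => ENNReal.ofReal (Real.exp (-t * ξ))) :=
    ENNReal.measurable_ofReal.comp (measurable_fst.neg.mul measurable_snd).exp
  have hAmeas : Measurable A := hG.lintegral_prod_right
  have hBmeas : Measurable B := hG.lintegral_prod_right
  have hlap : ∀ t : ℝ, lap σ t = A t + B t := by
    intro t
    rw [lap, ← Set.Ico_union_Ici_eq_Ici (zero_le_one (α := ℝ)),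
      lintegral_union measurableSet_Ici
        ((Set.Iio_disjoint_Ici le_rfl).mono_left Set.Ico_subset_Iio_self)]
  have hRHS : (∫⁻ t in Set.Ioc (0:ℝ) 1, lap σ t * ENNReal.ofReal (φ t))
      = (∫⁻ t in Set.Ioc (0:ℝ) 1, A t * ENNReal.ofReal (ψ t))
        + ∫⁻ t in Set.Ioc (0:ℝ) 1, B t * ENNReal.ofReal (ψ t) := by
    have hAψ : Measurable fun t : ℝ => A t * ENNReal.ofReal (ψ t) := hAmeas.mul hψOR
    rw [← lintegral_add_left hAψ]
    refine setLIntegral_congr_fun measurableSet_Ioc (fun t ht => ?_)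
    rw [hlap t, hψ_eq t ht.1, add_mul]
  set T1 : ENNReal := ∫⁻ t in Set.Ioc (0:ℝ) 1, A t * ENNReal.ofReal (ψ t) with hT1def
  have hT1_lt_top : T1 < ⊤ := by
    have hσ01 : σ (Set.Ico (0:ℝ) 1) < ⊤ :=
      lt_of_le_of_lt (measure_mono (Set.Ico_subset_Icc_self)) (isCompact_Icc.measure_lt_top)
    have hle : T1 ≤ ∫⁻ _t in Set.Ioc (0:ℝ) 1, σ (Set.Ico (0:ℝ) 1) * ENNReal.ofReal (φ 1) := by
      refine setLIntegral_mono' measurableSet_Ioc fun t ht => ?_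
      refine mul_le_mul' ?_ ?_
      · calc A t ≤ ∫⁻ _ξ in Set.Ico (0:ℝ) 1, 1 ∂σ := by
              refine setLIntegral_mono' measurableSet_Ico fun ξ hξ => ?_
              refine ENNReal.ofReal_le_one.2 (Real.exp_le_one_iff.2 ?_)
              nlinarith [ht.1.le, hξ.1]
          _ = σ (Set.Ico (0:ℝ) 1) := by rw [setLIntegral_const, one_mul]
      · refine ENNReal.ofReal_le_ofReal ?_
        have h2 : ψ t ≤ ψ 1 := hψmono ht.2
        have h3 : ψ (1:ℝ) = φ 1 := by simp [hψdef]
        linarith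
    refine lt_of_le_of_lt hle ?_
    rw [setLIntegral_const, Real.volume_Ioc]
    exact ENNReal.mul_lt_top (ENNReal.mul_lt_top hσ01 ENNReal.ofReal_lt_top)
      ENNReal.ofReal_lt_top
  have hT2 : (∫⁻ t in Set.Ioc (0:ℝ) 1, B t * ENNReal.ofReal (ψ t)) = I := by
    have h1 : ∀ t : ℝ, B t * ENNReal.ofReal (ψ t) = ∫⁻ ξ in Set.Ici (1:ℝ), F ξ t ∂σ := by
      intro t
      have hm : Measurable fun ξ : ℝ => ENNReal.ofReal (Real.exp (-t * ξ)) := by fun_prop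
      rw [hBdef, ← lintegral_mul_const _ hm]
      refine lintegral_congr fun ξ => ?_
      rw [← ENNReal.ofReal_mul (Real.exp_pos _).le]
    have h2 : (∫⁻ t in Set.Ioc (0:ℝ) 1, B t * ENNReal.ofReal (ψ t))
        = ∫⁻ t in Set.Ioc (0:ℝ) 1, ∫⁻ ξ in Set.Ici (1:ℝ), F ξ t ∂σ :=
      lintegral_congr fun t => h1 t
    have hswapmeas : AEMeasurable (Function.uncurry fun t ξ : ℝ => F ξ t)
        ((volume.restrict (Set.Ioc (0:ℝ) 1)).prod (σ.restrict (Set.Ici (1:ℝ)))) :=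
      ((hF.comp measurable_swap).aemeasurable)
    rw [h2]
    exact lintegral_lintegral_swap hswapmeas
  have key2 : (∫⁻ t in Set.Ioc (0:ℝ) 1, lap σ t * ENNReal.ofReal (φ t)) < ⊤ ↔ I < ⊤ := by
    rw [hRHS, hT2, ENNReal.add_lt_top]
    exact ⟨fun h => h.2, fun h => ⟨hT1_lt_top, h⟩⟩
  exact key1.trans key2.symm
end

section
/- Let α > 1, β = α/(α−1), and let ϕ be a continuous, strictly increasing function on (0,δ] with ϕ(0+) = 0 that is regularly varying at 0 with exponent α−1 (i.e. lim_{t↓0} ϕ(ct)/ϕ(t) = c^{α−1} for every c > 0), with inverse ϕ⁻¹. Let m be a positive nondecreasing function on (−∞,0) with M(x) := ∫_{−∞}^x m(y) dy < ∞ for x < 0, M strictly increasing with M(0−) = ∞, and let M⁻¹ denote the inverse of M. Assume that for every x > 0, lim_{λ→∞} ( M⁻¹(λx) − M⁻¹(λ) ) / ϕ(λ⁻¹) = (α−1)⁻¹ α^α (1 − x^{−(α−1)}). Then m(x) ~ β^β / ( (−x) ϕ⁻¹(−x) ) as x ↑ 0, i.e. lim_{x↑0} m(x)(−x)ϕ⁻¹(−x)/β^β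 = 1. -/
open MeasureTheory Filter

set_option maxHeartbeats 2000000 in
theorem stmt_17 (α β : ℝ) (hα : 1 < α) (hβ : β = α / (α - 1))
    (δ : ℝ) (hδ : 0 < δ)
    (ϕ : ℝ → ℝ)
    (hϕpos : ∀ t ∈ Set.Ioc (0:ℝ) δ, 0 < ϕ t)
    (hϕmono : StrictMonoOn ϕ (Set.Ioc 0 δ))
    (hϕcont : ContinuousOn ϕ (Set.Ioc 0 δ))
    (hϕ0 : Tendsto ϕ (nhdsWithin 0 (Set.Ioi 0)) (nhds 0))
    -- regular variation at 0 with exponent α - 1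
    (hRV : ∀ c : ℝ, 0 < c →
      Tendsto (fun t => ϕ (c * t) / ϕ t) (nhdsWithin 0 (Set.Ioi 0)) (nhds (c ^ (α - 1))))
    (ϕinv : ℝ → ℝ)
    (hϕinv : ∀ t ∈ Set.Ioc (0:ℝ) δ, ϕinv (ϕ t) = t)
    (hϕinv' : ∀ s ∈ Set.Ioc (0:ℝ) (ϕ δ), ϕ (ϕinv s) = s ∧ ϕinv s ∈ Set.Ioc 0 δ)
    (m : ℝ → ℝ)
    (hmpos : ∀ x : ℝ, x < 0 → 0 < m x)
    (hmmono : MonotoneOn m (Set.Iio 0))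
    (hmint : ∀ x : ℝ, x < 0 → IntegrableOn m (Set.Iio x))
    (M : ℝ → ℝ) (hM : ∀ x : ℝ, x < 0 → M x = ∫ y in Set.Iio x, m y)
    (hMmono : StrictMonoOn M (Set.Iio 0))
    (hMtop : Tendsto M (nhdsWithin 0 (Set.Iio 0)) atTop)  -- M(0-) = ∞
    (Minv : ℝ → ℝ)
    (hMinv : ∀ x : ℝ, x < 0 → Minv (M x) = x)
    (hMsurj : ∀ lam : ℝ, M (-1) < lam → ∃ x, x < 0 ∧ M x = lam)
    -- the assumed asymptotics of M⁻¹
    (hmain : ∀ x : ℝ, 0 < x →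
      Tendsto (fun lam : ℝ => (Minv (lam * x) - Minv lam) / ϕ lam⁻¹) atTop
        (nhds ((α - 1)⁻¹ * α ^ α * (1 - x ^ (-(α - 1)))))) :
    -- conclusion: m(x) ~ β^β / ((-x) ϕ⁻¹(-x)) as x ↑ 0
    Tendsto (fun x : ℝ => m x * ((-x) * ϕinv (-x)) / β ^ β)
      (nhdsWithin 0 (Set.Iio 0)) (nhds 1) := by
  have ha0 : (0:ℝ) < α := lt_trans one_pos hα
  have ha1 : (0:ℝ) < α - 1 := sub_pos.mpr hα
  have ha1' : α - 1 ≠ 0 := ne_of_gt ha1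
  set C : ℝ := (α - 1)⁻¹ * α ^ α with hCdef
  have hCpos : 0 < C := mul_pos (inv_pos.mpr ha1) (Real.rpow_pos_of_pos ha0 α)
  have hβpos : 0 < β := hβ ▸ div_pos ha0 ha1
  have hϕδ : 0 < ϕ δ := hϕpos δ ⟨hδ, le_refl δ⟩
  have hmem : ∀ᶠ lam : ℝ in atTop, lam⁻¹ ∈ Set.Ioc (0:ℝ) δ := by
    filter_upwards [eventually_ge_atTop δ⁻¹, eventually_gt_atTop 0] with lam h1 h2
    refine ⟨inv_pos.mpr h2, ?_⟩
    rw [show δ = δ⁻¹⁻¹ by rw [inv_inv]]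
    exact inv_anti₀ (inv_pos.mpr hδ) h1
  have hψpos : ∀ᶠ lam : ℝ in atTop, 0 < ϕ lam⁻¹ := hmem.mono fun lam h => hϕpos _ h
  have hM1 : ∀ lam : ℝ, M (-1) < lam → Minv lam < 0 ∧ M (Minv lam) = lam := by
    intro lam h
    obtain ⟨x, hx, hMx⟩ := hMsurj lam h
    rw [← hMx, hMinv x hx]
    exact ⟨hx, rfl⟩
  have hMinvlt : ∀ l1 l2 : ℝ, M (-1) < l1 → l1 < l2 → Minv l1 < Minv l2 := by
    intro l1 l2 h1 h12
    obtain ⟨ha, hMa⟩ := hM1 l1 h1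
    obtain ⟨hb, hMb⟩ := hM1 l2 (h1.trans h12)
    exact (hMmono.lt_iff_lt (Set.mem_Iio.mpr ha) (Set.mem_Iio.mpr hb)).mp
      (by rw [hMa, hMb]; exact h12)
  have hMinv0 : Tendsto Minv atTop (nhdsWithin 0 (Set.Iio 0)) := by
    have hlt : ∀ᶠ lam : ℝ in atTop, Minv lam < 0 :=
      (eventually_gt_atTop (M (-1))).mono fun lam h => (hM1 lam h).1
    refine tendsto_nhdsWithin_iff.mpr ⟨tendsto_order.2 ⟨?_, ?_⟩,
      hlt.mono fun lam h => Set.mem_Iio.mpr h⟩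
    · intro a ha'
      filter_upwards [eventually_gt_atTop (M (-1)), eventually_gt_atTop (M a)] with lam h1 h2
      obtain ⟨hb, hMb⟩ := hM1 lam h1
      exact (hMmono.lt_iff_lt (Set.mem_Iio.mpr ha') (Set.mem_Iio.mpr hb)).mp
        (by rw [hMb]; exact h2)
    · intro b hb
      exact hlt.mono fun lam h => h.trans hb
  have hMdiff : ∀ a b : ℝ, a < b → b < 0 →
      m a * (b - a) ≤ M b - M a ∧ M b - M a ≤ m b * (b - a) := by
    intro a b hab hb0
    have ha0' : a < 0 := hab.trans hb0
    have hintb := hmint b hb0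
    have hinta := hmint a ha0'
    have hico : IntegrableOn m (Set.Ico a b) := hintb.mono_set Set.Ico_subset_Iio_self
    have hdisj : Disjoint (Set.Iio a) (Set.Ico a b) :=
      Set.disjoint_left.mpr fun y hy hy2 => absurd hy2.1 (not_le.mpr hy)
    have hunion : Set.Iio a ∪ Set.Ico a b = Set.Iio b := Set.Iio_union_Ico_eq_Iio hab.le
    have hsplit : M b = M a + ∫ y in Set.Ico a b, m y := by
      rw [hM b hb0, hM a ha0', ← hunion,
        setIntegral_union hdisj measurableSet_Ico hinta hico]
    have hvol : (volume (Set.Ico a b)).toReal = b - a := by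
      rw [Real.volume_Ico, ENNReal.toReal_ofReal (by linarith)]
    have hconst : ∀ c : ℝ, IntegrableOn (fun _ => c) (Set.Ico a b) := by
      intro c
      refine integrableOn_const (ne_of_lt ?_)
      rw [Real.volume_Ico]; exact ENNReal.ofReal_lt_top
    constructor
    · have hlow : ∫ _y in Set.Ico a b, (m a) ≤ ∫ y in Set.Ico a b, m y := by
        refine setIntegral_mono_on (hconst (m a)) hico measurableSet_Ico ?_
        intro y hy
        exact hmmono (Set.mem_Iio.mpr ha0') (Set.mem_Iio.mpr (hy.2.trans hb0)) hy.1
      rw [setIntegral_const, measureReal_def, hvol, smul_eq_mul] at hlow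
      rw [hsplit]; linarith
    · have hup : ∫ y in Set.Ico a b, m y ≤ ∫ _y in Set.Ico a b, (m b) := by
        refine setIntegral_mono_on hico (hconst (m b)) measurableSet_Ico ?_
        intro y hy
        exact hmmono (Set.mem_Iio.mpr (hy.2.trans hb0)) (Set.mem_Iio.mpr hb0) hy.2.le
      rw [setIntegral_const, measureReal_def, hvol, smul_eq_mul] at hup
      rw [hsplit]; linarith
  have key1 : ∀ x : ℝ, 1 < x → ∀ lam : ℝ, 0 < lam → M (-1) < lam →
      m (Minv lam) * (Minv (lam * x) - Minv lam) ≤ lam * (x - 1) := by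
    intro x hx lam hlam hMlam
    have hlt : lam < lam * x := by nlinarith
    have hMlam' : M (-1) < lam * x := hMlam.trans hlt
    obtain ⟨ha, hMa⟩ := hM1 lam hMlam
    obtain ⟨hb, hMb⟩ := hM1 (lam * x) hMlam'
    have hab : Minv lam < Minv (lam * x) := hMinvlt _ _ hMlam hlt
    have h := (hMdiff _ _ hab hb).1
    rw [hMa, hMb] at h
    nlinarith [h]
  have key2 : ∀ x : ℝ, 1 < x → ∀ lam : ℝ, 0 < lam → M (-1) < lam * x⁻¹ →
      lam * x⁻¹ * (x - 1) ≤ m (Minv lam) * (Minv lam - Minv (lam * x⁻¹)) := by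
    intro x hx lam hlam hMlam
    have hx0 : (0:ℝ) < x := lt_trans one_pos hx
    have hxi : x⁻¹ < 1 := by
      rw [inv_lt_one_iff₀]; right; exact hx
    have hlt : lam * x⁻¹ < lam := by nlinarith
    have hMlam2 : M (-1) < lam := hMlam.trans hlt
    obtain ⟨ha, hMa⟩ := hM1 (lam * x⁻¹) hMlam
    obtain ⟨hb, hMb⟩ := hM1 lam hMlam2
    have hab : Minv (lam * x⁻¹) < Minv lam := hMinvlt _ _ hMlam hlt
    have h2 := (hMdiff _ _ hab hb).2
    rw [hMa, hMb] at h2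
    have he : lam * x⁻¹ * (x - 1) = lam - lam * x⁻¹ := by
      field_simp
    rw [he]
    exact h2
  -- calculus limits near 1
  have hslope1 : Tendsto (fun x : ℝ => (1 - x ^ (-(α-1))) / (x - 1))
      (nhdsWithin 1 (Set.Ioi 1)) (nhds (α - 1)) := by
    have hder : HasDerivAt (fun x : ℝ => 1 - x ^ (-(α-1))) (α - 1) 1 := by
      have h := Real.hasDerivAt_rpow_const (x := (1:ℝ)) (p := -(α-1)) (Or.inl one_ne_zero)
      have h2 := (hasDerivAt_const (1:ℝ) (1:ℝ)).sub h
      simp only [Real.one_rpow, mul_one, zero_sub, neg_neg] at h2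
      exact h2
    have h3 := (hasDerivAt_iff_tendsto_slope.mp hder).mono_left
      (nhdsWithin_mono 1 (fun y (hy : y ∈ Set.Ioi 1) => Set.mem_compl_singleton_iff.mpr (ne_of_gt hy)))
    refine Tendsto.congr' ?_ h3
    filter_upwards [self_mem_nhdsWithin] with y _
    rw [slope_def_field]
    simp [Real.one_rpow]
  have hslope2 : Tendsto (fun x : ℝ => (x ^ (α-1) - 1) / (x - 1))
      (nhdsWithin 1 (Set.Ioi 1)) (nhds (α - 1)) := by
    have hder : HasDerivAt (fun x : ℝ => x ^ (α-1)) (α - 1) 1 := by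
      have h := Real.hasDerivAt_rpow_const (x := (1:ℝ)) (p := α-1) (Or.inl one_ne_zero)
      convert h using 1
      rw [Real.one_rpow]
      ring
    have h3 := (hasDerivAt_iff_tendsto_slope.mp hder).mono_left
      (nhdsWithin_mono 1 (fun y (hy : y ∈ Set.Ioi 1) => Set.mem_compl_singleton_iff.mpr (ne_of_gt hy)))
    refine Tendsto.congr' ?_ h3
    filter_upwards [self_mem_nhdsWithin] with y _
    rw [slope_def_field]
    simp [Real.one_rpow]
  have honeIoi : ∀ᶠ x : ℝ in nhdsWithin 1 (Set.Ioi 1), 1 < x :=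
    self_mem_nhdsWithin
  have hUB : Tendsto (fun x : ℝ => (x - 1) / (C * (1 - x ^ (-(α-1)))))
      (nhdsWithin 1 (Set.Ioi 1)) (nhds (α ^ α)⁻¹) := by
    have h1 := (hslope1.inv₀ ha1').mul_const C⁻¹
    have hval : (α - 1)⁻¹ * C⁻¹ = (α ^ α)⁻¹ := by
      rw [hCdef, mul_inv, inv_inv]
      field_simp
    rw [hval] at h1
    refine Tendsto.congr' ?_ h1
    filter_upwards [honeIoi] with x hx
    have hg : (0:ℝ) < 1 - x ^ (-(α-1)) := by
      have := Real.rpow_lt_one_of_one_lt_of_neg hx (by linarith : -(α-1) < 0)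
      linarith
    rw [inv_div]
    field_simp
  have hLB : Tendsto (fun x : ℝ => x⁻¹ * (x - 1) / (C * (x ^ (α-1) - 1)))
      (nhdsWithin 1 (Set.Ioi 1)) (nhds (α ^ α)⁻¹) := by
    have hxinv : Tendsto (fun x : ℝ => x⁻¹ * C⁻¹) (nhdsWithin 1 (Set.Ioi 1))
        (nhds ((1:ℝ)⁻¹ * C⁻¹)) := by
      exact ((tendsto_id.mono_left nhdsWithin_le_nhds).inv₀ one_ne_zero).mul_const C⁻¹
    have h1 := (hslope2.inv₀ ha1').mul hxinv
    have hval : (α - 1)⁻¹ * ((1:ℝ)⁻¹ * C⁻¹) = (α ^ α)⁻¹ := by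
      rw [hCdef, mul_inv, inv_inv]
      field_simp
    rw [hval] at h1
    refine Tendsto.congr' ?_ h1
    filter_upwards [honeIoi] with x hx
    have hx0 : (0:ℝ) < x := lt_trans one_pos hx
    have hg : (0:ℝ) < x ^ (α-1) - 1 := by
      have : 1 < x ^ (α-1) :=
        (Real.one_lt_rpow_iff_of_pos hx0).mpr (Or.inl ⟨hx, ha1⟩)
      linarith
    rw [inv_div]
    simp only [div_eq_mul_inv, mul_inv]
    ring
  -- Step A
  have hAup : ∀ u : ℝ, (α ^ α)⁻¹ < u →
      ∀ᶠ lam : ℝ in atTop, m (Minv lam) * ϕ lam⁻¹ / lam < u := by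
    intro u hu
    obtain ⟨x, hx1, hxu⟩ : ∃ x : ℝ, 1 < x ∧ (x - 1) / (C * (1 - x ^ (-(α-1)))) < u := by
      have h1 := hUB.eventually (Iio_mem_nhds hu)
      obtain ⟨x, hxu, hx1⟩ := (h1.and honeIoi).exists
      exact ⟨x, hx1, hxu⟩
    have hg : (0:ℝ) < 1 - x ^ (-(α-1)) := by
      have := Real.rpow_lt_one_of_one_lt_of_neg hx1 (by linarith : -(α-1) < 0)
      linarith
    have hq : (0:ℝ) < C * (1 - x ^ (-(α-1))) := mul_pos hCpos hg
    have hDx := hmain x (lt_trans one_pos hx1)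
    have hquot : Tendsto (fun lam : ℝ => (x - 1) / ((Minv (lam * x) - Minv lam) / ϕ lam⁻¹))
        atTop (nhds ((x - 1) / (C * (1 - x ^ (-(α-1)))))) :=
      tendsto_const_nhds.div hDx (ne_of_gt hq)
    filter_upwards [hquot.eventually (Iio_mem_nhds hxu),
      hDx.eventually (Ioi_mem_nhds hq), hψpos,
      eventually_gt_atTop 0, eventually_gt_atTop (M (-1))] with lam h5 hD0 hψ hl0 hMl
    have hψ' : ϕ lam⁻¹ ≠ 0 := ne_of_gt hψ
    have hba : 0 < Minv (lam * x) - Minv lam := by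
      have h6 := mul_pos (Set.mem_Ioi.mp hD0) hψ
      rwa [div_mul_cancel₀ _ hψ'] at h6
    have hk := key1 x hx1 lam hl0 hMl
    have hFle : m (Minv lam) * ϕ lam⁻¹ / lam
        ≤ (x - 1) / ((Minv (lam * x) - Minv lam) / ϕ lam⁻¹) := by
      rw [div_div_eq_mul_div, div_le_div_iff₀ hl0 hba]
      nlinarith [mul_le_mul_of_nonneg_right hk hψ.le]
    exact lt_of_le_of_lt hFle h5
  have hAlow : ∀ l : ℝ, l < (α ^ α)⁻¹ →
      ∀ᶠ lam : ℝ in atTop, l < m (Minv lam) * ϕ lam⁻¹ / lam := by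
    intro l hl
    obtain ⟨x, hx1, hxl⟩ : ∃ x : ℝ, 1 < x ∧ l < x⁻¹ * (x - 1) / (C * (x ^ (α-1) - 1)) := by
      have h1 := hLB.eventually (Ioi_mem_nhds hl)
      obtain ⟨x, hxl, hx1⟩ := (h1.and honeIoi).exists
      exact ⟨x, hx1, hxl⟩
    have hx0 : (0:ℝ) < x := lt_trans one_pos hx1
    have hg : (0:ℝ) < x ^ (α-1) - 1 := by
      have : 1 < x ^ (α-1) := (Real.one_lt_rpow_iff_of_pos hx0).mpr (Or.inl ⟨hx1, ha1⟩)
      linarith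
    have hq : (0:ℝ) < C * (x ^ (α-1) - 1) := mul_pos hCpos hg
    -- limit of the lower difference quotient
    have hDx' : Tendsto (fun lam : ℝ => (Minv lam - Minv (lam * x⁻¹)) / ϕ lam⁻¹)
        atTop (nhds (C * (x ^ (α-1) - 1))) := by
      have he : (x⁻¹ : ℝ) ^ (-(α-1)) = x ^ (α-1) := by
        rw [Real.inv_rpow hx0.le, Real.rpow_neg hx0.le, inv_inv]
      have h := (hmain x⁻¹ (inv_pos.mpr hx0)).neg
      rw [he] at h
      have h2 := h.congr (fun lam => by rw [← neg_div, neg_sub])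
      have h3 : -(C * (1 - x ^ (α-1))) = C * (x ^ (α-1) - 1) := by ring
      rwa [h3] at h2
    have hquot : Tendsto (fun lam : ℝ => x⁻¹ * (x - 1) / ((Minv lam - Minv (lam * x⁻¹)) / ϕ lam⁻¹))
        atTop (nhds (x⁻¹ * (x - 1) / (C * (x ^ (α-1) - 1)))) :=
      tendsto_const_nhds.div hDx' (ne_of_gt hq)
    have hmulev : ∀ᶠ lam : ℝ in atTop, M (-1) < lam * x⁻¹ :=
      (Tendsto.atTop_mul_const (inv_pos.mpr hx0) tendsto_id).eventually
        (eventually_gt_atTop (M (-1)))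
    filter_upwards [hquot.eventually (Ioi_mem_nhds hxl),
      hDx'.eventually (Ioi_mem_nhds hq), hψpos,
      eventually_gt_atTop 0, hmulev] with lam h5 hD0 hψ hl0 hMl
    have hψ' : ϕ lam⁻¹ ≠ 0 := ne_of_gt hψ
    have hba : 0 < Minv lam - Minv (lam * x⁻¹) := by
      have h6 := mul_pos (Set.mem_Ioi.mp hD0) hψ
      rwa [div_mul_cancel₀ _ hψ'] at h6
    have hk := key2 x hx1 lam hl0 hMl
    have hFge : x⁻¹ * (x - 1) / ((Minv lam - Minv (lam * x⁻¹)) / ϕ lam⁻¹)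
        ≤ m (Minv lam) * ϕ lam⁻¹ / lam := by
      rw [div_div_eq_mul_div, div_le_div_iff₀ hba hl0]
      nlinarith [mul_le_mul_of_nonneg_right hk hψ.le]
    exact lt_of_lt_of_le h5 hFge
  have hA : Tendsto (fun lam : ℝ => m (Minv lam) * ϕ lam⁻¹ / lam) atTop (nhds (α ^ α)⁻¹) :=
    tendsto_order.2 ⟨hAlow, hAup⟩
  -- Step T : crude upper bound for -Minv
  obtain ⟨c₀, hc₀, hc₀lt⟩ : ∃ c₀ : ℝ, 0 < c₀ ∧ c₀ < (α ^ α)⁻¹ :=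
    ⟨(α ^ α)⁻¹ / 2, half_pos (inv_pos.mpr (Real.rpow_pos_of_pos ha0 α)),
      half_lt_self (inv_pos.mpr (Real.rpow_pos_of_pos ha0 α))⟩
  have hmlow : ∀ᶠ lam : ℝ in atTop, c₀ * lam < m (Minv lam) * ϕ lam⁻¹ := by
    filter_upwards [hAlow c₀ hc₀lt, eventually_gt_atTop 0] with lam h1 h2
    exact (lt_div_iff₀ h2).mp h1
  obtain ⟨x₂, hx₂1, hx2a⟩ : ∃ x₂ : ℝ, 1 < x₂ ∧ x₂ ^ (α-1) = 2 := by
    refine ⟨(2:ℝ) ^ ((α-1)⁻¹),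
      (Real.one_lt_rpow_iff_of_pos two_pos).mpr (Or.inl ⟨one_lt_two, inv_pos.mpr ha1⟩), ?_⟩
    rw [← Real.rpow_mul (by norm_num : (0:ℝ) ≤ 2), inv_mul_cancel₀ ha1', Real.rpow_one]
  have hx₂0 : 0 < x₂ := lt_trans one_pos hx₂1
  have hvalinv : (x₂⁻¹ : ℝ) ^ (α-1) = 2⁻¹ := by
    rw [Real.inv_rpow hx₂0.le, hx2a]
  -- halving property of ϕ
  obtain ⟨t₀, ht₀pos, ht₀sub⟩ :
      ∃ t₀ ∈ Set.Ioi (0:ℝ), Set.Ioc 0 t₀ ⊆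
        {t : ℝ | ϕ (x₂⁻¹ * t) / ϕ t < 3/4 ∧ t ∈ Set.Ioc 0 δ} := by
    rw [← mem_nhdsGT_iff_exists_Ioc_subset]
    have h1 := (hRV x₂⁻¹ (inv_pos.mpr hx₂0)).eventually
      (Iio_mem_nhds (by rw [hvalinv]; norm_num : (x₂⁻¹:ℝ) ^ (α-1) < 3/4))
    have h2 : Set.Ioc (0:ℝ) δ ∈ nhdsWithin 0 (Set.Ioi 0) :=
      Ioc_mem_nhdsGT_of_mem ⟨le_refl 0, hδ⟩
    filter_upwards [h1, h2] with t ht1 ht2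
    exact ⟨ht1, ht2⟩
  have Hhalf : ∀ t : ℝ, 0 < t → t ≤ t₀ → ϕ (x₂⁻¹ * t) ≤ 3/4 * ϕ t := by
    intro t ht h2
    obtain ⟨hr, hmem'⟩ := ht₀sub ⟨ht, h2⟩
    exact ((div_lt_iff₀ (hϕpos t hmem')).mp hr).le
  have hiter : ∀ k : ℕ, ∀ t : ℝ, 0 < t → t ≤ t₀ →
      ϕ ((x₂⁻¹)^k * t) ≤ (3/4)^k * ϕ t := by
    intro k
    induction k with
    | zero => intro t ht h2; simp
    | succ k ih =>
      intro t ht h2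
      have hxi1 : x₂⁻¹ ≤ 1 := by
        rw [inv_le_one_iff₀]; right; exact hx₂1.le
      have h3 : 0 < x₂⁻¹ * t := mul_pos (inv_pos.mpr hx₂0) ht
      have h4 : x₂⁻¹ * t ≤ t₀ := le_trans (mul_le_of_le_one_left ht.le hxi1) h2
      calc ϕ ((x₂⁻¹)^(k+1) * t) = ϕ ((x₂⁻¹)^k * (x₂⁻¹ * t)) := by
            rw [pow_succ, mul_assoc]
        _ ≤ (3/4)^k * ϕ (x₂⁻¹ * t) := ih _ h3 h4
        _ ≤ (3/4)^k * (3/4 * ϕ t) :=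
            mul_le_mul_of_nonneg_left (Hhalf t ht h2) (by positivity)
        _ = (3/4)^(k+1) * ϕ t := by ring
  -- threshold
  obtain ⟨Λ, hΛ⟩ := eventually_atTop.mp
    (hmlow.and ((eventually_gt_atTop 0).and ((eventually_gt_atTop (M (-1))).and
      ((hmem.mono (fun lam h => h)).and
        ((eventually_ge_atTop t₀⁻¹).and hψpos)))))
  have hΛfact : ∀ lam ≥ Λ, c₀ * lam < m (Minv lam) * ϕ lam⁻¹ ∧ 0 < lam ∧
      M (-1) < lam ∧ 0 < lam⁻¹ ∧ lam⁻¹ ≤ t₀ ∧ 0 < ϕ lam⁻¹ := by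
    intro lam h
    obtain ⟨h1, h2, h3, _h4, h5, h6⟩ := hΛ lam h
    refine ⟨h1, h2, h3, inv_pos.mpr h2, ?_, h6⟩
    rw [show t₀ = t₀⁻¹⁻¹ by rw [inv_inv]]
    exact inv_anti₀ (inv_pos.mpr ht₀pos) h5
  have hpartial : ∀ lam ≥ Λ, ∀ N : ℕ,
      c₀ * (Minv (lam * x₂^N) - Minv lam) ≤ 4 * (x₂-1) * (1 - (3/4)^N) * ϕ lam⁻¹ := by
    intro lam hlam N
    induction N with
    | zero => simp
    | succ N ih =>
      obtain ⟨_, hlam0, _, hinv0, hinvt₀, hψl⟩ := hΛfact lam hlam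
      set μ := lam * x₂^N with hμdef
      clear_value μ
      have hx₂N1 : (1:ℝ) ≤ x₂^N := one_le_pow₀ hx₂1.le
      have hμΛ : μ ≥ Λ := le_trans hlam (hμdef ▸ le_mul_of_one_le_right hlam0.le hx₂N1)
      obtain ⟨hμ1, hμ0, hμM, _, _, hψμ⟩ := hΛfact μ hμΛ
      have hk := key1 x₂ hx₂1 μ hμ0 hμM
      have hDpos : 0 ≤ Minv (μ * x₂) - Minv μ := by
        have := hMinvlt μ (μ * x₂) hμM (lt_mul_of_one_lt_right hμ0 hx₂1)
        linarith
      -- c₀ * increment ≤ (x₂ - 1) * ϕ μ⁻¹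
      have hstep : c₀ * (Minv (μ * x₂) - Minv μ) ≤ (x₂-1) * ϕ μ⁻¹ := by
        have h7 : c₀ * μ * (Minv (μ * x₂) - Minv μ)
            ≤ m (Minv μ) * ϕ μ⁻¹ * (Minv (μ * x₂) - Minv μ) :=
          mul_le_mul_of_nonneg_right hμ1.le hDpos
        have h8 : m (Minv μ) * (Minv (μ * x₂) - Minv μ) * ϕ μ⁻¹ ≤ μ * (x₂-1) * ϕ μ⁻¹ :=
          mul_le_mul_of_nonneg_right hk hψμ.le
        have h9 : μ * (c₀ * (Minv (μ * x₂) - Minv μ)) ≤ μ * ((x₂-1) * ϕ μ⁻¹) := by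
          nlinarith [h7, h8]
        exact le_of_mul_le_mul_left h9 hμ0
      -- ϕ μ⁻¹ ≤ (3/4)^N * ϕ lam⁻¹
      have hμinv : μ⁻¹ = (x₂⁻¹)^N * lam⁻¹ := by
        rw [hμdef, mul_inv, inv_pow, mul_comm]
      have hϕμ : ϕ μ⁻¹ ≤ (3/4)^N * ϕ lam⁻¹ := by
        rw [hμinv]
        exact hiter N lam⁻¹ hinv0 hinvt₀
      have hstep2 : c₀ * (Minv (μ * x₂) - Minv μ) ≤ (x₂-1) * ((3/4)^N * ϕ lam⁻¹) := by
        refine le_trans hstep (mul_le_mul_of_nonneg_left hϕμ (by linarith))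
      have hsplitN : c₀ * (Minv (lam * x₂^(N+1)) - Minv lam)
          = c₀ * (Minv (μ * x₂) - Minv μ) + c₀ * (Minv μ - Minv lam) := by
        have h10 : lam * x₂^(N+1) = μ * x₂ := by rw [hμdef, pow_succ, mul_assoc]
        rw [h10]; ring
      rw [hsplitN, pow_succ]
      nlinarith [hstep2, ih]
  have hT : ∀ lam ≥ Λ, c₀ * (-Minv lam) ≤ 4 * (x₂-1) * ϕ lam⁻¹ := by
    intro lam hlam
    obtain ⟨_, hlam0, _, _, _, hψl⟩ := hΛfact lam hlam
    have hgeo : Tendsto (fun N : ℕ => lam * x₂^N) atTop atTop :=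
      Tendsto.const_mul_atTop hlam0 (tendsto_pow_atTop_atTop_of_one_lt hx₂1)
    have hto0 : Tendsto (fun N : ℕ => Minv (lam * x₂^N)) atTop (nhds 0) :=
      (hMinv0.mono_right nhdsWithin_le_nhds).comp hgeo
    have hseq : Tendsto (fun N : ℕ => c₀ * (Minv (lam * x₂^N) - Minv lam)) atTop
        (nhds (c₀ * (0 - Minv lam))) :=
      ((hto0.sub_const (Minv lam)).const_mul c₀)
    have hbd : ∀ N : ℕ, c₀ * (Minv (lam * x₂^N) - Minv lam) ≤ 4 * (x₂-1) * ϕ lam⁻¹ := by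
      intro N
      refine le_trans (hpartial lam hlam N) ?_
      have h1 : (0:ℝ) ≤ (3/4)^N := by positivity
      nlinarith [mul_nonneg (mul_nonneg (by linarith : (0:ℝ) ≤ x₂ - 1) h1) hψl.le]
    have := le_of_tendsto hseq (Eventually.of_forall hbd)
    linarith [this]
  -- Step B
  have hinv_tendsto : Tendsto (fun lam : ℝ => lam⁻¹) atTop (nhdsWithin 0 (Set.Ioi 0)) :=
    tendsto_nhdsWithin_iff.mpr ⟨tendsto_inv_atTop_zero,
      (eventually_gt_atTop 0).mono fun lam h => Set.mem_Ioi.mpr (inv_pos.mpr h)⟩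
  have hratio : ∀ c : ℝ, 0 < c →
      Tendsto (fun lam : ℝ => ϕ (c * lam⁻¹) / ϕ lam⁻¹) atTop (nhds (c ^ (α-1))) :=
    fun c hc => (hRV c hc).comp hinv_tendsto
  have hT' : ∀ lam ≥ Λ, -Minv lam ≤ (4*(x₂-1)/c₀) * ϕ lam⁻¹ := by
    intro lam h
    have h1 := hT lam h
    rw [div_mul_eq_mul_div, le_div_iff₀ hc₀]
    nlinarith [h1]
  have hBlow : ∀ l : ℝ, l < C → ∀ᶠ lam : ℝ in atTop, l < (-Minv lam) / ϕ lam⁻¹ := by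
    intro l hl
    obtain ⟨y, hy1, hyl⟩ : ∃ y : ℝ, 1 < y ∧ l < C * (1 - y ^ (-(α-1))) := by
      have h0 : Tendsto (fun y : ℝ => C * (1 - y ^ (-(α-1)))) atTop (nhds (C * (1 - 0))) :=
        (tendsto_const_nhds.sub (tendsto_rpow_neg_atTop ha1)).const_mul C
      rw [sub_zero, mul_one] at h0
      obtain ⟨y, h, h'⟩ := ((h0.eventually (Ioi_mem_nhds hl)).and (eventually_gt_atTop 1)).exists
      exact ⟨y, h', h⟩
    have hy0 : (0:ℝ) < y := lt_trans one_pos hy1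
    have hDy := hmain y hy0
    have hev2 : ∀ᶠ lam : ℝ in atTop, M (-1) < lam * y :=
      (Tendsto.atTop_mul_const hy0 tendsto_id).eventually (eventually_gt_atTop (M (-1)))
    filter_upwards [hDy.eventually (Ioi_mem_nhds hyl), hψpos, hev2] with lam h1 hψ h2
    have hneg : Minv (lam * y) < 0 := (hM1 _ h2).1
    have h3 : (Minv (lam * y) - Minv lam) / ϕ lam⁻¹ ≤ (-Minv lam) / ϕ lam⁻¹ :=
      (div_le_div_iff_of_pos_right hψ).mpr (by linarith)
    exact lt_of_lt_of_le h1 h3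
  have hBup : ∀ u : ℝ, C < u → ∀ᶠ lam : ℝ in atTop, (-Minv lam) / ϕ lam⁻¹ < u := by
    intro u hu
    obtain ⟨N, hN⟩ : ∃ N : ℕ,
        C * (1 - ((2:ℝ)⁻¹)^N) + (4*(x₂-1)/c₀) * ((2:ℝ)⁻¹)^N < u := by
      have hp : Tendsto (fun N : ℕ => ((2:ℝ)⁻¹)^N) atTop (nhds 0) :=
        tendsto_pow_atTop_nhds_zero_of_lt_one (by norm_num) (by norm_num)
      have hr : Tendsto (fun N : ℕ => C * (1 - ((2:ℝ)⁻¹)^N) + (4*(x₂-1)/c₀) * ((2:ℝ)⁻¹)^N)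
          atTop (nhds (C * (1 - 0) + (4*(x₂-1)/c₀) * 0)) :=
        ((tendsto_const_nhds.sub hp).const_mul C).add (hp.const_mul _)
      rw [sub_zero, mul_one, mul_zero, add_zero] at hr
      exact (hr.eventually (Iio_mem_nhds hu)).exists
    have hxN0 : (0:ℝ) < x₂^N := pow_pos hx₂0 N
    have hval2 : x₂ ^ (-(α-1)) = 2⁻¹ := by rw [Real.rpow_neg hx₂0.le, hx2a]
    have hid1 : ((x₂^N : ℝ)) ^ (-(α-1)) = ((2:ℝ)⁻¹)^N := by
      rw [← Real.rpow_natCast x₂ N, ← Real.rpow_mul hx₂0.le, mul_comm,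
        Real.rpow_mul hx₂0.le, hval2, Real.rpow_natCast]
    have hid2 : (((x₂⁻¹)^N : ℝ)) ^ (α-1) = ((2:ℝ)⁻¹)^N := by
      rw [← Real.rpow_natCast x₂⁻¹ N, ← Real.rpow_mul (inv_nonneg.mpr hx₂0.le), mul_comm,
        Real.rpow_mul (inv_nonneg.mpr hx₂0.le), hvalinv, Real.rpow_natCast]
    have hG1 := hmain (x₂^N) hxN0
    rw [hid1] at hG1
    have hG2 := (hratio ((x₂⁻¹)^N) (pow_pos (inv_pos.mpr hx₂0) N)).const_mul (4*(x₂-1)/c₀)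
    rw [hid2] at hG2
    have hG := hG1.add hG2
    filter_upwards [hG.eventually (Iio_mem_nhds hN), hψpos, eventually_ge_atTop Λ,
      eventually_gt_atTop 0] with lam h1 hψ h2 h3
    have hμΛ : lam * x₂^N ≥ Λ :=
      le_trans h2 (le_mul_of_one_le_right h3.le (one_le_pow₀ hx₂1.le))
    have htail := hT' (lam * x₂^N) hμΛ
    have hμinv : (lam * x₂^N)⁻¹ = (x₂⁻¹)^N * lam⁻¹ := by
      rw [mul_inv, inv_pow, mul_comm]
    rw [hμinv] at htail
    have hsum : (-Minv lam) / ϕ lam⁻¹ ≤ (Minv (lam * x₂^N) - Minv lam) / ϕ lam⁻¹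
        + (4*(x₂-1)/c₀) * (ϕ ((x₂⁻¹)^N * lam⁻¹) / ϕ lam⁻¹) := by
      have e : (-Minv lam) = (Minv (lam * x₂^N) - Minv lam) + (-Minv (lam * x₂^N)) := by ring
      rw [e, add_div]
      refine (add_le_add_iff_left _).mpr ?_
      rw [← mul_div_assoc]
      exact (div_le_div_iff_of_pos_right hψ).mpr htail
    exact lt_of_le_of_lt hsum h1
  have hB : Tendsto (fun lam : ℝ => (-Minv lam) / ϕ lam⁻¹) atTop (nhds C) :=
    tendsto_order.2 ⟨hBlow, hBup⟩
  -- Step C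
  have hMneg : ∀ᶠ lam : ℝ in atTop, -Minv lam ∈ Set.Ioc 0 (ϕ δ) := by
    have hn : Tendsto (fun lam : ℝ => -Minv lam) atTop (nhds 0) := by
      have := (hMinv0.mono_right nhdsWithin_le_nhds).neg
      rwa [neg_zero] at this
    filter_upwards [hn.eventually (Iio_mem_nhds hϕδ), eventually_gt_atTop (M (-1))]
      with lam h1 h2
    exact ⟨by linarith [(hM1 lam h2).1], h1.le⟩
  have hC4 : ∀ c : ℝ, 0 < c → ∀ᶠ lam : ℝ in atTop, c * lam⁻¹ ∈ Set.Ioc 0 δ := by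
    intro c hc
    filter_upwards [eventually_ge_atTop (c * δ⁻¹), eventually_gt_atTop 0] with lam h1 h2
    refine ⟨mul_pos hc (inv_pos.mpr h2), ?_⟩
    rw [show c * lam⁻¹ = c / lam from (div_eq_mul_inv c lam).symm, div_le_iff₀ h2]
    have h3 : c * δ⁻¹ * δ ≤ lam * δ := mul_le_mul_of_nonneg_right h1 hδ.le
    rw [mul_assoc, inv_mul_cancel₀ (ne_of_gt hδ), mul_one] at h3
    linarith
  have hCexp : ∀ r : ℝ, 0 < r → (r ^ ((α-1)⁻¹)) ^ (α-1) = r := by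
    intro r hr
    rw [← Real.rpow_mul hr.le, inv_mul_cancel₀ ha1', Real.rpow_one]
  have hL₃pos : 0 < C ^ ((α-1)⁻¹) := Real.rpow_pos_of_pos hCpos _
  have hCup : ∀ u : ℝ, C ^ ((α-1)⁻¹) < u →
      ∀ᶠ lam : ℝ in atTop, lam * ϕinv (-Minv lam) < u := by
    intro u hu
    have hu0 : 0 < u := lt_trans hL₃pos hu
    have hCu : C < u ^ (α-1) := by
      have h := Real.rpow_lt_rpow (Real.rpow_nonneg hCpos.le _) hu ha1
      rwa [hCexp C hCpos] at h
    obtain ⟨ρ, hρ1, hρ2⟩ : ∃ ρ : ℝ, C < ρ ∧ ρ < u ^ (α-1) :=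
      ⟨(C + u ^ (α-1))/2, by linarith, by linarith⟩
    have hρ0 : 0 < ρ := lt_trans hCpos hρ1
    have hc : 0 < ρ ^ ((α-1)⁻¹) := Real.rpow_pos_of_pos hρ0 _
    have hcu : ρ ^ ((α-1)⁻¹) < u := by
      have h := Real.rpow_lt_rpow hρ0.le hρ2 (inv_pos.mpr ha1)
      rwa [← Real.rpow_mul hu0.le, mul_inv_cancel₀ ha1', Real.rpow_one] at h
    have hE2 := hratio (ρ ^ ((α-1)⁻¹)) hc
    rw [hCexp ρ hρ0] at hE2
    filter_upwards [hB.eventually (Iio_mem_nhds (show C < (C+ρ)/2 by linarith)),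
      hE2.eventually (Ioi_mem_nhds (show (C+ρ)/2 < ρ by linarith)),
      hψpos, hC4 _ hc, hMneg, eventually_gt_atTop 0] with lam hE1 hE2' hψ hcδ hs hl0
    have hlt1 : -Minv lam < (C+ρ)/2 * ϕ lam⁻¹ := (div_lt_iff₀ hψ).mp hE1
    have hlt2 : (C+ρ)/2 * ϕ lam⁻¹ < ϕ (ρ ^ ((α-1)⁻¹) * lam⁻¹) := (lt_div_iff₀ hψ).mp hE2'
    obtain ⟨hϕs, hsmem⟩ := hϕinv' _ hs
    have hlt3 : ϕinv (-Minv lam) < ρ ^ ((α-1)⁻¹) * lam⁻¹ := by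
      refine (hϕmono.lt_iff_lt hsmem hcδ).mp ?_
      rw [hϕs]; linarith
    calc lam * ϕinv (-Minv lam) < lam * (ρ ^ ((α-1)⁻¹) * lam⁻¹) :=
          (mul_lt_mul_iff_right₀ hl0).mpr hlt3
      _ = ρ ^ ((α-1)⁻¹) := by field_simp
      _ < u := hcu
  have hClow : ∀ l : ℝ, l < C ^ ((α-1)⁻¹) →
      ∀ᶠ lam : ℝ in atTop, l < lam * ϕinv (-Minv lam) := by
    intro l hl
    rcases le_or_gt l 0 with hl0 | hl0
    · filter_upwards [hMneg, eventually_gt_atTop 0] with lam hs hlam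
      obtain ⟨_, hsmem⟩ := hϕinv' _ hs
      exact lt_of_le_of_lt hl0 (mul_pos hlam hsmem.1)
    · have hCl : l ^ (α-1) < C := by
        have h := Real.rpow_lt_rpow hl0.le hl ha1
        rwa [hCexp C hCpos] at h
      obtain ⟨ρ, hρ1, hρ2⟩ : ∃ ρ : ℝ, l ^ (α-1) < ρ ∧ ρ < C :=
        ⟨(l ^ (α-1) + C)/2, by linarith, by linarith⟩
      have hρ0 : 0 < ρ := lt_trans (Real.rpow_pos_of_pos hl0 _) hρ1
      have hc : 0 < ρ ^ ((α-1)⁻¹) := Real.rpow_pos_of_pos hρ0 _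
      have hlc : l < ρ ^ ((α-1)⁻¹) := by
        have h := Real.rpow_lt_rpow (Real.rpow_nonneg hl0.le _) hρ1 (inv_pos.mpr ha1)
        rwa [← Real.rpow_mul hl0.le, mul_inv_cancel₀ ha1', Real.rpow_one] at h
      have hE2 := hratio (ρ ^ ((α-1)⁻¹)) hc
      rw [hCexp ρ hρ0] at hE2
      filter_upwards [hB.eventually (Ioi_mem_nhds (show (ρ+C)/2 < C by linarith)),
        hE2.eventually (Iio_mem_nhds (show ρ < (ρ+C)/2 by linarith)),
        hψpos, hC4 _ hc, hMneg, eventually_gt_atTop 0] with lam hE1 hE2' hψ hcδ hs hl0'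
      have hlt1 : (ρ+C)/2 * ϕ lam⁻¹ < -Minv lam := (lt_div_iff₀ hψ).mp hE1
      have hlt2 : ϕ (ρ ^ ((α-1)⁻¹) * lam⁻¹) < (ρ+C)/2 * ϕ lam⁻¹ := (div_lt_iff₀ hψ).mp hE2'
      obtain ⟨hϕs, hsmem⟩ := hϕinv' _ hs
      have hlt3 : ρ ^ ((α-1)⁻¹) * lam⁻¹ < ϕinv (-Minv lam) := by
        refine (hϕmono.lt_iff_lt hcδ hsmem).mp ?_
        rw [hϕs]; linarith
      have h5 : ρ ^ ((α-1)⁻¹) < lam * ϕinv (-Minv lam) := by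
        have h := (mul_lt_mul_iff_right₀ hl0').mpr hlt3
        rwa [show lam * (ρ ^ ((α-1)⁻¹) * lam⁻¹) = ρ ^ ((α-1)⁻¹) by field_simp] at h
      linarith
  have hC : Tendsto (fun lam : ℝ => lam * ϕinv (-Minv lam)) atTop (nhds (C ^ ((α-1)⁻¹))) :=
    tendsto_order.2 ⟨hClow, hCup⟩
  -- final value identity
  have hval : (α ^ α)⁻¹ * C * C ^ ((α-1)⁻¹) = β ^ β := by
    have hCb : C * C ^ ((α-1)⁻¹) = C ^ β := by
      nth_rewrite 1 [← Real.rpow_one C]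
      rw [← Real.rpow_add hCpos]
      congr 1
      rw [hβ]
      field_simp; ring
    have h2 : C ^ β = α ^ α * β ^ β := by
      rw [hβ, hCdef]
      rw [Real.mul_rpow (inv_nonneg.mpr ha1.le) (Real.rpow_nonneg ha0.le α)]
      rw [← Real.rpow_mul ha0.le]
      rw [Real.div_rpow ha0.le ha1.le]
      rw [Real.inv_rpow ha1.le]
      rw [show α * (α / (α-1)) = α + α/(α-1) by field_simp; ring]
      rw [Real.rpow_add ha0]
      field_simp
    rw [mul_assoc, hCb, h2, ← mul_assoc,
      inv_mul_cancel₀ (ne_of_gt (Real.rpow_pos_of_pos ha0 α)), one_mul]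
  have hβpow : 0 < β ^ β := Real.rpow_pos_of_pos hβpos β
  have hprod := (hA.mul hB).mul hC
  have hprod2 := hprod.div_const (β ^ β)
  rw [hval, div_self (ne_of_gt hβpow)] at hprod2
  have hcore : Tendsto (fun lam : ℝ => m (Minv lam) * ((-Minv lam) * ϕinv (-Minv lam)) / β ^ β)
      atTop (nhds 1) := by
    refine Tendsto.congr' ?_ hprod2
    filter_upwards [hψpos, eventually_gt_atTop 0] with lam hψ hl
    have h1 : ϕ lam⁻¹ ≠ 0 := ne_of_gt hψ
    have h2 : lam ≠ 0 := ne_of_gt hl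
    have h3 : β ^ β ≠ 0 := ne_of_gt hβpow
    generalize hg : ϕ lam⁻¹ = ψ at h1 ⊢
    field_simp
  have hfin := hcore.comp hMtop
  refine Tendsto.congr' ?_ hfin
  filter_upwards [self_mem_nhdsWithin] with x hx
  simp only [Function.comp_apply, hMinv x hx]
end

section
/- Let α > 1 and let ϕ be a continuous, strictly increasing function on (0,1] with ϕ(0+) = 0, regularly varying at 0 with exponent α−1, with inverse ϕ⁻¹. Let σ be a Borel measure on [0,∞) whose Laplace transform p(t) = ∫ e^{−tξ} dσ(ξ) is finite for every t > 0 and satisfies p(t) ~ (α^{2α}/Γ(1+α)) · t⁻¹ ϕ(1/t) as t → ∞. Let ψ be a positive function on (0,1] such that ψ(st) ≤ C t^k ψ(s) for all s, t ∈ (0,1], for some constants C > 0 and k > α−1, and assume ∫_0^1 p(t) ψ(t) dt < ∞. For ν ∈ (0, ϕ(1)] define p_ν(t) := ν⁻¹ ϕ⁻¹(ν)⁻¹ p( ϕ⁻¹(ν)⁻¹ t ). Then sup_{0<ν≤ν₀} ∫_0^1 p_ν(t) ψ(t) dt < ∞ for every ν₀ ∈ (0, ϕ(1)]. -/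
open MeasureTheory Filter
open scoped ENNReal

/-- The Laplace transform as a real number (when it is finite). -/
noncomputable def lapR (σ : Measure ℝ) (t : ℝ) : ℝ := (lap σ t).toReal

lemma lap_anti (σ : Measure ℝ) {u v : ℝ} (huv : u ≤ v) : lap σ v ≤ lap σ u := by
  refine lintegral_mono_ae ((ae_restrict_iff' measurableSet_Ici).2 (ae_of_all _ ?_))
  intro ξ hξ
  apply ENNReal.ofReal_le_ofReal
  apply Real.exp_le_exp.2
  have : (0:ℝ) ≤ ξ := hξ
  nlinarith

lemma sub_scale (F : ℝ → ℝ≥0∞) {a : ℝ} (ha : 0 < a) :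
    ∫⁻ t in Set.Ioc 0 a, F (a⁻¹ * t) = ENNReal.ofReal a * ∫⁻ u in Set.Ioc 0 1, F u := by
  have ha' : (a:ℝ)⁻¹ ≠ 0 := inv_ne_zero ha.ne'
  have hemb : MeasurableEmbedding (fun t : ℝ => a⁻¹ * t) := measurableEmbedding_mulLeft₀ ha'
  have hpre : (fun t : ℝ => a⁻¹ * t) ⁻¹' Set.Ioc 0 1 = Set.Ioc 0 a := by
    ext t
    simp only [Set.mem_preimage, Set.mem_Ioc]
    have key : a * (a⁻¹ * t) = t := by field_simp
    constructor
    · rintro ⟨h1, h2⟩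
      refine ⟨key ▸ mul_pos ha h1, ?_⟩
      have := mul_le_mul_of_nonneg_left h2 ha.le
      rwa [key, mul_one] at this
    · rintro ⟨h1, h2⟩
      refine ⟨mul_pos (inv_pos.2 ha) h1, ?_⟩
      have := mul_le_mul_of_nonneg_left h2 (inv_pos.2 ha).le
      rwa [inv_mul_cancel₀ ha.ne'] at this
  calc ∫⁻ t in Set.Ioc 0 a, F (a⁻¹ * t)
      = ∫⁻ x, F x ∂(Measure.map (fun t => a⁻¹ * t) (volume.restrict (Set.Ioc 0 a))) :=
        (hemb.lintegral_map F).symm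
    _ = ENNReal.ofReal a * ∫⁻ u in Set.Ioc 0 1, F u := by
        rw [← hpre, ← Measure.restrict_map hemb.measurable measurableSet_Ioc,
          Real.map_volume_mul_left ha', inv_inv, Measure.restrict_smul,
          lintegral_smul_measure, abs_of_pos ha, smul_eq_mul]

lemma dyadic_find {x s₀ : ℝ} (hx : 0 < x) (hxs : x ≤ s₀) :
    ∃ j : ℕ, s₀ * (1/2)^(j+1) < x ∧ x ≤ s₀ * (1/2)^j := by
  classical
  have hs₀ : 0 < s₀ := lt_of_lt_of_le hx hxs
  have hex : ∃ j : ℕ, s₀ * (1/2)^(j+1) < x := by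
    obtain ⟨n, hn⟩ := exists_pow_lt_of_lt_one (div_pos hx hs₀) (by norm_num : (1/2:ℝ) < 1)
    refine ⟨n, ?_⟩
    have h2 := (lt_div_iff₀ hs₀).1 hn
    calc s₀ * (1/2)^(n+1) ≤ s₀ * (1/2)^n := by
          apply mul_le_mul_of_nonneg_left _ hs₀.le
          exact pow_le_pow_of_le_one (by norm_num) (by norm_num) (by omega)
      _ < x := by linarith
  refine ⟨Nat.find hex, Nat.find_spec hex, ?_⟩
  rcases Nat.eq_zero_or_pos (Nat.find hex) with h0 | hpos
  · rw [h0]; simpa using hxs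
  · have := Nat.find_min hex (Nat.sub_lt hpos one_pos)
    push_neg at this
    have h1 : Nat.find hex - 1 + 1 = Nat.find hex := Nat.succ_pred_eq_of_pos hpos
    rwa [h1] at this

lemma chain_bound (ϕ : ℝ → ℝ) {s₀ M : ℝ} (hM : 0 ≤ M)
    (hbase : ∀ s : ℝ, 0 < s → s ≤ s₀ → ϕ (2*s) ≤ M * ϕ s) :
    ∀ j : ℕ, ∀ a : ℝ, 0 < a → a * 2^j ≤ s₀ → ϕ (a * 2^(j+1)) ≤ M^(j+1) * ϕ a := by
  intro j
  induction j with
  | zero => intro a ha h; simpa [mul_comm] using hbase a ha (by simpa using h)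
  | succ j ih =>
      intro a ha h
      have h' : a * 2^j ≤ s₀ := by
        refine le_trans ?_ h
        have h2j : (0:ℝ) < 2^j := by positivity
        have : a * 2^(j+1) = (a * 2^j) * 2 := by ring
        nlinarith
      have h1 := ih a ha h'
      have h2 := hbase (a*2^(j+1)) (by positivity) h
      have key : a * 2^(j+1+1) = 2*(a*2^(j+1)) := by ring
      rw [key]
      calc ϕ (2*(a*2^(j+1))) ≤ M * ϕ (a*2^(j+1)) := h2
        _ ≤ M * (M^(j+1) * ϕ a) := mul_le_mul_of_nonneg_left h1 hM
        _ = M^(j+1+1) * ϕ a := by ring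

set_option maxHeartbeats 2000000 in
theorem stmt_19 (α : ℝ) (hα : 1 < α)
    (ϕ : ℝ → ℝ)
    (hϕpos : ∀ t ∈ Set.Ioc (0:ℝ) 1, 0 < ϕ t)
    (hϕmono : StrictMonoOn ϕ (Set.Ioc 0 1))
    (hϕcont : ContinuousOn ϕ (Set.Ioc 0 1))
    (hϕ0 : Tendsto ϕ (nhdsWithin 0 (Set.Ioi 0)) (nhds 0))
    -- regular variation at 0 with exponent α - 1
    (hRV : ∀ c : ℝ, 0 < c →
      Tendsto (fun t => ϕ (c * t) / ϕ t) (nhdsWithin 0 (Set.Ioi 0)) (nhds (c ^ (α - 1))))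
    (ϕinv : ℝ → ℝ)
    (hϕinv : ∀ t ∈ Set.Ioc (0:ℝ) 1, ϕinv (ϕ t) = t)
    (hϕinv' : ∀ s ∈ Set.Ioc (0:ℝ) (ϕ 1), ϕ (ϕinv s) = s ∧ ϕinv s ∈ Set.Ioc 0 1)
    (σ : Measure ℝ) (hσ0 : σ (Set.Iio 0) = 0)  -- a measure on [0,∞)
    (hfin : ∀ t : ℝ, 0 < t → lap σ t < ⊤)
    -- p(t) ~ (α^{2α}/Γ(1+α)) t⁻¹ ϕ(1/t) as t → ∞
    (hp : Tendsto
      (fun t : ℝ => lapR σ t / ((α ^ (2 * α) / Real.Gamma (1 + α)) * (t⁻¹ * ϕ t⁻¹)))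
      atTop (nhds 1))
    (ψ : ℝ → ℝ) (hψmeas : Measurable ψ)
    (hψpos : ∀ t ∈ Set.Ioc (0:ℝ) 1, 0 < ψ t)
    (C k : ℝ) (hC : 0 < C) (hk : α - 1 < k)
    (hψbound : ∀ s ∈ Set.Ioc (0:ℝ) 1, ∀ t ∈ Set.Ioc (0:ℝ) 1, ψ (s * t) ≤ C * t ^ k * ψ s)
    (hψint : (∫⁻ t in Set.Ioc (0:ℝ) 1, ENNReal.ofReal (lapR σ t * ψ t)) < ⊤) :
    -- with p_ν(t) := ν⁻¹ ϕ⁻¹(ν)⁻¹ p(ϕ⁻¹(ν)⁻¹ t), the integrals ∫_0^1 p_ν ψ are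
    -- uniformly bounded over ν ∈ (0, ν₀]
    ∀ ν₀ ∈ Set.Ioc (0:ℝ) (ϕ 1),
      (⨆ ν ∈ Set.Ioc (0:ℝ) ν₀,
        ∫⁻ t in Set.Ioc (0:ℝ) 1,
          ENNReal.ofReal (ν⁻¹ * (ϕinv ν)⁻¹ * lapR σ ((ϕinv ν)⁻¹ * t) * ψ t)) < ⊤ := by
  intro ν₀ hν₀
  have hk0 : (0:ℝ) < k := lt_trans (by linarith) hk
  have hψ1 : (0:ℝ) < ψ 1 := hψpos 1 ⟨one_pos, le_refl 1⟩
  set c := α ^ (2 * α) / Real.Gamma (1 + α) with hcdef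
  have hc : 0 < c :=
    div_pos (Real.rpow_pos_of_pos (by linarith) _) (Real.Gamma_pos_of_pos (by linarith))
  -- the constant M for doubling
  have h2k : (0:ℝ) < 2 ^ k := Real.rpow_pos_of_pos two_pos k
  set M : ℝ := ((2:ℝ) ^ (α - 1) + 2 ^ k) / 2 with hMdef
  have h2α : (2:ℝ) ^ (α - 1) < 2 ^ k := Real.rpow_lt_rpow_left_iff one_lt_two |>.2 hk
  have hMgt : (2:ℝ) ^ (α - 1) < M := by rw [hMdef]; linarith
  have hMlt : M < 2 ^ k := by rw [hMdef]; linarith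
  have hMpos : 0 < M := lt_trans (Real.rpow_pos_of_pos two_pos _) hMgt
  clear hMdef
  clear_value M
  -- doubling scale s₀
  obtain ⟨s₀, hs₀pos, hs₀half, hs₀M⟩ :
      ∃ s₀ : ℝ, 0 < s₀ ∧ s₀ ≤ 1/2 ∧ ∀ s : ℝ, 0 < s → s ≤ s₀ → ϕ (2*s) ≤ M * ϕ s := by
    have hev := (hRV 2 two_pos).eventually_lt_const hMgt
    rw [eventually_nhdsWithin_iff, Metric.eventually_nhds_iff] at hev
    obtain ⟨ε, hε, hball⟩ := hev
    refine ⟨min (ε/2) (1/2), lt_min (by linarith) (by norm_num), min_le_right _ _, ?_⟩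
    intro s hs hsle
    have hs1 : s ≤ 1/2 := le_trans hsle (min_le_right _ _)
    have hsε : s < ε := by
      have := le_trans hsle (min_le_left _ _); linarith
    have hrat := hball (by rw [Real.dist_eq, sub_zero, abs_of_pos hs]; exact hsε) hs
    have hϕs : 0 < ϕ s := hϕpos s ⟨hs, by linarith⟩
    have : ϕ (2*s) = (ϕ (2*s) / ϕ s) * ϕ s := by field_simp
    rw [this]
    exact mul_le_mul_of_nonneg_right hrat.le hϕs.le
  have hϕs₀ : 0 < ϕ s₀ := hϕpos s₀ ⟨hs₀pos, by linarith⟩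
  -- the bound a^k ≤ B ϕ(a)
  set B : ℝ := max (s₀ ^ k * M / ϕ s₀) (ϕ s₀)⁻¹ with hBdef
  have hBpos : 0 < B := lt_of_lt_of_le (inv_pos.2 hϕs₀) (le_max_right _ _)
  have hB : ∀ a ∈ Set.Ioc (0:ℝ) 1, a ^ k ≤ B * ϕ a := by
    intro a ha
    obtain ⟨ha0, ha1⟩ := ha
    have hϕa : 0 < ϕ a := hϕpos a ⟨ha0, ha1⟩
    by_cases hcase : a ≤ s₀
    · obtain ⟨j, hj1, hj2⟩ := dyadic_find ha0 hcase
      have h2j : (0:ℝ) < 2 ^ j := by positivity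
      have hprod : ((1:ℝ)/2) ^ j * 2 ^ j = 1 := by
        rw [← mul_pow]; norm_num
      have haj : a * 2 ^ j ≤ s₀ := by nlinarith
      have hch := chain_bound ϕ hMpos.le hs₀M j a ha0 haj
      have hmid : s₀ < a * 2 ^ (j+1) := by
        have h2j1 : (0:ℝ) < 2 ^ (j+1) := by positivity
        have hprod1 : ((1:ℝ)/2) ^ (j+1) * 2 ^ (j+1) = 1 := by rw [← mul_pow]; norm_num
        nlinarith
      have hle1 : a * 2 ^ (j+1) ≤ 1 := by
        have : a * 2 ^ (j+1) = (a * 2^j) * 2 := by ring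
        rw [this]; linarith
      have hϕm : ϕ s₀ ≤ ϕ (a * 2 ^ (j+1)) :=
        hϕmono.monotoneOn ⟨hs₀pos, by linarith⟩ ⟨by positivity, hle1⟩ hmid.le
      have hMj : (0:ℝ) < M ^ (j+1) := by positivity
      have hϕlow : ϕ s₀ / M ^ (j+1) ≤ ϕ a := by
        rw [div_le_iff₀ hMj]
        calc ϕ s₀ ≤ ϕ (a * 2 ^ (j+1)) := hϕm
          _ ≤ M ^ (j+1) * ϕ a := hch
          _ = ϕ a * M ^ (j+1) := by ring
      -- a^k ≤ s₀^k * (1/M)^j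
      have hak : a ^ k ≤ s₀ ^ k * ((2:ℝ)^k)⁻¹ ^ j := by
        calc a ^ k ≤ (s₀ * (1/2)^j) ^ k :=
              Real.rpow_le_rpow ha0.le hj2 hk0.le
          _ = s₀ ^ k * (((1:ℝ)/2) ^ j) ^ (k:ℝ) := Real.mul_rpow hs₀pos.le (by positivity)
          _ = s₀ ^ k * ((2:ℝ)^k)⁻¹ ^ j := by
              rw [← Real.rpow_natCast (1/2 : ℝ) j, ← Real.rpow_mul (by norm_num),
                mul_comm (j:ℝ) k, Real.rpow_mul (by norm_num), Real.rpow_natCast]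
              congr 2
              rw [one_div, Real.inv_rpow (by norm_num)]
      have hinvle : ((2:ℝ)^k)⁻¹ ^ j ≤ M⁻¹ ^ j := by
        apply pow_le_pow_left₀ (by positivity)
        exact inv_anti₀ hMpos hMlt.le
      calc a ^ k ≤ s₀ ^ k * M⁻¹ ^ j := le_trans hak
            (mul_le_mul_of_nonneg_left hinvle (by positivity))
        _ = s₀ ^ k * M / M ^ (j+1) := by
            rw [inv_pow]
            field_simp
            ring
        _ ≤ (s₀ ^ k * M / ϕ s₀) * (ϕ s₀ / M ^ (j+1)) := by
            rw [div_mul_div_comm]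
            rw [mul_comm (s₀^k*M) (ϕ s₀), mul_div_mul_left]
            exact hϕs₀.ne'
        _ ≤ (s₀ ^ k * M / ϕ s₀) * ϕ a :=
            mul_le_mul_of_nonneg_left hϕlow (by positivity)
        _ ≤ B * ϕ a :=
            mul_le_mul_of_nonneg_right (le_max_left _ _) hϕa.le
    · push_neg at hcase
      have h1 : a ^ k ≤ 1 := Real.rpow_le_one ha0.le ha1 hk0.le
      have h2 : ϕ s₀ ≤ ϕ a := hϕmono.monotoneOn ⟨hs₀pos, by linarith⟩ ⟨ha0, ha1⟩ hcase.le
      calc a ^ k ≤ 1 := h1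
        _ ≤ (ϕ s₀)⁻¹ * ϕ a := by
            rw [← inv_mul_cancel₀ hϕs₀.ne']
            exact mul_le_mul_of_nonneg_left h2 (inv_pos.2 hϕs₀).le
        _ ≤ B * ϕ a := mul_le_mul_of_nonneg_right (le_max_right _ _) hϕa.le
  clear hBdef
  clear_value B
  -- asymptotic threshold T
  obtain ⟨T₀, hT₀⟩ := eventually_atTop.1 (hp.eventually_lt_const one_lt_two)
  set T : ℝ := max (max T₀ 1) (2 / s₀) with hTdef
  have hT1 : (1:ℝ) ≤ T := le_trans (le_max_right T₀ 1) (le_max_left _ _)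
  have hTpos : (0:ℝ) < T := lt_of_lt_of_le one_pos hT1
  have hTs₀ : 2 / s₀ ≤ T := le_max_right _ _
  have hlap : ∀ u : ℝ, T ≤ u → lapR σ u ≤ 2 * (c * (u⁻¹ * ϕ u⁻¹)) := by
    intro u hu
    have hu1 : (1:ℝ) ≤ u := le_trans hT1 hu
    have hu0 : (0:ℝ) < u := by linarith
    have hui : u⁻¹ ∈ Set.Ioc (0:ℝ) 1 := by
      refine ⟨inv_pos.2 hu0, ?_⟩
      have h := mul_inv_cancel₀ hu0.ne'
      nlinarith [inv_pos.2 hu0]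
    have hden : 0 < c * (u⁻¹ * ϕ u⁻¹) :=
      mul_pos hc (mul_pos (inv_pos.2 hu0) (hϕpos _ hui))
    have hr := hT₀ u (le_trans (le_trans (le_max_left T₀ 1) (le_max_left _ _)) hu)
    exact le_of_lt ((div_lt_iff₀ hden).1 hr)
  clear hTdef hT₀
  clear_value T
  clear hcdef
  clear_value c
    -- constants
  set I : ℝ≥0∞ := ∫⁻ t in Set.Ioc (0:ℝ) 1, ENNReal.ofReal (lapR σ t * ψ t) with hIdef
  have hp1 : (0:ℝ) ≤ lapR σ 1 := ENNReal.toReal_nonneg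
  set r : ℝ≥0∞ := ENNReal.ofReal (M / 2 ^ k) with hrdef
  have hr1 : r < 1 := by
    rw [hrdef]
    exact ENNReal.ofReal_lt_one.2 ((div_lt_one h2k).2 hMlt)
  set K₁ : ℝ≥0∞ := ENNReal.ofReal (C * B) * I with hK₁def
  set K₂ : ℝ≥0∞ :=
    ENNReal.ofReal (C * lapR σ 1 * ψ 1 * T ^ k * T * B) with hK₂def
  set K₃ : ℝ≥0∞ := ENNReal.ofReal (2*c*C*ψ 1*M) * (1 - r)⁻¹ with hK₃def
  have hKtot : K₁ + (K₂ + K₃) < ⊤ := by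
    have h1 : K₁ < ⊤ := ENNReal.mul_lt_top ENNReal.ofReal_lt_top hψint
    have h2 : K₂ < ⊤ := ENNReal.ofReal_lt_top
    have h3 : K₃ < ⊤ := by
      apply ENNReal.mul_lt_top ENNReal.ofReal_lt_top
      rw [ENNReal.inv_lt_top]
      exact tsub_pos_of_lt hr1
    exact ENNReal.add_lt_top.2 ⟨h1, ENNReal.add_lt_top.2 ⟨h2, h3⟩⟩
  refine lt_of_le_of_lt (iSup₂_le ?_) hKtot
  intro ν hν
  have hν0 : 0 < ν := hν.1
  obtain ⟨hϕa, ha⟩ := hϕinv' ν ⟨hν.1, hν.2.trans hν₀.2⟩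
  set a : ℝ := ϕinv ν with hadef
  obtain ⟨ha0, ha1⟩ := ha
  have haT : 0 < a * T := mul_pos ha0 hTpos
  set f : ℝ → ℝ≥0∞ :=
    fun t => ENNReal.ofReal (ν⁻¹ * a⁻¹ * lapR σ (a⁻¹ * t) * ψ t) with hfdef
  -- split the domain
  have hsplit : (∫⁻ t in Set.Ioc (0:ℝ) 1, f t) ≤
      (∫⁻ t in Set.Ioc 0 a, f t) +
        ((∫⁻ t in Set.Ioc a (min (a*T) 1), f t) + (∫⁻ t in Set.Ioc (a*T) 1, f t)) := by
    have hsub : Set.Ioc (0:ℝ) 1 ⊆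
        Set.Ioc 0 a ∪ (Set.Ioc a (min (a*T) 1) ∪ Set.Ioc (a*T) 1) := by
      intro t ht
      obtain ⟨ht0, ht1⟩ := ht
      by_cases h1 : t ≤ a
      · exact Or.inl ⟨ht0, h1⟩
      · push_neg at h1
        by_cases h2 : t ≤ a*T
        · exact Or.inr (Or.inl ⟨h1, le_min h2 ht1⟩)
        · push_neg at h2
          exact Or.inr (Or.inr ⟨h2, ht1⟩)
    refine le_trans (lintegral_mono_set hsub) ?_
    refine le_trans (lintegral_union_le _ _ _) ?_
    exact add_le_add le_rfl (lintegral_union_le _ _ _)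
  -- Region A
  have boundA : (∫⁻ t in Set.Ioc (0:ℝ) a, f t) ≤ K₁ := by
    have hstep : ∀ t ∈ Set.Ioc (0:ℝ) a, f t ≤
        ENNReal.ofReal (ν⁻¹ * a⁻¹ * (C * a ^ k)) *
          ENNReal.ofReal (lapR σ (a⁻¹ * t) * ψ (a⁻¹ * t)) := by
      intro t ht
      rw [hfdef, ← ENNReal.ofReal_mul (by positivity)]
      apply ENNReal.ofReal_le_ofReal
      have hs : a⁻¹ * t ∈ Set.Ioc (0:ℝ) 1 := by
        refine ⟨mul_pos (inv_pos.2 ha0) ht.1, ?_⟩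
        have h := mul_le_mul_of_nonneg_left ht.2 (inv_pos.2 ha0).le
        rwa [inv_mul_cancel₀ ha0.ne'] at h
      have hψb := hψbound (a⁻¹*t) hs a ⟨ha0, ha1⟩
      have hts : a⁻¹ * t * a = t := by field_simp
      rw [hts] at hψb
      have hlnn : (0:ℝ) ≤ lapR σ (a⁻¹*t) := ENNReal.toReal_nonneg
      have key : ν⁻¹ * a⁻¹ * lapR σ (a⁻¹ * t) * ψ t ≤
          ν⁻¹ * a⁻¹ * lapR σ (a⁻¹ * t) * (C * a ^ k * ψ (a⁻¹*t)) := by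
        apply mul_le_mul_of_nonneg_left hψb
        have : (0:ℝ) ≤ ν⁻¹ * a⁻¹ := by positivity
        positivity
      calc ν⁻¹ * a⁻¹ * lapR σ (a⁻¹ * t) * ψ t
          ≤ ν⁻¹ * a⁻¹ * lapR σ (a⁻¹ * t) * (C * a ^ k * ψ (a⁻¹*t)) := key
        _ = ν⁻¹ * a⁻¹ * (C * a ^ k) * (lapR σ (a⁻¹ * t) * ψ (a⁻¹*t)) := by ring
    calc (∫⁻ t in Set.Ioc (0:ℝ) a, f t)
        ≤ ∫⁻ t in Set.Ioc (0:ℝ) a,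
            ENNReal.ofReal (ν⁻¹ * a⁻¹ * (C * a ^ k)) *
              (fun u => ENNReal.ofReal (lapR σ u * ψ u)) (a⁻¹ * t) :=
          lintegral_mono_ae ((ae_restrict_iff' measurableSet_Ioc).2 (ae_of_all _ hstep))
      _ = ENNReal.ofReal (ν⁻¹ * a⁻¹ * (C * a ^ k)) *
            ∫⁻ t in Set.Ioc (0:ℝ) a, (fun u => ENNReal.ofReal (lapR σ u * ψ u)) (a⁻¹ * t) :=
          lintegral_const_mul' _ _ ENNReal.ofReal_ne_top
      _ = ENNReal.ofReal (ν⁻¹ * a⁻¹ * (C * a ^ k)) * (ENNReal.ofReal a * I) := by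
          congr 1
          exact sub_scale (fun u => ENNReal.ofReal (lapR σ u * ψ u)) ha0
      _ ≤ K₁ := by
          rw [hK₁def, ← mul_assoc, ← ENNReal.ofReal_mul (by positivity)]
          apply mul_le_mul_left
          apply ENNReal.ofReal_le_ofReal
          have hak : a ^ k ≤ B * ν := by
            have := hB a ⟨ha0, ha1⟩
            rwa [hϕa] at this
          have heq : ν⁻¹ * a⁻¹ * (C * a ^ k) * a = C * a ^ k * ν⁻¹ := by
            field_simp
          rw [heq]
          calc C * a ^ k * ν⁻¹ ≤ C * (B * ν) * ν⁻¹ :=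
                mul_le_mul_of_nonneg_right
                  (mul_le_mul_of_nonneg_left hak hC.le) (inv_pos.2 hν0).le
            _ = C * B := by
                field_simp
    -- Region B
  have boundB : (∫⁻ t in Set.Ioc a (min (a*T) 1), f t) ≤ K₂ := by
    have hpt : ∀ t ∈ Set.Ioc a (min (a*T) 1), f t ≤
        ENNReal.ofReal (ν⁻¹ * a⁻¹ * lapR σ 1 * (C * (a*T) ^ k * ψ 1)) := by
      intro t ht
      obtain ⟨hta, htm⟩ := ht
      have ht0 : 0 < t := lt_trans ha0 hta
      have ht1 : t ≤ 1 := le_trans htm (min_le_right _ _)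
      have htaT : t ≤ a*T := le_trans htm (min_le_left _ _)
      rw [hfdef]
      apply ENNReal.ofReal_le_ofReal
      have h1u : (1:ℝ) ≤ a⁻¹ * t := by
        have h := mul_le_mul_of_nonneg_left hta.le (inv_pos.2 ha0).le
        rwa [inv_mul_cancel₀ ha0.ne'] at h
      have hlap1 : lapR σ (a⁻¹*t) ≤ lapR σ 1 :=
        ENNReal.toReal_mono (hfin 1 one_pos).ne (lap_anti σ h1u)
      have hψt : ψ t ≤ C * t ^ k * ψ 1 := by
        have h := hψbound 1 ⟨one_pos, le_refl 1⟩ t ⟨ht0, ht1⟩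
        rwa [one_mul] at h
      have htk : t ^ k ≤ (a*T) ^ k := Real.rpow_le_rpow ht0.le htaT hk0.le
      have hψt' : ψ t ≤ C * (a*T) ^ k * ψ 1 := by
        refine le_trans hψt ?_
        have := mul_le_mul_of_nonneg_left htk (mul_nonneg hC.le hψ1.le)
        linarith
      have hlnn : (0:ℝ) ≤ lapR σ (a⁻¹*t) := ENNReal.toReal_nonneg
      have hψnn : (0:ℝ) ≤ ψ t := (hψpos t ⟨ht0, ht1⟩).le
      have hmain : lapR σ (a⁻¹*t) * ψ t ≤ lapR σ 1 * (C * (a*T) ^ k * ψ 1) :=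
        mul_le_mul hlap1 hψt' hψnn hp1
      calc ν⁻¹ * a⁻¹ * lapR σ (a⁻¹ * t) * ψ t
          = ν⁻¹ * a⁻¹ * (lapR σ (a⁻¹ * t) * ψ t) := by ring
        _ ≤ ν⁻¹ * a⁻¹ * (lapR σ 1 * (C * (a*T) ^ k * ψ 1)) :=
            mul_le_mul_of_nonneg_left hmain (by positivity)
        _ = ν⁻¹ * a⁻¹ * lapR σ 1 * (C * (a*T) ^ k * ψ 1) := by ring
    calc (∫⁻ t in Set.Ioc a (min (a*T) 1), f t)
        ≤ ∫⁻ _ in Set.Ioc a (min (a*T) 1),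
            ENNReal.ofReal (ν⁻¹ * a⁻¹ * lapR σ 1 * (C * (a*T) ^ k * ψ 1)) :=
          lintegral_mono_ae ((ae_restrict_iff' measurableSet_Ioc).2 (ae_of_all _ hpt))
      _ = ENNReal.ofReal (ν⁻¹ * a⁻¹ * lapR σ 1 * (C * (a*T) ^ k * ψ 1)) *
            volume (Set.Ioc a (min (a*T) 1)) := setLIntegral_const _ _
      _ ≤ ENNReal.ofReal (ν⁻¹ * a⁻¹ * lapR σ 1 * (C * (a*T) ^ k * ψ 1)) *
            ENNReal.ofReal (a*T) := by
          apply mul_le_mul_right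
          rw [Real.volume_Ioc]
          apply ENNReal.ofReal_le_ofReal
          have := min_le_left (a*T) 1
          linarith
      _ ≤ K₂ := by
          rw [hK₂def, ← ENNReal.ofReal_mul ?hnn]
          case hnn =>
            have : (0:ℝ) ≤ lapR σ 1 := hp1
            positivity
          apply ENNReal.ofReal_le_ofReal
          have hmul : (a*T) ^ k = a ^ k * T ^ k := Real.mul_rpow ha0.le hTpos.le
          have hak : a ^ k ≤ B * ν := by
            have := hB a ⟨ha0, ha1⟩
            rwa [hϕa] at this
          have heq : ν⁻¹ * a⁻¹ * lapR σ 1 * (C * (a*T) ^ k * ψ 1) * (a*T)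
              = (C * lapR σ 1 * ψ 1 * T ^ k * T) * (a ^ k * ν⁻¹) := by
            rw [hmul]
            field_simp
          rw [heq]
          have hfac : (0:ℝ) ≤ C * lapR σ 1 * ψ 1 * T ^ k * T := by
            have : (0:ℝ) ≤ lapR σ 1 := hp1
            positivity
          have e2 : a ^ k * ν⁻¹ ≤ B := by
            calc a ^ k * ν⁻¹ ≤ (B * ν) * ν⁻¹ :=
                  mul_le_mul_of_nonneg_right hak (inv_pos.2 hν0).le
              _ = B := by field_simp
          calc (C * lapR σ 1 * ψ 1 * T ^ k * T) * (a ^ k * ν⁻¹)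
              ≤ (C * lapR σ 1 * ψ 1 * T ^ k * T) * B :=
                mul_le_mul_of_nonneg_left e2 hfac
            _ = C * lapR σ 1 * ψ 1 * T ^ k * T * B := by ring
    -- Region C
  have boundC : (∫⁻ t in Set.Ioc (a*T) 1, f t) ≤ K₃ := by
    set D : ℕ → Set ℝ := fun j => Set.Ioc (a*T) 1 ∩ Set.Ioc ((1/2:ℝ)^(j+1)) ((1/2)^j)
      with hDdef
    have hDmeas : ∀ j, MeasurableSet (D j) := fun j =>
      measurableSet_Ioc.inter measurableSet_Ioc
    have hcover : Set.Ioc (a*T) 1 ⊆ ⋃ j : ℕ, D j := by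
      intro t ht
      have ht0 : 0 < t := lt_trans haT ht.1
      obtain ⟨j, hj1, hj2⟩ := dyadic_find ht0 ht.2
      rw [one_mul] at hj1 hj2
      exact Set.mem_iUnion.2 ⟨j, ht, hj1, hj2⟩
    have hterm : ∀ j : ℕ, (∫⁻ t in D j, f t) ≤
        ENNReal.ofReal (2*c*C*ψ 1*M) * r ^ j := by
      intro j
      by_cases hne : (D j).Nonempty
      · obtain ⟨t₀, ht₀⟩ := hne
        set H : ℝ := (1/2:ℝ)^j with hHdef
        have hH0 : 0 < H := by positivity
        have h2j : (0:ℝ) < 2^j := by positivity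
        have hprod : H * 2^j = 1 := by rw [hHdef, ← mul_pow]; norm_num
        have hpow : (2:ℝ)^(j+1) = 2^j * 2 := pow_succ 2 j
        have hHinv : H⁻¹ = 2^j := by rw [hHdef, one_div, inv_pow, inv_inv]
        have haTH : a*T < H := lt_of_lt_of_le ht₀.1.1 ht₀.2.2
        have hf1 : a * T * 2^j < 1 := by
          nlinarith [mul_pos (sub_pos.2 haTH) h2j]
        have hf2 : 2 ≤ T * s₀ := by
          rw [div_le_iff₀ hs₀pos] at hTs₀; linarith
        have hs₀j : a * 2^(j+1) ≤ s₀ := by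
          nlinarith [mul_pos hs₀pos (sub_pos.2 hf1),
            mul_nonneg (sub_nonneg.2 hf2) (mul_pos ha0 h2j).le]
        have hs₀j' : a * 2^j ≤ s₀ := by
          nlinarith [mul_pos ha0 h2j, hs₀pos]
        have hch := chain_bound ϕ hMpos.le hs₀M j a ha0 hs₀j'
        have hpt : ∀ t ∈ D j, f t ≤
            ENNReal.ofReal (ν⁻¹ * (2*c*C*ψ 1) * (2 * H ^ k * H⁻¹) * (M^(j+1) * ν)) := by
          intro t ht
          obtain ⟨⟨htaT, ht1⟩, htl, htu⟩ := ht
          have ht0 : 0 < t := lt_trans haT htaT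
          have hTu : T ≤ a⁻¹ * t := by
            have h := mul_le_mul_of_nonneg_left htaT.le (inv_pos.2 ha0).le
            rwa [← mul_assoc, inv_mul_cancel₀ ha0.ne', one_mul] at h
          have hlapt := hlap (a⁻¹*t) hTu
          have hinv_eq : (a⁻¹*t)⁻¹ = a * t⁻¹ := by rw [mul_inv, inv_inv]
          rw [hinv_eq] at hlapt
          have hat0 : 0 < a * t⁻¹ := mul_pos ha0 (inv_pos.2 ht0)
          have hat1 : a * t⁻¹ ≤ 1 := by
            rw [← div_eq_mul_inv, div_le_one ht0]
            nlinarith [hT1, ha0]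
          have htinv : t⁻¹ ≤ 2 * H⁻¹ := by
            have hl' : H/2 < t := by
              have he : (1/2:ℝ)^(j+1) = H/2 := by rw [hHdef, pow_succ]; ring
              linarith [he ▸ htl]
            have h3 : t⁻¹ ≤ (H/2)⁻¹ := inv_anti₀ (div_pos hH0 two_pos) hl'.le
            rwa [inv_div, div_eq_mul_inv] at h3
          have hj21 : a * t⁻¹ ≤ a * 2^(j+1) := by
            apply mul_le_mul_of_nonneg_left _ ha0.le
            rw [hpow]
            calc t⁻¹ ≤ 2 * H⁻¹ := htinv
              _ = 2^j * 2 := by rw [hHinv]; ring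
          have hϕm : ϕ (a * t⁻¹) ≤ ϕ (a * 2^(j+1)) :=
            hϕmono.monotoneOn ⟨hat0, hat1⟩
              ⟨by positivity, by linarith [hs₀half]⟩ hj21
          have hϕub : ϕ (a*t⁻¹) ≤ M^(j+1) * ν := by
            rw [← hϕa]
            exact le_trans hϕm hch
          have hϕnn : (0:ℝ) ≤ ϕ (a*t⁻¹) := (hϕpos _ ⟨hat0, hat1⟩).le
          have hψt : ψ t ≤ C * t ^ k * ψ 1 := by
            have h := hψbound 1 ⟨one_pos, le_refl 1⟩ t ⟨ht0, ht1⟩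
            rwa [one_mul] at h
          have hψt' : ψ t ≤ C * H ^ k * ψ 1 := by
            refine le_trans hψt ?_
            have htk : t ^ k ≤ H ^ k := Real.rpow_le_rpow ht0.le htu hk0.le
            have := mul_le_mul_of_nonneg_left htk (mul_nonneg hC.le hψ1.le)
            linarith
          have hψnn : (0:ℝ) ≤ ψ t := (hψpos t ⟨ht0, ht1⟩).le
          have hLnn : (0:ℝ) ≤ 2*(c*((a*t⁻¹) * ϕ (a*t⁻¹))) := by positivity
          rw [hfdef]
          apply ENNReal.ofReal_le_ofReal
          have e1 : ν⁻¹ * a⁻¹ * lapR σ (a⁻¹*t) * ψ t ≤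
              ν⁻¹ * a⁻¹ * (2*(c*((a*t⁻¹) * ϕ (a*t⁻¹)))) * (C * H ^ k * ψ 1) := by
            have hmm := mul_le_mul hlapt hψt' hψnn hLnn
            calc ν⁻¹ * a⁻¹ * lapR σ (a⁻¹*t) * ψ t
                = ν⁻¹ * a⁻¹ * (lapR σ (a⁻¹*t) * ψ t) := by ring
              _ ≤ ν⁻¹ * a⁻¹ * ((2*(c*((a*t⁻¹) * ϕ (a*t⁻¹)))) * (C * H ^ k * ψ 1)) :=
                  mul_le_mul_of_nonneg_left hmm (by positivity)
              _ = ν⁻¹ * a⁻¹ * (2*(c*((a*t⁻¹) * ϕ (a*t⁻¹)))) * (C * H ^ k * ψ 1) := by ring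
          have e2 : ν⁻¹ * a⁻¹ * (2*(c*((a*t⁻¹) * ϕ (a*t⁻¹)))) * (C * H ^ k * ψ 1)
              = (ν⁻¹ * (2*c*C*ψ 1) * H ^ k) * (t⁻¹ * ϕ (a*t⁻¹)) := by
            field_simp
          have e3 : t⁻¹ * ϕ (a*t⁻¹) ≤ (2*H⁻¹) * (M^(j+1) * ν) :=
            mul_le_mul htinv hϕub hϕnn (by positivity)
          calc ν⁻¹ * a⁻¹ * lapR σ (a⁻¹*t) * ψ t
              ≤ (ν⁻¹ * (2*c*C*ψ 1) * H ^ k) * (t⁻¹ * ϕ (a*t⁻¹)) := by rw [← e2]; exact e1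
            _ ≤ (ν⁻¹ * (2*c*C*ψ 1) * H ^ k) * ((2*H⁻¹) * (M^(j+1) * ν)) :=
                mul_le_mul_of_nonneg_left e3 (by positivity)
            _ = ν⁻¹ * (2*c*C*ψ 1) * (2 * H ^ k * H⁻¹) * (M^(j+1) * ν) := by ring
        have hHk : H ^ k = ((2:ℝ)^k)⁻¹ ^ j := by
          rw [hHdef, ← Real.rpow_natCast (1/2:ℝ) j, ← Real.rpow_mul (by norm_num),
            mul_comm (j:ℝ) k, Real.rpow_mul (by norm_num), Real.rpow_natCast]
          congr 1
          rw [one_div, Real.inv_rpow (by norm_num)]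
        have hMj : (M/2^k)^j = ((2:ℝ)^k)⁻¹ ^ j * M^j := by
          rw [← mul_pow]
          congr 1
          rw [div_eq_inv_mul]
        calc (∫⁻ t in D j, f t)
            ≤ ∫⁻ _ in D j,
                ENNReal.ofReal (ν⁻¹ * (2*c*C*ψ 1) * (2 * H ^ k * H⁻¹) * (M^(j+1) * ν)) :=
              lintegral_mono_ae ((ae_restrict_iff' (hDmeas j)).2 (ae_of_all _ hpt))
          _ = ENNReal.ofReal (ν⁻¹ * (2*c*C*ψ 1) * (2 * H ^ k * H⁻¹) * (M^(j+1) * ν)) *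
                volume (D j) := setLIntegral_const _ _
          _ ≤ ENNReal.ofReal (ν⁻¹ * (2*c*C*ψ 1) * (2 * H ^ k * H⁻¹) * (M^(j+1) * ν)) *
                ENNReal.ofReal (H/2) := by
              apply mul_le_mul_right
              calc volume (D j) ≤ volume (Set.Ioc ((1/2:ℝ)^(j+1)) ((1/2)^j)) :=
                    measure_mono Set.inter_subset_right
                _ = ENNReal.ofReal ((1/2:ℝ)^j - (1/2)^(j+1)) := Real.volume_Ioc
                _ ≤ ENNReal.ofReal (H/2) := by
                    apply ENNReal.ofReal_le_ofReal
                    have he2 : (1/2:ℝ)^(j+1) = H/2 := by rw [hHdef, pow_succ]; ring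
                    rw [he2, hHdef]
                    linarith
          _ = ENNReal.ofReal ((2*c*C*ψ 1*M) * (M/2^k)^j) := by
              rw [← ENNReal.ofReal_mul (by positivity)]
              congr 1
              rw [hHk, hMj]
              field_simp
              ring
          _ = ENNReal.ofReal (2*c*C*ψ 1*M) * r ^ j := by
              rw [ENNReal.ofReal_mul (by positivity), hrdef,
                ENNReal.ofReal_pow (div_nonneg hMpos.le h2k.le)]
      · rw [Set.not_nonempty_iff_eq_empty.1 hne, Measure.restrict_empty,
          lintegral_zero_measure]
        exact zero_le
    calc (∫⁻ t in Set.Ioc (a*T) 1, f t)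
        ≤ ∫⁻ t in ⋃ j : ℕ, D j, f t := lintegral_mono_set hcover
      _ ≤ ∑' j : ℕ, ∫⁻ t in D j, f t := lintegral_iUnion_le _ _
      _ ≤ ∑' j : ℕ, ENNReal.ofReal (2*c*C*ψ 1*M) * r ^ j := ENNReal.tsum_le_tsum hterm
      _ = ENNReal.ofReal (2*c*C*ψ 1*M) * ∑' j : ℕ, r ^ j := ENNReal.tsum_mul_left
      _ = K₃ := by rw [ENNReal.tsum_geometric, hK₃def]
  exact le_trans hsplit (add_le_add boundA (add_le_add boundB boundC))
end
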